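/- arXiv:1612.03588 — 10 statements merged into one kernel-verified Lean document; each statement's English description precedes it below -/
import Mathlib

section
/- Let f be a defective probability generating function with smallest fixed point q in [0,1] and gamma = f'(q) > 0. Define h(s) = (f(s) - q)/((s - q) * gamma) for s in [0,1] with s != q, extended by h(q) = 1. Then: (i) for every s in [0,1] the infinite product H(s) = prod_{j=0}^infty h(f(j,s)) converges (where f(j,·) denotes the j-th iterate of f); (ii) H(q) = 1 and H(1) < infinity; (iii) H is representable on [0,1] as a power series with nonnegative coefficients; and (iv) for every s in [0,1], (f(t,s) - q)/gamma^t converges to (s - q) * H(s) as t tends to infinity. -/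
/-!
Write `f x - q = γ h(x) (x - q)`, where `γ h(x) = ∑ₖ pₖ ∑_{i<k} x^i q^(k-1-i)` is the divided
difference of `f` at `q` (and equals `f'(q) = γ` at `x = q`); iterating gives
`f_t(s) - q = (s - q) γ^t ∏_{j<t} h(f_j(s))`, so (iv) follows from (i).
As a power series with nonnegative coefficients, `h` is monotone and convex on `[0, 1]` with
`h(q) = 1`. Hence for `s ≤ q` the partial products decrease, and for `s ≥ q` they increase and
stay bounded, because `h(x) - 1 = O(x - q)` while `f_j(s) - q ≤ c^j (s - q)` with
`c = (f(1) - q)/(1 - q) < 1`.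
Each partial product is a composition of nonnegative power series (computed in `[0, ∞]`, where all
rearrangements are free), and its coefficients are bounded by its value at `1`. A subsequence of the
coefficient sequences converges by compactness of `[0, ∞]^ℕ`; the limit coefficients represent `H`
below `1` by dominated convergence, and at `1` by Abel's theorem.
-/

open Filter Finset ENNReal PowerSeries Topology

noncomputable section

theorem ENNReal.tsum_mul_tsum_eq_tsum_sum_antidiagonal (f g : ℕ → ℝ≥0∞) :
    (∑' n, f n) * ∑' n, g n = ∑' n, ∑ kl ∈ antidiagonal n, f kl.1 * g kl.2 := by
  simp_rw [← ENNReal.tsum_mul_right, ← ENNReal.tsum_mul_left]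
  rw [← ENNReal.tsum_prod (f := fun i j => f i * g j),
    ← HasAntidiagonal.sigmaAntidiagonalEquivProd.tsum_eq, ENNReal.tsum_sigma']
  refine tsum_congr fun n => ?_
  rw [← Finset.tsum_subtype]
  rfl

namespace PowerSeries

/-- Every power series with coefficients in `[0, ∞]` converges at every point of `[0, ∞]`. -/
def evalENNReal (φ : PowerSeries ℝ≥0∞) (x : ℝ≥0∞) : ℝ≥0∞ :=
  ∑' n, coeff n φ * x ^ n

@[simp]
theorem evalENNReal_one (x : ℝ≥0∞) : evalENNReal 1 x = 1 := by
  rw [evalENNReal, tsum_eq_single 0 fun n hn => by simp [coeff_one, hn]]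
  simp

@[simp]
theorem evalENNReal_X (x : ℝ≥0∞) : evalENNReal X x = x := by
  rw [evalENNReal, tsum_eq_single 1 fun n hn => by simp [coeff_X, hn]]
  simp

theorem evalENNReal_mul (φ ψ : PowerSeries ℝ≥0∞) (x : ℝ≥0∞) :
    evalENNReal (φ * ψ) x = evalENNReal φ x * evalENNReal ψ x := by
  rw [evalENNReal, evalENNReal, evalENNReal, ENNReal.tsum_mul_tsum_eq_tsum_sum_antidiagonal]
  refine tsum_congr fun n => ?_
  rw [coeff_mul, Finset.sum_mul]
  refine Finset.sum_congr rfl fun ij hij => ?_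
  rw [← mem_antidiagonal.mp hij, pow_add]
  ring

theorem evalENNReal_pow (φ : PowerSeries ℝ≥0∞) (x : ℝ≥0∞) (i : ℕ) :
    evalENNReal (φ ^ i) x = evalENNReal φ x ^ i := by
  induction i with
  | zero => simp
  | succ i ih => rw [pow_succ, evalENNReal_mul, ih, pow_succ]

theorem evalENNReal_C_mul (a : ℝ≥0∞) (φ : PowerSeries ℝ≥0∞) (x : ℝ≥0∞) :
    evalENNReal (C a * φ) x = a * evalENNReal φ x := by
  simp only [evalENNReal, coeff_C_mul, mul_assoc, ENNReal.tsum_mul_left]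

/-- Substitution of `ψ` into `φ`; no condition on the constant term of `ψ` is needed in `[0, ∞]`. -/
def substENNReal (φ ψ : PowerSeries ℝ≥0∞) : PowerSeries ℝ≥0∞ :=
  mk fun n => ∑' i, coeff i φ * coeff n (ψ ^ i)

theorem evalENNReal_substENNReal (φ ψ : PowerSeries ℝ≥0∞) (x : ℝ≥0∞) :
    evalENNReal (substENNReal φ ψ) x = evalENNReal φ (evalENNReal ψ x) := by
  calc evalENNReal (substENNReal φ ψ) x
      = ∑' n, ∑' i, coeff i φ * (coeff n (ψ ^ i) * x ^ n) := by
        simp only [evalENNReal, substENNReal, coeff_mk, ← ENNReal.tsum_mul_right, mul_assoc]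
    _ = ∑' i, coeff i φ * evalENNReal (ψ ^ i) x := by
        rw [ENNReal.tsum_comm]
        simp only [evalENNReal, ENNReal.tsum_mul_left]
    _ = evalENNReal φ (evalENNReal ψ x) := by simp only [evalENNReal_pow]; rfl

end PowerSeries

def HasNonnegPowerSeriesOnIcc (g : ℝ → ℝ) (φ : PowerSeries ℝ≥0∞) : Prop :=
  ∀ x ∈ Set.Icc (0 : ℝ) 1, 0 ≤ g x ∧ ENNReal.ofReal (g x) = evalENNReal φ (ENNReal.ofReal x)

theorem hasNonnegPowerSeriesOnIcc_one : HasNonnegPowerSeriesOnIcc (fun _ => 1) 1 :=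
  fun _ _ => ⟨zero_le_one, by simp⟩

theorem hasNonnegPowerSeriesOnIcc_id : HasNonnegPowerSeriesOnIcc (fun x => x) X :=
  fun _ hx => ⟨hx.1, by simp⟩

namespace HasNonnegPowerSeriesOnIcc

variable {g k F : ℝ → ℝ} {φ ψ : PowerSeries ℝ≥0∞}

theorem mul (hg : HasNonnegPowerSeriesOnIcc g φ) (hk : HasNonnegPowerSeriesOnIcc k ψ) :
    HasNonnegPowerSeriesOnIcc (fun x => g x * k x) (φ * ψ) := fun x hx =>
  ⟨mul_nonneg (hg x hx).1 (hk x hx).1, by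
    rw [ENNReal.ofReal_mul (hg x hx).1, (hg x hx).2, (hk x hx).2, evalENNReal_mul]⟩

theorem prod {ι : Type*} (s : Finset ι) {g : ι → ℝ → ℝ} {φ : ι → PowerSeries ℝ≥0∞}
    (hg : ∀ i ∈ s, HasNonnegPowerSeriesOnIcc (g i) (φ i)) :
    HasNonnegPowerSeriesOnIcc (fun x => ∏ i ∈ s, g i x) (∏ i ∈ s, φ i) := by
  classical
  induction s using Finset.induction_on with
  | empty => simpa using hasNonnegPowerSeriesOnIcc_one
  | insert i s hi ih =>
    simp_rw [Finset.prod_insert hi]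
    exact (hg i (mem_insert_self i s)).mul (ih fun j hj => hg j (mem_insert_of_mem hj))

theorem const_mul (hg : HasNonnegPowerSeriesOnIcc g φ) {c : ℝ} (hc : 0 ≤ c) :
    HasNonnegPowerSeriesOnIcc (fun x => c * g x) (C (ENNReal.ofReal c) * φ) := fun x hx =>
  ⟨mul_nonneg hc (hg x hx).1, by rw [ENNReal.ofReal_mul hc, (hg x hx).2, evalENNReal_C_mul]⟩

theorem comp (hg : HasNonnegPowerSeriesOnIcc g φ) (hF : HasNonnegPowerSeriesOnIcc F ψ)
    (hmaps : Set.MapsTo F (Set.Icc 0 1) (Set.Icc 0 1)) :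
    HasNonnegPowerSeriesOnIcc (g ∘ F) (substENNReal φ ψ) := fun x hx =>
  ⟨(hg (F x) (hmaps hx)).1, by
    rw [Function.comp_apply, (hg (F x) (hmaps hx)).2, (hF x hx).2, evalENNReal_substENNReal]⟩

theorem hasSum (hg : HasNonnegPowerSeriesOnIcc g φ) {x : ℝ} (hx : x ∈ Set.Icc (0 : ℝ) 1) :
    HasSum (fun n => (coeff n φ).toReal * x ^ n) (g x) := by
  have hfin : evalENNReal φ (ENNReal.ofReal x) ≠ ⊤ := by
    rw [← (hg x hx).2]; exact ENNReal.ofReal_ne_top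
  have := ENNReal.hasSum_toReal hfin
  rw [← ENNReal.tsum_toReal_eq fun n => ne_top_of_le_ne_top hfin (ENNReal.le_tsum n),
    ← evalENNReal, ← (hg x hx).2, ENNReal.toReal_ofReal (hg x hx).1] at this
  simpa only [ENNReal.toReal_mul, ENNReal.toReal_pow, ENNReal.toReal_ofReal hx.1] using this

theorem coeff_le (hg : HasNonnegPowerSeriesOnIcc g φ) (n : ℕ) :
    coeff n φ ≤ ENNReal.ofReal (g 1) := by
  rw [(hg 1 ⟨zero_le_one, le_rfl⟩).2, ENNReal.ofReal_one, evalENNReal]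
  simpa using ENNReal.le_tsum (f := fun n => coeff n φ) n

theorem le_of_eventually_le (hg : HasNonnegPowerSeriesOnIcc g φ) {M : ℝ}
    (hM : ∀ᶠ x in 𝓝[<] 1, g x ≤ M) : g 1 ≤ M := by
  refine le_of_tendsto (Real.tendsto_tsum_powerSeries_nhdsWithin_lt
    (by simpa using (hg.hasSum ⟨zero_le_one, le_rfl⟩).tendsto_sum_nat)) ?_
  filter_upwards [hM, Ioo_mem_nhdsLT zero_lt_one] with x hx hx01
  rwa [(hg.hasSum ⟨hx01.1.le, hx01.2.le⟩).tsum_eq]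

end HasNonnegPowerSeriesOnIcc

theorem exists_strictMono_tendsto_toReal_coeff {φ : ℕ → PowerSeries ℝ≥0∞} {B : ℝ}
    (hB : ∀ t n, coeff n (φ t) ≤ ENNReal.ofReal B) :
    ∃ (a : ℕ → ℝ) (σ : ℕ → ℕ), StrictMono σ ∧
      ∀ n, Tendsto (fun t => (coeff n (φ (σ t))).toReal) atTop (𝓝 (a n)) := by
  obtain ⟨A, σ, hσ, hA⟩ := CompactSpace.tendsto_subseq fun t n => coeff n (φ t)
  refine ⟨fun n => (A n).toReal, σ, hσ, fun n => ?_⟩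
  have hAB : A n ≤ ENNReal.ofReal B :=
    le_of_tendsto (tendsto_pi_nhds.1 hA n) (Eventually.of_forall fun t => hB (σ t) n)
  exact (ENNReal.tendsto_toReal (ne_top_of_le_ne_top ENNReal.ofReal_ne_top hAB)).comp
    (tendsto_pi_nhds.1 hA n)

theorem exists_nonneg_hasSum_of_tendsto {g : ℕ → ℝ → ℝ} {φ : ℕ → PowerSeries ℝ≥0∞} {G : ℝ → ℝ}
    (hg : ∀ t, HasNonnegPowerSeriesOnIcc (g t) (φ t))
    (hlim : ∀ x ∈ Set.Icc (0 : ℝ) 1, Tendsto (fun t => g t x) atTop (𝓝 (G x)))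
    (hle : ∀ t, ∀ᶠ x in 𝓝[<] 1, g t x ≤ G x) :
    ∃ a : ℕ → ℝ, (∀ n, 0 ≤ a n) ∧ ∀ x ∈ Set.Icc (0 : ℝ) 1, HasSum (fun n => a n * x ^ n) (G x) := by
  have h1 : (1 : ℝ) ∈ Set.Icc (0 : ℝ) 1 := ⟨zero_le_one, le_rfl⟩
  obtain ⟨B, hB⟩ := (hlim 1 h1).bddAbove_range
  have hgB : ∀ t, g t 1 ≤ B := fun t => hB ⟨t, rfl⟩
  have hB0 : 0 ≤ B := ((hg 0 1 h1).1).trans (hgB 0)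
  have hcB : ∀ t n, coeff n (φ t) ≤ ENNReal.ofReal B := fun t n =>
    ((hg t).coeff_le n).trans (ENNReal.ofReal_le_ofReal (hgB t))
  obtain ⟨a, σ, hσ, hca⟩ := exists_strictMono_tendsto_toReal_coeff hcB
  have ha0 : ∀ n, 0 ≤ a n := fun n => ge_of_tendsto' (hca n) fun _ => ENNReal.toReal_nonneg
  have hgσ : ∀ x ∈ Set.Icc (0 : ℝ) 1, Tendsto (fun t => g (σ t) x) atTop (𝓝 (G x)) :=
    fun x hx => (hlim x hx).comp hσ.tendsto_atTop
  have hpartial : ∀ N, ∑ n ∈ range N, a n ≤ G 1 := fun N =>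
    le_of_tendsto_of_tendsto' (tendsto_finsetSum _ fun n _ => hca n) (hgσ 1 h1) fun t => by
      simpa using sum_le_hasSum (range N) (fun n _ => ENNReal.toReal_nonneg)
        (by simpa using (hg (σ t)).hasSum h1)
  have ha : Summable a := summable_of_sum_range_le ha0 hpartial
  have hsummable : ∀ x ∈ Set.Icc (0 : ℝ) 1, Summable fun n => a n * x ^ n := fun x hx =>
    ha.of_nonneg_of_le (fun n => mul_nonneg (ha0 n) (pow_nonneg hx.1 n))
      fun n => mul_le_of_le_one_right (ha0 n) (pow_le_one₀ hx.1 hx.2)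
  have hbelow : ∀ x ∈ Set.Ico (0 : ℝ) 1, G x = ∑' n, a n * x ^ n := by
    intro x hx
    have hxI : x ∈ Set.Icc (0 : ℝ) 1 := ⟨hx.1, hx.2.le⟩
    refine tendsto_nhds_unique (hgσ x hxI) ?_
    have := tendsto_tsum_of_dominated_convergence (bound := fun n => B * x ^ n)
      ((summable_geometric_of_lt_one hx.1 hx.2).mul_left B) (fun n => (hca n).mul_const (x ^ n))
      (Eventually.of_forall fun t n => by
        rw [Real.norm_of_nonneg (mul_nonneg ENNReal.toReal_nonneg (pow_nonneg hx.1 n))]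
        exact mul_le_mul_of_nonneg_right
          (ENNReal.toReal_le_of_le_ofReal hB0 (hcB (σ t) n)) (pow_nonneg hx.1 n))
    exact this.congr fun t => ((hg (σ t)).hasSum hxI).tsum_eq
  have hat_one : G 1 ≤ ∑' n, a n := by
    refine le_of_tendsto' (hlim 1 h1) fun t => (hg t).le_of_eventually_le ?_
    filter_upwards [hle t, Ioo_mem_nhdsLT zero_lt_one] with x hgx hx
    have hxI : x ∈ Set.Icc (0 : ℝ) 1 := ⟨hx.1.le, hx.2.le⟩
    calc g t x ≤ G x := hgx
      _ = ∑' n, a n * x ^ n := hbelow x ⟨hx.1.le, hx.2⟩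
      _ ≤ ∑' n, a n := (hsummable x hxI).tsum_le_tsum
          (fun n => mul_le_of_le_one_right (ha0 n) (pow_le_one₀ hxI.1 hxI.2)) ha
  refine ⟨a, ha0, fun x hx => ?_⟩
  rcases hx.2.lt_or_eq with hx1 | rfl
  · exact hbelow x ⟨hx.1, hx1⟩ ▸ (hsummable x hx).hasSum
  · have : G 1 = ∑' n, a n := le_antisymm hat_one (Real.tsum_le_of_sum_range_le ha0 hpartial)
    simpa [this] using ha.hasSum

theorem geom_sum_le_one_div {c : ℝ} (h0 : 0 ≤ c) (h1 : c < 1) (n : ℕ) :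
    ∑ i ∈ range n, c ^ i ≤ 1 / (1 - c) := by
  have := geom_sum_Ico_le_of_lt_one (m := 0) (n := n) h0 h1
  rwa [pow_zero, ← range_eq_Ico] at this

section Convexity

variable {E ι : Type*} [AddCommGroup E] [Module ℝ E] {s : Set E}

theorem convexOn_finsetSum (t : Finset ι) {f : ι → E → ℝ} (hs : Convex ℝ s)
    (hf : ∀ i ∈ t, ConvexOn ℝ s (f i)) : ConvexOn ℝ s fun x => ∑ i ∈ t, f i x := by
  classical
  induction t using Finset.induction_on with
  | empty => simpa using convexOn_const (0 : ℝ) hs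
  | insert i t hi ih =>
    simp_rw [Finset.sum_insert hi]
    exact (hf i (mem_insert_self i t)).add (ih fun j hj => hf j (mem_insert_of_mem hj))

theorem convexOn_tsum {f : ι → E → ℝ} (hs : Convex ℝ s) (hf : ∀ i, ConvexOn ℝ s (f i))
    (hsum : ∀ x ∈ s, Summable fun i => f i x) : ConvexOn ℝ s fun x => ∑' i, f i x := by
  refine ⟨hs, fun x hx y hy a b ha hb hab => ?_⟩
  calc ∑' i, f i (a • x + b • y) ≤ ∑' i, (a • f i x + b • f i y) :=
        (hsum _ (hs hx hy ha hb hab)).tsum_le_tsum (fun i => (hf i).2 hx hy ha hb hab)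
          (((hsum x hx).const_smul a).add ((hsum y hy).const_smul b))
    _ = a • ∑' i, f i x + b • ∑' i, f i y := by
        rw [((hsum x hx).const_smul a).tsum_add ((hsum y hy).const_smul b),
          (hsum x hx).tsum_const_smul, (hsum y hy).tsum_const_smul]

end Convexity

namespace DefectivePGF

def pgf (p : ℕ → ℝ) (s : ℝ) : ℝ :=
  ∑' k, p k * s ^ k

/-- The divided difference `(pgf p x - pgf p q) / (x - q)`, written as a series that also makes
sense at `x = q`. -/
def pgfSlope (p : ℕ → ℝ) (q x : ℝ) : ℝ :=
  ∑' k, p k * ∑ i ∈ range k, x ^ i * q ^ (k - 1 - i)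

variable {p : ℕ → ℝ} {q x : ℝ}

theorem summable_pgf (hp : ∀ k, 0 ≤ p k) (hsum : Summable p) (hx : x ∈ Set.Icc (0 : ℝ) 1) :
    Summable fun k => p k * x ^ k :=
  hsum.of_nonneg_of_le (fun k => mul_nonneg (hp k) (pow_nonneg hx.1 k))
    fun k => mul_le_of_le_one_right (hp k) (pow_le_one₀ hx.1 hx.2)

theorem pgf_nonneg (hp : ∀ k, 0 ≤ p k) (hx : 0 ≤ x) : 0 ≤ pgf p x :=
  tsum_nonneg fun k => mul_nonneg (hp k) (pow_nonneg hx k)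

theorem pgf_one : pgf p 1 = ∑' k, p k := by
  simp [pgf]

theorem monotoneOn_pgf (hp : ∀ k, 0 ≤ p k) (hsum : Summable p) :
    MonotoneOn (pgf p) (Set.Icc 0 1) := fun _ hx _ hy hxy =>
  (summable_pgf hp hsum hx).tsum_le_tsum
    (fun k => mul_le_mul_of_nonneg_left (pow_le_pow_left₀ hx.1 hxy k) (hp k))
    (summable_pgf hp hsum hy)

theorem pgf_le_one (hp : ∀ k, 0 ≤ p k) (hsum : Summable p) (h1 : ∑' k, p k ≤ 1)
    (hx : x ∈ Set.Icc (0 : ℝ) 1) : pgf p x ≤ 1 :=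
  (monotoneOn_pgf hp hsum hx ⟨zero_le_one, le_rfl⟩ hx.2).trans (pgf_one (p := p) ▸ h1)

theorem mapsTo_pgf (hp : ∀ k, 0 ≤ p k) (hsum : Summable p) (h1 : ∑' k, p k ≤ 1) :
    Set.MapsTo (pgf p) (Set.Icc 0 1) (Set.Icc 0 1) := fun _ hx =>
  ⟨pgf_nonneg hp hx.1, pgf_le_one hp hsum h1 hx⟩

theorem mapsTo_pgf_Icc_zero (hp : ∀ k, 0 ≤ p k) (hsum : Summable p) (hq : q ≤ 1)
    (hfix : pgf p q = q) : Set.MapsTo (pgf p) (Set.Icc 0 q) (Set.Icc 0 q) := fun _ hx =>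
  ⟨pgf_nonneg hp hx.1, hfix ▸ monotoneOn_pgf hp hsum ⟨hx.1, hx.2.trans hq⟩
    ⟨hx.1.trans hx.2, hq⟩ hx.2⟩

theorem mapsTo_pgf_Icc_one (hp : ∀ k, 0 ≤ p k) (hsum : Summable p) (h1 : ∑' k, p k ≤ 1)
    (hq : 0 ≤ q) (hfix : pgf p q = q) : Set.MapsTo (pgf p) (Set.Icc q 1) (Set.Icc q 1) :=
  fun _ hx =>
  ⟨hfix ▸ monotoneOn_pgf hp hsum ⟨hq, hx.1.trans hx.2⟩ ⟨hq.trans hx.1, hx.2⟩ hx.1,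
    pgf_le_one hp hsum h1 ⟨hq.trans hx.1, hx.2⟩⟩

theorem hasNonnegPowerSeriesOnIcc_pgf (hp : ∀ k, 0 ≤ p k) (hsum : Summable p) :
    HasNonnegPowerSeriesOnIcc (pgf p) (mk fun k => ENNReal.ofReal (p k)) :=
  fun x hx => ⟨pgf_nonneg hp hx.1, by
    rw [pgf, ENNReal.ofReal_tsum_of_nonneg (fun k => mul_nonneg (hp k) (pow_nonneg hx.1 k))
      (summable_pgf hp hsum hx)]
    simp only [evalENNReal, coeff_mk, ENNReal.ofReal_mul (hp _),
      ENNReal.ofReal_pow hx.1]⟩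

theorem sum_pow_mul_pow_le (hq : q ∈ Set.Ico (0 : ℝ) 1) (hx : x ∈ Set.Icc (0 : ℝ) 1) (k : ℕ) :
    ∑ i ∈ range k, x ^ i * q ^ (k - 1 - i) ≤ 1 / (1 - q) :=
  calc ∑ i ∈ range k, x ^ i * q ^ (k - 1 - i) ≤ ∑ i ∈ range k, q ^ (k - 1 - i) :=
        sum_le_sum fun _ _ => mul_le_of_le_one_left (pow_nonneg hq.1 _) (pow_le_one₀ hx.1 hx.2)
    _ = ∑ i ∈ range k, q ^ i := sum_range_reflect (fun i => q ^ i) k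
    _ ≤ 1 / (1 - q) := geom_sum_le_one_div hq.1 hq.2 k

theorem summable_pgfSlope (hp : ∀ k, 0 ≤ p k) (hsum : Summable p) (hq : q ∈ Set.Ico (0 : ℝ) 1)
    (hx : x ∈ Set.Icc (0 : ℝ) 1) :
    Summable fun k => p k * ∑ i ∈ range k, x ^ i * q ^ (k - 1 - i) :=
  (hsum.mul_right (1 / (1 - q))).of_nonneg_of_le
    (fun k => mul_nonneg (hp k) (sum_nonneg fun i _ =>
      mul_nonneg (pow_nonneg hx.1 i) (pow_nonneg hq.1 _)))
    fun k => mul_le_mul_of_nonneg_left (sum_pow_mul_pow_le hq hx k) (hp k)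

theorem pgfSlope_nonneg (hp : ∀ k, 0 ≤ p k) (hq : 0 ≤ q) (hx : 0 ≤ x) : 0 ≤ pgfSlope p q x :=
  tsum_nonneg fun k => mul_nonneg (hp k) (by positivity)

theorem monotoneOn_pgfSlope (hp : ∀ k, 0 ≤ p k) (hsum : Summable p)
    (hq : q ∈ Set.Ico (0 : ℝ) 1) : MonotoneOn (pgfSlope p q) (Set.Icc 0 1) := fun _ hx _ hy hxy =>
  (summable_pgfSlope hp hsum hq hx).tsum_le_tsum
    (fun k => mul_le_mul_of_nonneg_left (sum_le_sum fun i _ =>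
      mul_le_mul_of_nonneg_right (pow_le_pow_left₀ hx.1 hxy i) (pow_nonneg hq.1 _)) (hp k))
    (summable_pgfSlope hp hsum hq hy)

theorem pgfSlope_mul_sub (hp : ∀ k, 0 ≤ p k) (hsum : Summable p) (hq : q ∈ Set.Ico (0 : ℝ) 1)
    (hx : x ∈ Set.Icc (0 : ℝ) 1) : pgfSlope p q x * (x - q) = pgf p x - pgf p q := by
  rw [pgfSlope, ← (summable_pgfSlope hp hsum hq hx).tsum_mul_right]
  simp_rw [mul_assoc, geom_sum₂_mul, mul_sub]
  exact (summable_pgf hp hsum hx).tsum_sub (summable_pgf hp hsum ⟨hq.1, hq.2.le⟩)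

theorem convexOn_pgfSlope (hp : ∀ k, 0 ≤ p k) (hsum : Summable p) (hq : q ∈ Set.Ico (0 : ℝ) 1) :
    ConvexOn ℝ (Set.Icc 0 1) (pgfSlope p q) := by
  refine convexOn_tsum (convex_Icc 0 1) (fun k => ?_) fun x hx => summable_pgfSlope hp hsum hq hx
  refine (convexOn_finsetSum (range k) (convex_Icc 0 1) fun i _ => ?_).smul (hp k)
  simpa only [smul_eq_mul, mul_comm] using
    ((convexOn_pow i).subset Set.Icc_subset_Ici_self (convex_Icc 0 1)).smul
      (pow_nonneg hq.1 (k - 1 - i))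

theorem pgfSlope_le_secant (hp : ∀ k, 0 ≤ p k) (hsum : Summable p) (hq : q ∈ Set.Ico (0 : ℝ) 1)
    (hx : x ∈ Set.Icc q 1) :
    pgfSlope p q x ≤ pgfSlope p q q + (x - q) * ((pgfSlope p q 1 - pgfSlope p q q) / (1 - q)) := by
  rcases hx.1.eq_or_lt with rfl | hqx
  · simp
  have hsec := (convexOn_pgfSlope hp hsum hq).secant_mono (a := q) ⟨hq.1, hq.2.le⟩
    ⟨hq.1.trans hx.1, hx.2⟩ ⟨zero_le_one, le_rfl⟩ hqx.ne' hq.2.ne' hx.2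
  rw [div_le_iff₀ (sub_pos.2 hqx)] at hsec
  linarith

theorem tendsto_pgfSlope_nhdsGT (hp : ∀ k, 0 ≤ p k) (hsum : Summable p)
    (hq : q ∈ Set.Ico (0 : ℝ) 1) :
    Tendsto (pgfSlope p q) (𝓝[>] q) (𝓝 (pgfSlope p q q)) := by
  set K := (pgfSlope p q 1 - pgfSlope p q q) / (1 - q)
  have hupper : Tendsto (fun x => pgfSlope p q q + (x - q) * K) (𝓝[>] q) (𝓝 (pgfSlope p q q)) :=
    ((Continuous.tendsto' (by fun_prop) q _ (by simp))).mono_left nhdsWithin_le_nhds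
  refine tendsto_of_tendsto_of_tendsto_of_le_of_le' tendsto_const_nhds hupper ?_ ?_ <;>
    filter_upwards [Ioo_mem_nhdsGT hq.2] with x hx
  · exact monotoneOn_pgfSlope hp hsum hq ⟨hq.1, hq.2.le⟩ ⟨hq.1.trans hx.1.le, hx.2.le⟩ hx.1.le
  · exact pgfSlope_le_secant hp hsum hq ⟨hx.1.le, hx.2.le⟩

theorem deriv_pgf (hp : ∀ k, 0 ≤ p k) (hsum : Summable p) (hq : q ∈ Set.Ico (0 : ℝ) 1)
    (hd : DifferentiableAt ℝ (pgf p) q) : deriv (pgf p) q = pgfSlope p q q := by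
  have hslope := hasDerivWithinAt_iff_tendsto_slope.mp
    (hd.hasDerivAt.hasDerivWithinAt (s := Set.Ioi q))
  rw [Set.sdiff_singleton_eq_self Set.self_notMem_Ioi] at hslope
  refine tendsto_nhds_unique hslope ((tendsto_pgfSlope_nhdsGT hp hsum hq).congr' ?_)
  filter_upwards [Ioo_mem_nhdsGT hq.2] with x hx
  rw [slope_def_field, ← pgfSlope_mul_sub hp hsum hq ⟨hq.1.trans hx.1.le, hx.2.le⟩,
    mul_div_cancel_right₀ _ (sub_pos.2 hx.1).ne']

theorem hasNonnegPowerSeriesOnIcc_pgfSlope (hp : ∀ k, 0 ≤ p k) (hsum : Summable p)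
    (hq : q ∈ Set.Ico (0 : ℝ) 1) :
    HasNonnegPowerSeriesOnIcc (pgfSlope p q)
      (mk fun i => ∑' k, if i < k then ENNReal.ofReal (p k * q ^ (k - 1 - i)) else 0) := by
  intro x hx
  refine ⟨pgfSlope_nonneg hp hq.1 hx.1, ?_⟩
  have hq0 := hq.1
  have hx0 := hx.1
  have hterm : ∀ k, ENNReal.ofReal (p k * ∑ i ∈ range k, x ^ i * q ^ (k - 1 - i)) =
      ∑' i, (if i < k then ENNReal.ofReal (p k * q ^ (k - 1 - i)) else 0) *
        ENNReal.ofReal x ^ i := by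
    intro k
    have hpk := hp k
    rw [mul_sum, ENNReal.ofReal_sum_of_nonneg (fun i _ => by positivity),
      tsum_eq_sum (s := range k) fun i hi => by simp [mem_range.not.mp hi]]
    refine sum_congr rfl fun i hi => ?_
    rw [if_pos (mem_range.mp hi), ← ENNReal.ofReal_pow hx.1, ← ENNReal.ofReal_mul (by positivity)]
    ring_nf
  rw [pgfSlope, ENNReal.ofReal_tsum_of_nonneg (fun k => mul_nonneg (hp k) (by positivity))
    (summable_pgfSlope hp hsum hq hx)]
  simp_rw [hterm]
  rw [ENNReal.tsum_comm]
  simp only [evalENNReal, coeff_mk, ENNReal.tsum_mul_right]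

structure IsDefectiveFixedPt (p : ℕ → ℝ) (q : ℝ) : Prop where
  nonneg : ∀ k, 0 ≤ p k
  summable : Summable p
  tsum_lt_one : ∑' k, p k < 1
  mem_Ico : q ∈ Set.Ico (0 : ℝ) 1
  isFixedPt : pgf p q = q
  slope_pos : 0 < pgfSlope p q q

/-- The function `h` of the statement, with `γ = pgfSlope p q q`. -/
def pgfRatio (p : ℕ → ℝ) (q x : ℝ) : ℝ :=
  pgfSlope p q x / pgfSlope p q q

def ratioProd (p : ℕ → ℝ) (q : ℝ) (t : ℕ) (s : ℝ) : ℝ :=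
  ∏ j ∈ range t, pgfRatio p q ((pgf p)^[j] s)

namespace IsDefectiveFixedPt

variable {p : ℕ → ℝ} {q x s : ℝ}

theorem mapsTo_iterate (hP : IsDefectiveFixedPt p q) (j : ℕ) :
    Set.MapsTo (pgf p)^[j] (Set.Icc 0 1) (Set.Icc 0 1) :=
  (mapsTo_pgf hP.nonneg hP.summable hP.tsum_lt_one.le).iterate j

theorem pgfRatio_self (hP : IsDefectiveFixedPt p q) : pgfRatio p q q = 1 :=
  div_self hP.slope_pos.ne'

theorem pgf_sub_eq (hP : IsDefectiveFixedPt p q) (hx : x ∈ Set.Icc (0 : ℝ) 1) :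
    pgf p x - q = pgfSlope p q q * pgfRatio p q x * (x - q) := by
  rw [pgfRatio, mul_div_cancel₀ _ hP.slope_pos.ne',
    pgfSlope_mul_sub hP.nonneg hP.summable hP.mem_Ico hx, hP.isFixedPt]

theorem pgfRatio_eq (hP : IsDefectiveFixedPt p q) (hx : x ∈ Set.Icc (0 : ℝ) 1) (hxq : x ≠ q) :
    pgfRatio p q x = (pgf p x - q) / ((x - q) * pgfSlope p q q) := by
  rw [hP.pgf_sub_eq hx]
  field_simp [sub_ne_zero.2 hxq, hP.slope_pos.ne']

theorem pgfRatio_nonneg (hP : IsDefectiveFixedPt p q) (hx : 0 ≤ x) : 0 ≤ pgfRatio p q x :=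
  div_nonneg (pgfSlope_nonneg hP.nonneg hP.mem_Ico.1 hx) hP.slope_pos.le

theorem pgfRatio_le_one (hP : IsDefectiveFixedPt p q) (hx : x ∈ Set.Icc 0 q) :
    pgfRatio p q x ≤ 1 :=
  div_le_one_of_le₀ (monotoneOn_pgfSlope hP.nonneg hP.summable hP.mem_Ico
    ⟨hx.1, hx.2.trans hP.mem_Ico.2.le⟩ ⟨hP.mem_Ico.1, hP.mem_Ico.2.le⟩ hx.2) hP.slope_pos.le

theorem one_le_pgfRatio (hP : IsDefectiveFixedPt p q) (hx : x ∈ Set.Icc q 1) :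
    1 ≤ pgfRatio p q x :=
  (one_le_div hP.slope_pos).2 (monotoneOn_pgfSlope hP.nonneg hP.summable hP.mem_Ico
    ⟨hP.mem_Ico.1, hP.mem_Ico.2.le⟩ ⟨hP.mem_Ico.1.trans hx.1, hx.2⟩ hx.1)

theorem pgfRatio_le_one_add (hP : IsDefectiveFixedPt p q) (hx : x ∈ Set.Icc q 1) :
    pgfRatio p q x ≤ 1 + (x - q) / (1 - q) * (pgfRatio p q 1 - 1) := by
  have hγ := hP.slope_pos
  have hq : 1 - q ≠ 0 := (sub_pos.2 hP.mem_Ico.2).ne'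
  rw [pgfRatio, pgfRatio, div_le_iff₀ hγ]
  calc pgfSlope p q x ≤ _ := pgfSlope_le_secant hP.nonneg hP.summable hP.mem_Ico hx
    _ = _ := by field_simp

theorem pgfSlope_one_lt_one (hP : IsDefectiveFixedPt p q) : pgfSlope p q 1 < 1 := by
  have h := pgfSlope_mul_sub hP.nonneg hP.summable hP.mem_Ico ⟨zero_le_one, le_rfl⟩
  rw [pgf_one, hP.isFixedPt] at h
  refine lt_of_mul_lt_mul_right (a := 1 - q) ?_ (sub_nonneg.2 hP.mem_Ico.2.le)
  rw [h, one_mul]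
  linarith [hP.tsum_lt_one]

theorem pgf_iterate_sub_le (hP : IsDefectiveFixedPt p q) (hs : s ∈ Set.Icc q 1) (j : ℕ) :
    (pgf p)^[j] s - q ≤ pgfSlope p q 1 ^ j * (s - q) := by
  induction j with
  | zero => simp
  | succ j ih =>
    have hmaps := (mapsTo_pgf_Icc_one hP.nonneg hP.summable hP.tsum_lt_one.le hP.mem_Ico.1
      hP.isFixedPt).iterate j hs
    have hx : (pgf p)^[j] s ∈ Set.Icc (0 : ℝ) 1 := ⟨hP.mem_Ico.1.trans hmaps.1, hmaps.2⟩
    rw [Function.iterate_succ_apply', ← hP.isFixedPt,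
      ← pgfSlope_mul_sub hP.nonneg hP.summable hP.mem_Ico hx, hP.isFixedPt, pow_succ']
    calc pgfSlope p q ((pgf p)^[j] s) * ((pgf p)^[j] s - q)
        ≤ pgfSlope p q 1 * ((pgf p)^[j] s - q) := mul_le_mul_of_nonneg_right
          (monotoneOn_pgfSlope hP.nonneg hP.summable hP.mem_Ico hx ⟨zero_le_one, le_rfl⟩ hx.2)
          (sub_nonneg.2 hmaps.1)
      _ ≤ pgfSlope p q 1 * (pgfSlope p q 1 ^ j * (s - q)) := mul_le_mul_of_nonneg_left ih
          (pgfSlope_nonneg hP.nonneg hP.mem_Ico.1 zero_le_one)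
      _ = _ := by ring

theorem pgf_iterate_sub_eq (hP : IsDefectiveFixedPt p q) (hs : s ∈ Set.Icc (0 : ℝ) 1) (t : ℕ) :
    (pgf p)^[t] s - q = (s - q) * (pgfSlope p q q ^ t * ratioProd p q t s) := by
  induction t with
  | zero => simp [ratioProd]
  | succ t ih =>
    rw [Function.iterate_succ_apply', hP.pgf_sub_eq (hP.mapsTo_iterate t hs), ih, ratioProd,
      ratioProd, prod_range_succ]
    ring

theorem ratioProd_nonneg (hP : IsDefectiveFixedPt p q) (hs : s ∈ Set.Icc (0 : ℝ) 1) (t : ℕ) :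
    0 ≤ ratioProd p q t s :=
  prod_nonneg fun j _ => hP.pgfRatio_nonneg (hP.mapsTo_iterate j hs).1

theorem ratioProd_self (hP : IsDefectiveFixedPt p q) (t : ℕ) : ratioProd p q t q = 1 :=
  prod_eq_one fun j _ => by rw [Function.iterate_fixed hP.isFixedPt, hP.pgfRatio_self]

theorem antitone_ratioProd (hP : IsDefectiveFixedPt p q) (hs : s ∈ Set.Icc 0 q) :
    Antitone fun t => ratioProd p q t s := by
  have hmaps := mapsTo_pgf_Icc_zero hP.nonneg hP.summable hP.mem_Ico.2.le hP.isFixedPt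
  refine antitone_nat_of_succ_le fun t => ?_
  rw [ratioProd, ratioProd, prod_range_succ]
  exact mul_le_of_le_one_right (hP.ratioProd_nonneg ⟨hs.1, hs.2.trans hP.mem_Ico.2.le⟩ t)
    (hP.pgfRatio_le_one (hmaps.iterate t hs))

theorem monotone_ratioProd (hP : IsDefectiveFixedPt p q) (hs : s ∈ Set.Icc q 1) :
    Monotone fun t => ratioProd p q t s := by
  have hmaps := mapsTo_pgf_Icc_one hP.nonneg hP.summable hP.tsum_lt_one.le hP.mem_Ico.1
    hP.isFixedPt
  refine monotone_nat_of_le_succ fun t => ?_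
  rw [ratioProd, ratioProd, prod_range_succ]
  exact le_mul_of_one_le_right (hP.ratioProd_nonneg ⟨hP.mem_Ico.1.trans hs.1, hs.2⟩ t)
    (hP.one_le_pgfRatio (hmaps.iterate t hs))

theorem bddAbove_range_ratioProd (hP : IsDefectiveFixedPt p q) (hs : s ∈ Set.Icc q 1) :
    BddAbove (Set.range fun t => ratioProd p q t s) := by
  have hq := hP.mem_Ico
  have hmaps := mapsTo_pgf_Icc_one hP.nonneg hP.summable hP.tsum_lt_one.le hq.1 hP.isFixedPt
  set c := pgfSlope p q 1
  have hc0 : 0 ≤ c := pgfSlope_nonneg hP.nonneg hq.1 zero_le_one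
  set K := pgfRatio p q 1 - 1
  have hK : 0 ≤ K := sub_nonneg.2 (hP.one_le_pgfRatio ⟨hq.2.le, le_rfl⟩)
  have hfactor : ∀ j, pgfRatio p q ((pgf p)^[j] s) ≤ Real.exp (K * c ^ j) := fun j => by
    have hdist : ((pgf p)^[j] s - q) / (1 - q) ≤ c ^ j := by
      rw [div_le_iff₀ (sub_pos.2 hq.2)]
      exact (hP.pgf_iterate_sub_le hs j).trans
        (mul_le_mul_of_nonneg_left (by linarith [hs.2]) (pow_nonneg hc0 j))
    calc pgfRatio p q ((pgf p)^[j] s) ≤ 1 + ((pgf p)^[j] s - q) / (1 - q) * K :=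
          hP.pgfRatio_le_one_add (hmaps.iterate j hs)
      _ ≤ K * c ^ j + 1 := by linarith [mul_le_mul_of_nonneg_right hdist hK]
      _ ≤ Real.exp (K * c ^ j) := Real.add_one_le_exp _
  refine ⟨Real.exp (K * (1 / (1 - c))), ?_⟩
  rintro _ ⟨t, rfl⟩
  calc ratioProd p q t s ≤ ∏ j ∈ range t, Real.exp (K * c ^ j) :=
        prod_le_prod (fun j _ => hP.pgfRatio_nonneg (hP.mapsTo_iterate j
          ⟨hq.1.trans hs.1, hs.2⟩).1) fun j _ => hfactor j
    _ = Real.exp (K * ∑ j ∈ range t, c ^ j) := by rw [← Real.exp_sum, mul_sum]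
    _ ≤ Real.exp (K * (1 / (1 - c))) :=
        Real.exp_le_exp.2 (mul_le_mul_of_nonneg_left
          (geom_sum_le_one_div hc0 hP.pgfSlope_one_lt_one t) hK)

theorem exists_tendsto_ratioProd (hP : IsDefectiveFixedPt p q) (hs : s ∈ Set.Icc (0 : ℝ) 1) :
    ∃ L, Tendsto (fun t => ratioProd p q t s) atTop (𝓝 L) := by
  rcases le_total s q with hsq | hqs
  · refine ⟨_, tendsto_atTop_ciInf (hP.antitone_ratioProd ⟨hs.1, hsq⟩) ⟨0, ?_⟩⟩
    rintro _ ⟨t, rfl⟩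
    exact hP.ratioProd_nonneg hs t
  · exact ⟨_, tendsto_atTop_ciSup (hP.monotone_ratioProd ⟨hqs, hs.2⟩)
      (hP.bddAbove_range_ratioProd ⟨hqs, hs.2⟩)⟩

theorem exists_hasNonnegPowerSeriesOnIcc_ratioProd (hP : IsDefectiveFixedPt p q) (t : ℕ) :
    ∃ φ, HasNonnegPowerSeriesOnIcc (ratioProd p q t) φ := by
  have hpgf := hasNonnegPowerSeriesOnIcc_pgf hP.nonneg hP.summable
  have hiter : ∀ j, ∃ ψ, HasNonnegPowerSeriesOnIcc (pgf p)^[j] ψ := by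
    intro j
    induction j with
    | zero => exact ⟨X, hasNonnegPowerSeriesOnIcc_id⟩
    | succ j ih =>
      obtain ⟨ψ, hψ⟩ := ih
      exact ⟨_, Function.iterate_succ' (pgf p) j ▸ hpgf.comp hψ (hP.mapsTo_iterate j)⟩
  choose ψ hψ using hiter
  have hratio := (hasNonnegPowerSeriesOnIcc_pgfSlope hP.nonneg hP.summable hP.mem_Ico).const_mul
    (inv_nonneg.2 hP.slope_pos.le)
  rw [show (fun x => (pgfSlope p q q)⁻¹ * pgfSlope p q x) = pgfRatio p q from
    funext fun x => (div_eq_inv_mul _ _).symm] at hratio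
  exact ⟨_, HasNonnegPowerSeriesOnIcc.prod (range t) (g := fun j => pgfRatio p q ∘ (pgf p)^[j])
    fun j _ => hratio.comp (hψ j) (hP.mapsTo_iterate j)⟩

theorem exists_tendsto_ratioProd_hasSum (hP : IsDefectiveFixedPt p q) :
    ∃ H : ℝ → ℝ, (∀ s ∈ Set.Icc (0 : ℝ) 1, Tendsto (fun t => ratioProd p q t s) atTop (𝓝 (H s))) ∧
      H q = 1 ∧ ∃ a : ℕ → ℝ, (∀ n, 0 ≤ a n) ∧
        ∀ s ∈ Set.Icc (0 : ℝ) 1, HasSum (fun n => a n * s ^ n) (H s) := by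
  choose! H hH using fun s (hs : s ∈ Set.Icc (0 : ℝ) 1) => hP.exists_tendsto_ratioProd hs
  choose φ hφ using hP.exists_hasNonnegPowerSeriesOnIcc_ratioProd
  have hq := hP.mem_Ico
  refine ⟨H, hH, tendsto_nhds_unique (hH q ⟨hq.1, hq.2.le⟩) ?_,
    exists_nonneg_hasSum_of_tendsto hφ hH fun t => ?_⟩
  · simp only [hP.ratioProd_self, tendsto_const_nhds]
  · filter_upwards [Ioo_mem_nhdsLT hq.2] with x hx
    exact (hP.monotone_ratioProd ⟨hx.1.le, hx.2.le⟩).ge_of_tendsto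
      (hH x ⟨hq.1.trans hx.1.le, hx.2.le⟩) t

end IsDefectiveFixedPt

end DefectivePGF

end

open DefectivePGF in
theorem stmt_0_general
    (p : ℕ → ℝ) (ε : ℝ) (f : ℝ → ℝ) (q γ : ℝ) (h : ℝ → ℝ)
    (hp : ∀ k, 0 ≤ p k) (hε : ε ∈ Set.Ioo (0 : ℝ) 1)
    (hsum : HasSum p (1 - ε))
    (hf : ∀ s : ℝ, f s = ∑' k, p k * s ^ k)
    (hq : q ∈ Set.Ico (0 : ℝ) 1) (hfix : f q = q)
    (hγ : γ = deriv f q) (hγpos : 0 < γ)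
    (hh : ∀ s : ℝ, s ≠ q → h s = (f s - q) / ((s - q) * γ))
    (hhq : h q = 1) :
    ∃ H : ℝ → ℝ,
      (∀ s ∈ Set.Icc (0 : ℝ) 1,
          Tendsto (fun t : ℕ => ∏ j ∈ range t, h (f^[j] s)) atTop (nhds (H s))) ∧
      H q = 1 ∧
      (∃ a : ℕ → ℝ, (∀ n, 0 ≤ a n) ∧
          ∀ s ∈ Set.Icc (0 : ℝ) 1, H s = ∑' n, a n * s ^ n) ∧
      (∀ s ∈ Set.Icc (0 : ℝ) 1,
          Tendsto (fun t : ℕ => (f^[t] s - q) / γ ^ t) atTop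
            (nhds ((s - q) * H s))) := by
  obtain rfl : f = pgf p := funext hf
  obtain rfl : γ = pgfSlope p q q := hγ.trans (deriv_pgf hp hsum.summable hq
    (differentiableAt_of_deriv_ne_zero (hγ ▸ hγpos.ne')))
  have hP : IsDefectiveFixedPt p q :=
    ⟨hp, hsum.summable, by linarith [hsum.tsum_eq, hε.1], hq, hfix, hγpos⟩
  have hratio : ∀ x ∈ Set.Icc (0 : ℝ) 1, h x = pgfRatio p q x := fun x hx => by
    rcases eq_or_ne x q with rfl | hxq
    · rw [hhq, hP.pgfRatio_self]
    · rw [hh x hxq, hP.pgfRatio_eq hx hxq]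
  have hprod : ∀ s ∈ Set.Icc (0 : ℝ) 1,
      (fun t => ∏ j ∈ range t, h ((pgf p)^[j] s)) = fun t => ratioProd p q t s :=
    fun s hs => funext fun t => prod_congr rfl fun j _ => hratio _ (hP.mapsTo_iterate j hs)
  obtain ⟨H, hH, hHq, a, ha0, ha⟩ := hP.exists_tendsto_ratioProd_hasSum
  refine ⟨H, fun s hs => hprod s hs ▸ hH s hs, hHq, ⟨a, ha0, fun s hs => (ha s hs).tsum_eq.symm⟩,
    fun s hs => ((hH s hs).const_mul (s - q)).congr fun t => ?_⟩
  rw [hP.pgf_iterate_sub_eq hs t]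
  field_simp [pow_ne_zero t hγpos.ne']

/-- Proposition 1(a): for a defective probability generating function `f` with smallest
fixed point `q` and `γ = f'(q) > 0`, the products `∏_{j<t} h(f^[j] s)` converge to a
limit `H s`; `H q = 1`, `H` is a power series with nonnegative coefficients on `[0,1]`
(in particular `H 1` is finite), and `(f^[t] s - q)/γ^t → (s - q) * H s`. -/
theorem stmt_0
    (p : ℕ → ℝ) (ε : ℝ) (f : ℝ → ℝ) (q γ : ℝ) (h : ℝ → ℝ)
    (hp : ∀ k, 0 ≤ p k) (hε : ε ∈ Set.Ioo (0 : ℝ) 1)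
    (hsum : HasSum p (1 - ε))
    (hf : ∀ s : ℝ, f s = ∑' k, p k * s ^ k)
    (hq : q ∈ Set.Ico (0 : ℝ) 1) (hfix : f q = q)
    (hqmin : ∀ x ∈ Set.Icc (0 : ℝ) 1, f x = x → q ≤ x)
    (hγ : γ = deriv f q) (hγpos : 0 < γ)
    (hh : ∀ s : ℝ, s ≠ q → h s = (f s - q) / ((s - q) * γ))
    (hhq : h q = 1) :
    ∃ H : ℝ → ℝ,
      (∀ s ∈ Set.Icc (0 : ℝ) 1,
          Tendsto (fun t : ℕ => ∏ j ∈ range t, h (f^[j] s)) atTop (nhds (H s))) ∧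
      H q = 1 ∧
      (∃ a : ℕ → ℝ, (∀ n, 0 ≤ a n) ∧
          ∀ s ∈ Set.Icc (0 : ℝ) 1, H s = ∑' n, a n * s ^ n) ∧
      (∀ s ∈ Set.Icc (0 : ℝ) 1,
          Tendsto (fun t : ℕ => (f^[t] s - q) / γ ^ t) atTop
            (nhds ((s - q) * H s))) :=
  stmt_0_general p ε f q γ h hp hε hsum hf hq hfix hγ hγpos hh hhq
end

section
/- Let f be a defective probability generating function with smallest fixed point q and gamma = f'(q) > 0, and let H be the limit function H(s) = prod_{j=0}^infty h(f(j,s)) with h(s) = (f(s)-q)/((s-q)gamma), h(q)=1. Then gamma^{-t} * (f(t,1) - f(t,0)) converges, as t tends to infinity, to q*H(0) + (1-q)*H(1); probabilistically, gamma^{-t} P(T > t) converges to q*H(0) + (1-q)*H(1), where T is the absorption time of the defective Galton-Watson process with reproduction law f, for which P(T > t) = f(t,1) - f(t,0). -/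
/-!
Writing `f s - q = γ h(s) (s - q)`, the deviation from the fixed point telescopes along the orbit:
`f^[t] s - q = γ^t (s - q) ∏_{j<t} h(f^[j] s)`. Subtracting this at `s = 1` and `s = 0` gives
`γ^{-t} (f^[t] 1 - f^[t] 0) = (1 - q) ∏_{j<t} h(f^[j] 1) + q ∏_{j<t} h(f^[j] 0)`, and the two partial
products converge to `H 1` and `H 0`.
-/

open Filter Finset

section Linearization

variable {𝕜 : Type*} [Field 𝕜] {f h : 𝕜 → 𝕜} {q γ : 𝕜}

theorem sub_fixedPoint_eq_mul_of_slope (hγ : γ ≠ 0) (hfix : f q = q)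
    (hh : ∀ s, s ≠ q → h s = (f s - q) / ((s - q) * γ)) (x : 𝕜) :
    f x - q = γ * h x * (x - q) := by
  by_cases hx : x = q
  · simp [hx, hfix]
  · rw [hh x hx]
    field_simp [sub_ne_zero.mpr hx]

theorem iterate_sub_fixedPoint_eq_pow_mul_prod (hf : ∀ x, f x - q = γ * h x * (x - q))
    (s : 𝕜) (t : ℕ) :
    f^[t] s - q = γ ^ t * (s - q) * ∏ j ∈ range t, h (f^[j] s) := by
  induction t with
  | zero => simp
  | succ t ih =>
    rw [Function.iterate_succ_apply', hf, ih, prod_range_succ, pow_succ]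
    ring

theorem iterate_sub_iterate_div_pow_eq (hγ : γ ≠ 0) (hf : ∀ x, f x - q = γ * h x * (x - q))
    (a b : 𝕜) (t : ℕ) :
    (f^[t] a - f^[t] b) / γ ^ t =
      (a - q) * ∏ j ∈ range t, h (f^[j] a) - (b - q) * ∏ j ∈ range t, h (f^[j] b) := by
  rw [div_eq_iff (pow_ne_zero t hγ)]
  linear_combination iterate_sub_fixedPoint_eq_pow_mul_prod hf a t -
    iterate_sub_fixedPoint_eq_pow_mul_prod hf b t

end Linearization

theorem stmt_2_general
    (f : ℝ → ℝ) (q γ : ℝ) (h H : ℝ → ℝ)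
    (hfix : f q = q)
    (hγpos : 0 < γ)
    (hh : ∀ s : ℝ, s ≠ q → h s = (f s - q) / ((s - q) * γ))
    (hH : ∀ s ∈ Set.Icc (0 : ℝ) 1,
        Tendsto (fun t : ℕ => ∏ j ∈ range t, h (f^[j] s)) atTop (nhds (H s))) :
    Tendsto (fun t : ℕ => (f^[t] 1 - f^[t] 0) / γ ^ t) atTop
      (nhds (q * H 0 + (1 - q) * H 1)) := by
  have hlin := sub_fixedPoint_eq_mul_of_slope hγpos.ne' hfix hh
  have hlim := ((hH 0 (by simp)).const_mul q).add ((hH 1 (by simp)).const_mul (1 - q))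
  refine hlim.congr fun t => ?_
  rw [iterate_sub_iterate_div_pow_eq hγpos.ne' hlin]
  ring

/-- Relation (5): for a defective pgf `f` with smallest fixed point `q` and
`γ = f'(q) > 0`, `γ^{-t} P(T > t) = (f^[t] 1 - f^[t] 0)/γ^t → q H(0) + (1-q) H(1)`,
where `H s = ∏_{j≥0} h(f^[j] s)`. -/
theorem stmt_2
    (p : ℕ → ℝ) (ε : ℝ) (f : ℝ → ℝ) (q γ : ℝ) (h H : ℝ → ℝ)
    (hp : ∀ k, 0 ≤ p k) (hε : ε ∈ Set.Ioo (0 : ℝ) 1)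
    (hsum : HasSum p (1 - ε))
    (hf : ∀ s : ℝ, f s = ∑' k, p k * s ^ k)
    (hq : q ∈ Set.Ico (0 : ℝ) 1) (hfix : f q = q)
    (hqmin : ∀ x ∈ Set.Icc (0 : ℝ) 1, f x = x → q ≤ x)
    (hγ : γ = deriv f q) (hγpos : 0 < γ)
    (hh : ∀ s : ℝ, s ≠ q → h s = (f s - q) / ((s - q) * γ))
    (hhq : h q = 1)
    (hH : ∀ s ∈ Set.Icc (0 : ℝ) 1,
        Tendsto (fun t : ℕ => ∏ j ∈ range t, h (f^[j] s)) atTop (nhds (H s))) :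
    Tendsto (fun t : ℕ => (f^[t] 1 - f^[t] 0) / γ ^ t) atTop
      (nhds (q * H 0 + (1 - q) * H 1)) :=
  stmt_2_general f q γ h H hfix hγpos hh hH
end

section
/- Let f be a defective probability generating function with smallest fixed point q and gamma = f'(q) > 0. Then for every integer k >= 1, the ratio ((f(t+k-1,1) - f(t+k-1,0)) - (f(t+k,1) - f(t+k,0))) / (f(t-1,1) - f(t-1,0)) converges to (1-gamma)*gamma^k as t tends to infinity. Probabilistically, P(T = t+k | T >= t) converges to (1-gamma)*gamma^k, where T is the absorption time of the defective Galton-Watson process with reproduction law f. -/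
/-!
Write `d t = f^[t] 1 - f^[t] 0`. The orbit of `0` increases to the smallest fixed point `q`, and
the orbit of `1` decreases to `q` as well: `f` is convex with `f 1 < 1`, so it has no fixed point
in `(q, 1)`. Being a power series of radius at least `1`, `f` is strictly differentiable at `q`,
so `d (t + 1) / d t`, a slope of `f` between two points that both tend to `q`, converges to `γ`.
Hence `d (t + k) / d t → γ ^ k`, and the ratio in question tends to `γ ^ k - γ ^ (k + 1)`.
Since `γ > 0`, some coefficient `p m` with `m ≠ 0` is positive, so `f` is strictly increasing on
`[0, 1]` and every `d t` is positive.
-/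

open Filter Finset

open Set Topology

section Iterate

variable {α : Type*} [Preorder α] {f : α → α} {s : Set α}

theorem MonotoneOn.iterate (hf : MonotoneOn f s) (hs : MapsTo f s s) (n : ℕ) :
    MonotoneOn f^[n] s := by
  induction n with
  | zero => exact monotoneOn_id
  | succ n ih => rw [Function.iterate_succ']; exact hf.comp ih (hs.iterate n)

theorem StrictMonoOn.iterate (hf : StrictMonoOn f s) (hs : MapsTo f s s) (n : ℕ) :
    StrictMonoOn f^[n] s := by
  induction n with
  | zero => exact strictMonoOn_id
  | succ n ih => rw [Function.iterate_succ']; exact hf.comp ih (hs.iterate n)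

theorem MonotoneOn.monotone_iterate_of_le_map (hf : MonotoneOn f s) (hs : MapsTo f s s) {x : α}
    (hx : x ∈ s) (hfx : x ≤ f x) : Monotone fun n => f^[n] x :=
  monotone_nat_of_le_succ fun n => by
    rw [Function.iterate_succ_apply]
    exact hf.iterate hs n hx (hs hx) hfx

theorem MonotoneOn.antitone_iterate_of_map_le (hf : MonotoneOn f s) (hs : MapsTo f s s) {x : α}
    (hx : x ∈ s) (hfx : f x ≤ x) : Antitone fun n => f^[n] x :=
  antitone_nat_of_succ_le fun n => by
    rw [Function.iterate_succ_apply]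
    exact hf.iterate hs n (hs hx) hx hfx

end Iterate

theorem HasStrictDerivAt.tendsto_slope_of_tendsto {𝕜 : Type*} [NontriviallyNormedField 𝕜]
    {f : 𝕜 → 𝕜} {f' x : 𝕜} {ι : Type*} {l : Filter ι} {a b : ι → 𝕜}
    (hf : HasStrictDerivAt f f' x) (ha : Tendsto a l (𝓝 x)) (hb : Tendsto b l (𝓝 x))
    (hab : ∀ᶠ t in l, a t ≠ b t) :
    Tendsto (fun t => (f (b t) - f (a t)) / (b t - a t)) l (𝓝 f') := by
  have hlo := (hasDerivAtFilter_iff_isLittleO.mp hf).comp_tendsto (hb.prodMk_nhds ha)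
  have := hlo.tendsto_div_nhds_zero.add_const f'
  rw [zero_add] at this
  refine this.congr' (hab.mono fun t ht => ?_)
  have : b t - a t ≠ 0 := sub_ne_zero.mpr ht.symm
  simp only [Function.comp_apply, smul_eq_mul]
  field_simp
  ring

theorem tendsto_div_of_tendsto_succ_div {𝕜 : Type*} [NormedField 𝕜] {d : ℕ → 𝕜} {c : 𝕜}
    (hd : ∀ t, d t ≠ 0) (h : Tendsto (fun t => d (t + 1) / d t) atTop (𝓝 c)) (j : ℕ) :
    Tendsto (fun t => d (t + j) / d t) atTop (𝓝 (c ^ j)) := by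
  induction j with
  | zero => simp [div_self (hd _)]
  | succ j ih =>
    rw [pow_succ']
    refine ((h.comp (tendsto_add_atTop_nat j)).mul ih).congr fun t => ?_
    simp only [Function.comp_apply, ← add_assoc]
    rw [div_mul_div_cancel₀ (hd _)]

noncomputable def pgf (p : ℕ → ℝ) (s : ℝ) : ℝ := ∑' k, p k * s ^ k

namespace pgf

variable {p : ℕ → ℝ}

theorem summable_mul_pow (hp : Summable p) {s : ℝ} (hs : |s| ≤ 1) :
    Summable fun k => p k * s ^ k :=
  hp.abs.of_norm_bounded fun k => by
    rw [norm_mul, norm_pow, Real.norm_eq_abs, Real.norm_eq_abs]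
    exact mul_le_of_le_one_right (abs_nonneg _) (pow_le_one₀ (abs_nonneg _) hs)

theorem eq_ofScalars_sum : pgf p = (FormalMultilinearSeries.ofScalars ℝ p).sum := by
  rw [← FormalMultilinearSeries.ofScalarsSum, FormalMultilinearSeries.ofScalarsSum_eq_tsum]
  rfl

theorem analyticAt (hp : Summable p) {s : ℝ} (hs : |s| < 1) : AnalyticAt ℝ (pgf p) s := by
  have hr : 1 ≤ (FormalMultilinearSeries.ofScalars ℝ p).radius := by
    simpa using FormalMultilinearSeries.le_radius_of_summable (r := 1) _
      (by simpa [FormalMultilinearSeries.ofScalars_norm] using hp.abs)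
  rw [eq_ofScalars_sum]
  refine FormalMultilinearSeries.analyticOnNhd _ (Metric.mem_eball.mpr (lt_of_lt_of_le ?_ hr))
  simpa [edist_dist, Real.dist_eq] using hs

theorem nonneg (hp0 : ∀ k, 0 ≤ p k) {s : ℝ} (hs : 0 ≤ s) : 0 ≤ pgf p s :=
  tsum_nonneg fun k => mul_nonneg (hp0 k) (pow_nonneg hs k)

theorem monotoneOn (hp0 : ∀ k, 0 ≤ p k) (hp : Summable p) : MonotoneOn (pgf p) (Icc 0 1) :=
  fun x hx y hy hxy => Summable.tsum_le_tsum
    (fun k => mul_le_mul_of_nonneg_left (pow_le_pow_left₀ hx.1 hxy k) (hp0 k))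
    (summable_mul_pow hp (abs_le.mpr ⟨by linarith [hx.1], hx.2⟩))
    (summable_mul_pow hp (abs_le.mpr ⟨by linarith [hy.1], hy.2⟩))

theorem strictMonoOn (hp0 : ∀ k, 0 ≤ p k) (hp : Summable p) {m : ℕ} (hm : m ≠ 0)
    (hpm : 0 < p m) : StrictMonoOn (pgf p) (Icc 0 1) :=
  fun x hx y hy hxy => Summable.tsum_lt_tsum (i := m)
    (fun k => mul_le_mul_of_nonneg_left (pow_le_pow_left₀ hx.1 hxy.le k) (hp0 k))
    (mul_lt_mul_of_pos_left (pow_lt_pow_left₀ hxy hx.1 hm) hpm)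
    (summable_mul_pow hp (abs_le.mpr ⟨by linarith [hx.1], hx.2⟩))
    (summable_mul_pow hp (abs_le.mpr ⟨by linarith [hy.1], hy.2⟩))

theorem convexOn (hp0 : ∀ k, 0 ≤ p k) (hp : Summable p) : ConvexOn ℝ (Icc 0 1) (pgf p) := by
  refine ⟨convex_Icc 0 1, fun x hx y hy a b ha hb hab => ?_⟩
  have habs : ∀ z ∈ Icc (0 : ℝ) 1, |z| ≤ 1 := fun z hz => abs_le.mpr ⟨by linarith [hz.1], hz.2⟩
  have hsx := (summable_mul_pow hp (habs x hx)).mul_left a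
  have hsy := (summable_mul_pow hp (habs y hy)).mul_left b
  simp only [pgf, smul_eq_mul]
  rw [← tsum_mul_left, ← tsum_mul_left, ← hsx.tsum_add hsy]
  refine Summable.tsum_le_tsum (fun k => ?_)
    (summable_mul_pow hp (habs _ (convex_Icc 0 1 hx hy ha hb hab))) (hsx.add hsy)
  have := mul_le_mul_of_nonneg_left
    ((convexOn_pow k).2 (mem_Ici.mpr hx.1) (mem_Ici.mpr hy.1) ha hb hab) (hp0 k)
  simp only [smul_eq_mul] at this
  linarith

theorem apply_lt_self (hp0 : ∀ k, 0 ≤ p k) (hp : Summable p) (h1 : pgf p 1 < 1) {q x : ℝ}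
    (hq : 0 ≤ q) (hfq : pgf p q = q) (hqx : q < x) (hx : x < 1) : pgf p x < x := by
  by_contra! hle
  have hslope := (convexOn hp0 hp).slope_mono_adjacent ⟨hq, hqx.le.trans hx.le⟩
    ⟨zero_le_one, le_rfl⟩ hqx hx
  have hleft : 1 ≤ (pgf p x - pgf p q) / (x - q) :=
    (one_le_div (sub_pos.2 hqx)).2 (by linarith)
  have hright : (pgf p 1 - pgf p x) / (1 - x) < 1 := (div_lt_one (sub_pos.2 hx)).2 (by linarith)
  linarith

theorem exists_coeff_pos_of_deriv_ne_zero (hp0 : ∀ k, 0 ≤ p k) {q : ℝ}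
    (h : deriv (pgf p) q ≠ 0) : ∃ m ≠ 0, 0 < p m := by
  by_contra! hcoeff
  have hconst : pgf p = fun _ => p 0 := funext fun s =>
    (tsum_eq_single 0 fun k hk => by rw [le_antisymm (hcoeff k hk) (hp0 k), zero_mul]).trans
      (by simp)
  exact h (by rw [hconst, deriv_const])

theorem iterate_zero_lt_iterate_one (hp0 : ∀ k, 0 ≤ p k) (hp : Summable p) (h1 : pgf p 1 ≤ 1)
    {m : ℕ} (hm : m ≠ 0) (hpm : 0 < p m) (t : ℕ) : (pgf p)^[t] 0 < (pgf p)^[t] 1 := by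
  have hmaps : MapsTo (pgf p) (Set.Icc 0 1) (Set.Icc 0 1) := fun x hx =>
    ⟨nonneg hp0 hx.1, (monotoneOn hp0 hp hx ⟨zero_le_one, le_rfl⟩ hx.2).trans h1⟩
  exact (strictMonoOn hp0 hp hm hpm).iterate hmaps t ⟨le_rfl, zero_le_one⟩ ⟨zero_le_one, le_rfl⟩
    zero_lt_one

theorem tendsto_iterate_zero (hp0 : ∀ k, 0 ≤ p k) (hp : Summable p) {q : ℝ} (hq : q ∈ Set.Ico 0 1)
    (hfq : pgf p q = q) (hqmin : ∀ x ∈ Set.Icc 0 1, pgf p x = x → q ≤ x) :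
    Tendsto (fun t => (pgf p)^[t] 0) atTop (𝓝 q) := by
  have hmono : MonotoneOn (pgf p) (Icc 0 q) :=
    (monotoneOn hp0 hp).mono (Icc_subset_Icc_right hq.2.le)
  have hmaps : MapsTo (pgf p) (Icc 0 q) (Icc 0 q) := fun x hx =>
    ⟨nonneg hp0 hx.1, hfq ▸ hmono hx ⟨hq.1, le_rfl⟩ hx.2⟩
  have horbit := hmono.monotone_iterate_of_le_map hmaps ⟨le_rfl, hq.1⟩ (nonneg hp0 le_rfl)
  have hlim := tendsto_atTop_ciSup horbit
    ⟨q, forall_mem_range.2 fun t => (hmaps.iterate t ⟨le_rfl, hq.1⟩).2⟩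
  set L := ⨆ t, (pgf p)^[t] 0
  have hL : L ∈ Icc 0 q :=
    isClosed_Icc.mem_of_tendsto hlim (Eventually.of_forall fun t => hmaps.iterate t ⟨le_rfl, hq.1⟩)
  have hfix : pgf p L = L := isFixedPt_of_tendsto_iterate hlim
    (analyticAt hp (abs_lt.2 ⟨by linarith [hL.1], hL.2.trans_lt hq.2⟩)).continuousAt
  rwa [le_antisymm hL.2 (hqmin L ⟨hL.1, hL.2.trans hq.2.le⟩ hfix)] at hlim

theorem tendsto_iterate_one (hp0 : ∀ k, 0 ≤ p k) (hp : Summable p) (h1 : pgf p 1 < 1) {q : ℝ}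
    (hq : q ∈ Set.Ico 0 1) (hfq : pgf p q = q) :
    Tendsto (fun t => (pgf p)^[t] 1) atTop (𝓝 q) := by
  have hmono : MonotoneOn (pgf p) (Icc q 1) :=
    (monotoneOn hp0 hp).mono (Icc_subset_Icc_left hq.1)
  have hmaps : MapsTo (pgf p) (Icc q 1) (Icc q 1) := fun x hx =>
    ⟨hfq ▸ hmono ⟨le_rfl, hq.2.le⟩ hx hx.1, (hmono hx ⟨hq.2.le, le_rfl⟩ hx.2).trans h1.le⟩
  have hone : (1 : ℝ) ∈ Icc q 1 := ⟨hq.2.le, le_rfl⟩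
  have horbit := hmono.antitone_iterate_of_map_le hmaps hone h1.le
  have hlim := tendsto_atTop_ciInf horbit
    ⟨q, forall_mem_range.2 fun t => (hmaps.iterate t hone).1⟩
  set M := ⨅ t, (pgf p)^[t] 1
  have hqM : q ≤ M :=
    ge_of_tendsto hlim (Eventually.of_forall fun t => (hmaps.iterate t hone).1)
  have hM1 : M < 1 := (horbit.le_of_tendsto hlim 1).trans_lt h1
  have hfix : pgf p M = M := isFixedPt_of_tendsto_iterate hlim
    (analyticAt hp (abs_lt.2 ⟨by linarith [hq.1], hM1⟩)).continuousAt
  rcases hqM.eq_or_lt with hqM | hqM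
  · rwa [← hqM] at hlim
  · exact absurd hfix (apply_lt_self hp0 hp h1 hq.1 hfq hqM hM1).ne

end pgf

theorem stmt_3_general
    (p : ℕ → ℝ) (ε : ℝ) (f : ℝ → ℝ) (q γ : ℝ)
    (hp : ∀ k, 0 ≤ p k) (hε : ε ∈ Set.Ioo (0 : ℝ) 1)
    (hsum : HasSum p (1 - ε))
    (hf : ∀ s : ℝ, f s = ∑' k, p k * s ^ k)
    (hq : q ∈ Set.Ico (0 : ℝ) 1) (hfix : f q = q)
    (hqmin : ∀ x ∈ Set.Icc (0 : ℝ) 1, f x = x → q ≤ x)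
    (hγ : γ = deriv f q) (hγpos : 0 < γ)
    (k : ℕ) :
    Tendsto
      (fun t : ℕ =>
        ((f^[t + k - 1] 1 - f^[t + k - 1] 0) - (f^[t + k] 1 - f^[t + k] 0)) /
          (f^[t - 1] 1 - f^[t - 1] 0))
      atTop (nhds ((1 - γ) * γ ^ k)) := by
  obtain rfl : f = pgf p := funext hf
  have hps := hsum.summable
  have h1 : pgf p 1 < 1 := by
    simp only [pgf, one_pow, mul_one, hsum.tsum_eq]
    linarith [hε.1]
  obtain ⟨m, hm, hpm⟩ := pgf.exists_coeff_pos_of_deriv_ne_zero hp (hγ ▸ hγpos).ne'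
  set d : ℕ → ℝ := fun t => (pgf p)^[t] 1 - (pgf p)^[t] 0
  have hd : ∀ t, 0 < d t := fun t =>
    sub_pos.2 (pgf.iterate_zero_lt_iterate_one hp hps h1.le hm hpm t)
  have hratio : Tendsto (fun t => d (t + 1) / d t) atTop (𝓝 γ) := by
    simp only [d, Function.iterate_succ_apply']
    exact hγ ▸ (pgf.analyticAt hps (abs_lt.2 ⟨by linarith [hq.1], hq.2⟩)).hasStrictDerivAt
      |>.tendsto_slope_of_tendsto (pgf.tendsto_iterate_zero hp hps hq hfix hqmin)
        (pgf.tendsto_iterate_one hp hps h1 hq hfix)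
        (Eventually.of_forall fun t => (sub_pos.1 (hd t)).ne)
  have hlim := ((tendsto_div_of_tendsto_succ_div (fun t => (hd t).ne') hratio k).sub
    (tendsto_div_of_tendsto_succ_div (fun t => (hd t).ne') hratio (k + 1))).comp
    (tendsto_sub_atTop_nat 1)
  rw [show γ ^ k - γ ^ (k + 1) = (1 - γ) * γ ^ k by ring] at hlim
  refine hlim.congr' ((eventually_ge_atTop 1).mono fun t ht => ?_)
  simp only [Function.comp_apply, d, ← sub_div]
  rw [show t - 1 + k = t + k - 1 by omega, show t - 1 + (k + 1) = t + k by omega]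

/-- For a defective pgf `f` with smallest fixed point `q` and `γ = f'(q) > 0`,
`P(T = t+k | T ≥ t) → (1-γ) γ^k` for every `k ≥ 1`, where
`P(T = t+k | T ≥ t) = ((f^[t+k-1] 1 - f^[t+k-1] 0) - (f^[t+k] 1 - f^[t+k] 0)) / (f^[t-1] 1 - f^[t-1] 0)`. -/
theorem stmt_3
    (p : ℕ → ℝ) (ε : ℝ) (f : ℝ → ℝ) (q γ : ℝ)
    (hp : ∀ k, 0 ≤ p k) (hε : ε ∈ Set.Ioo (0 : ℝ) 1)
    (hsum : HasSum p (1 - ε))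
    (hf : ∀ s : ℝ, f s = ∑' k, p k * s ^ k)
    (hq : q ∈ Set.Ico (0 : ℝ) 1) (hfix : f q = q)
    (hqmin : ∀ x ∈ Set.Icc (0 : ℝ) 1, f x = x → q ≤ x)
    (hγ : γ = deriv f q) (hγpos : 0 < γ)
    (k : ℕ) (hk : 1 ≤ k) :
    Tendsto
      (fun t : ℕ =>
        ((f^[t + k - 1] 1 - f^[t + k - 1] 0) - (f^[t + k] 1 - f^[t + k] 0)) /
          (f^[t - 1] 1 - f^[t - 1] 0))
      atTop (nhds ((1 - γ) * γ ^ k)) :=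
  stmt_3_general p ε f q γ hp hε hsum hf hq hfix hqmin hγ hγpos k
end

section
/- Let f be a defective probability generating function with smallest fixed point q, gamma = f'(q) > 0, and limit function H as above. Then for every fixed integer k >= 0 and every s in [0,1], the ratio (f(t-k, s*f(k,1)) - f(t-k, s*f(k,0))) / (f(t,1) - f(t,0)) converges, as t tends to infinity, to gamma^{-k} * ((s*f(k,1) - q)*H(s*f(k,1)) - (s*f(k,0) - q)*H(s*f(k,0))) / ((1-q)*H(1) + q*H(0)). Probabilistically, this says that E(s^{Z(t-k)} | T > t) converges to sum_{j>=1} q_{k,j} s^j, where q_{k,j} = q_j * gamma^{-k} * (f(k,1)^j - f(k,0)^j) and (q_j)_{j>=1} is the distribution with generating function ((s-q)H(s) + qH(0))/((1-q)H(1) + qH(0)). -/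
open Filter Finset

/-- Theorem 1(a): for a defective pgf `f` with smallest fixed point `q`,
`γ = f'(q) > 0` and limit function `H`, for every fixed `k ≥ 0` and `s ∈ [0,1]`,
`E(s^{Z(t-k)} | T > t) = (f^[t-k](s f^[k] 1) - f^[t-k](s f^[k] 0)) / (f^[t] 1 - f^[t] 0)`
converges to
`γ^{-k}((s f^[k] 1 - q) H(s f^[k] 1) - (s f^[k] 0 - q) H(s f^[k] 0)) / ((1-q) H 1 + q H 0)`. -/
theorem stmt_4
    (p : ℕ → ℝ) (ε : ℝ) (f : ℝ → ℝ) (q γ : ℝ) (h H : ℝ → ℝ)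
    (hp : ∀ k, 0 ≤ p k) (hε : ε ∈ Set.Ioo (0 : ℝ) 1)
    (hsum : HasSum p (1 - ε))
    (hf : ∀ s : ℝ, f s = ∑' k, p k * s ^ k)
    (hq : q ∈ Set.Ico (0 : ℝ) 1) (hfix : f q = q)
    (hqmin : ∀ x ∈ Set.Icc (0 : ℝ) 1, f x = x → q ≤ x)
    (hγ : γ = deriv f q) (hγpos : 0 < γ)
    (hh : ∀ s : ℝ, s ≠ q → h s = (f s - q) / ((s - q) * γ))
    (hhq : h q = 1)
    (hH : ∀ s ∈ Set.Icc (0 : ℝ) 1,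
        Tendsto (fun t : ℕ => ∏ j ∈ range t, h (f^[j] s)) atTop (nhds (H s)))
    (k : ℕ) (s : ℝ) (hs : s ∈ Set.Icc (0 : ℝ) 1) :
    Tendsto
      (fun t : ℕ =>
        (f^[t - k] (s * f^[k] 1) - f^[t - k] (s * f^[k] 0)) /
          (f^[t] 1 - f^[t] 0))
      atTop
      (nhds
        (((s * f^[k] 1 - q) * H (s * f^[k] 1) -
            (s * f^[k] 0 - q) * H (s * f^[k] 0)) /
          ((1 - q) * H 1 + q * H 0) / γ ^ k)) := by
  obtain ⟨hq0, hq1⟩ := hq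
  have hγ0 : γ ≠ 0 := ne_of_gt hγpos
  have hpsum : Summable p := hsum.summable
  -- summability of the series for z ∈ [0,1]
  have hsz : ∀ z ∈ Set.Icc (0 : ℝ) 1, Summable (fun n => p n * z ^ n) := by
    intro z hz
    refine Summable.of_nonneg_of_le
      (fun n => mul_nonneg (hp n) (pow_nonneg hz.1 n))
      (fun n => mul_le_of_le_one_right (hp n) (pow_le_one₀ hz.1 hz.2)) hpsum
  -- f maps [0,1] into [0,1]
  have hf01 : ∀ z ∈ Set.Icc (0 : ℝ) 1, f z ∈ Set.Icc (0 : ℝ) 1 := by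
    intro z hz
    rw [hf]
    constructor
    · exact tsum_nonneg fun n => mul_nonneg (hp n) (pow_nonneg hz.1 n)
    · calc ∑' n, p n * z ^ n ≤ ∑' n, p n :=
            Summable.tsum_le_tsum (fun n => mul_le_of_le_one_right (hp n) (pow_le_one₀ hz.1 hz.2))
              (hsz z hz) hpsum
        _ = 1 - ε := hsum.tsum_eq
        _ ≤ 1 := by linarith [hε.1]
  -- monotonicity of f on [0,1]
  have hmono : ∀ x ∈ Set.Icc (0 : ℝ) 1, ∀ y ∈ Set.Icc (0 : ℝ) 1, x ≤ y → f x ≤ f y := by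
    intro x hx y hy hxy
    rw [hf, hf]
    exact Summable.tsum_le_tsum
      (fun n => mul_le_mul_of_nonneg_left (pow_le_pow_left₀ hx.1 hxy n) (hp n))
      (hsz x hx) (hsz y hy)
  -- convexity of f on [0,1]
  have hconv : ConvexOn ℝ (Set.Icc (0 : ℝ) 1) f := by
    refine ⟨convex_Icc _ _, ?_⟩
    intro x hx y hy a b ha hb hab
    have hmem : a • x + b • y ∈ Set.Icc (0 : ℝ) 1 := (convex_Icc _ _) hx hy ha hb hab
    have key : ∀ n, p n * (a • x + b • y) ^ n ≤ a * (p n * x ^ n) + b * (p n * y ^ n) := by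
      intro n
      have hcx := (convexOn_pow n).2 (Set.mem_Ici.mpr hx.1) (Set.mem_Ici.mpr hy.1) ha hb hab
      simp only [smul_eq_mul] at hcx ⊢
      nlinarith [hp n, hcx]
    have hsr : Summable (fun n => a * (p n * x ^ n) + b * (p n * y ^ n)) :=
      ((hsz x hx).mul_left a).add ((hsz y hy).mul_left b)
    calc f (a • x + b • y) = ∑' n, p n * (a • x + b • y) ^ n := hf _
      _ ≤ ∑' n, (a * (p n * x ^ n) + b * (p n * y ^ n)) :=
          Summable.tsum_le_tsum key (hsz _ hmem) hsr
      _ = a * ∑' n, p n * x ^ n + b * ∑' n, p n * y ^ n := by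
          rw [Summable.tsum_add ((hsz x hx).mul_left a) ((hsz y hy).mul_left b),
            tsum_mul_left, tsum_mul_left]
      _ = a • f x + b • f y := by rw [hf x, hf y]; simp [smul_eq_mul]
  -- f has derivative γ at q
  have hdiff : HasDerivAt f γ q := by
    have hne : deriv f q ≠ 0 := by rw [← hγ]; exact hγ0
    have := (differentiableAt_of_deriv_ne_zero hne).hasDerivAt
    rwa [← hγ] at this
  have hq01 : q ∈ Set.Icc (0 : ℝ) 1 := ⟨hq0, hq1.le⟩
  -- tangent line inequality
  have htan : ∀ x ∈ Set.Icc (0 : ℝ) 1, q < x → γ * (x - q) ≤ f x - q := by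
    intro x hx hqx
    have hsl := hconv.le_slope_of_hasDerivAt hq01 hx hqx hdiff
    rw [slope_def_field] at hsl
    have hxq : 0 < x - q := sub_pos.2 hqx
    have := (le_div_iff₀ hxq).mp hsl
    linarith [hfix, this]
  -- basic pointwise identity : f x - q = (x - q) * γ * h x
  have hstep : ∀ x : ℝ, f x - q = (x - q) * γ * h x := by
    intro x
    by_cases hx : x = q
    · subst hx; simp [hfix]
    · rw [hh x hx]
      have hx' : x - q ≠ 0 := sub_ne_zero.2 hx
      field_simp
  -- iterated identity
  have hiter : ∀ (t : ℕ) (x : ℝ),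
      f^[t] x - q = (x - q) * γ ^ t * ∏ j ∈ range t, h (f^[j] x) := by
    intro t x
    induction t with
    | zero => simp
    | succ n ih =>
      rw [Function.iterate_succ_apply', prod_range_succ, hstep (f^[n] x), ih]
      ring
  -- iterates of 1 stay in (q, 1]
  have hmaps1 : ∀ j, f^[j] (1 : ℝ) ∈ Set.Icc (0 : ℝ) 1 := by
    intro j
    induction j with
    | zero => simp
    | succ n ih => rw [Function.iterate_succ_apply']; exact hf01 _ ih
  have hgt1 : ∀ j, q < f^[j] (1 : ℝ) := by
    intro j
    induction j with
    | zero => simpa using hq1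
    | succ n ih =>
      rw [Function.iterate_succ_apply']
      have h1 := htan _ (hmaps1 n) ih
      nlinarith [mul_pos hγpos (sub_pos.2 ih)]
  have hh1 : ∀ j, 1 ≤ h (f^[j] (1 : ℝ)) := by
    intro j
    have hx := hgt1 j
    rw [hh _ hx.ne', le_div_iff₀ (mul_pos (sub_pos.2 hx) hγpos)]
    have h1 := htan _ (hmaps1 j) hx
    nlinarith
  -- iterates of 0 stay in [0, q]
  have hmaps0 : ∀ j, f^[j] (0 : ℝ) ∈ Set.Icc (0 : ℝ) q := by
    intro j
    induction j with
    | zero => simpa using hq0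
    | succ n ih =>
      rw [Function.iterate_succ_apply']
      have hmem : f^[n] (0 : ℝ) ∈ Set.Icc (0 : ℝ) 1 := ⟨ih.1, ih.2.trans hq1.le⟩
      refine ⟨(hf01 _ hmem).1, ?_⟩
      have := hmono _ hmem q hq01 ih.2
      rwa [hfix] at this
  have hh0 : ∀ j, 0 ≤ h (f^[j] (0 : ℝ)) := by
    intro j
    rcases eq_or_lt_of_le (hmaps0 j).2 with he | hl
    · rw [he, hhq]; norm_num
    · rw [hh _ hl.ne]
      apply div_nonneg_of_nonpos
      · have hmem : f^[j] (0 : ℝ) ∈ Set.Icc (0 : ℝ) 1 :=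
          ⟨(hmaps0 j).1, (hmaps0 j).2.trans hq1.le⟩
        have := hmono _ hmem q hq01 (hmaps0 j).2
        rw [hfix] at this
        linarith
      · nlinarith [sub_neg.2 hl]
  -- bounds on H
  have hH1 : 1 ≤ H 1 :=
    ge_of_tendsto (hH 1 ⟨zero_le_one, le_refl 1⟩)
      (Eventually.of_forall fun t => by
        simpa using Finset.prod_le_prod (fun j _ => zero_le_one) (fun j (_ : j ∈ range t) => hh1 j))
  have hH0 : 0 ≤ H 0 :=
    ge_of_tendsto (hH 0 ⟨le_refl 0, zero_le_one⟩)
      (Eventually.of_forall fun t => prod_nonneg fun j _ => hh0 j)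
  set a : ℝ := s * f^[k] 1 with ha_def
  set b : ℝ := s * f^[k] 0 with hb_def
  have ha : a ∈ Set.Icc (0 : ℝ) 1 :=
    ⟨mul_nonneg hs.1 (hmaps1 k).1, mul_le_one₀ hs.2 (hmaps1 k).1 (hmaps1 k).2⟩
  have hb : b ∈ Set.Icc (0 : ℝ) 1 :=
    ⟨mul_nonneg hs.1 (hmaps0 k).1,
      mul_le_one₀ hs.2 (hmaps0 k).1 ((hmaps0 k).2.trans hq1.le)⟩
  have hD : 0 < (1 - q) * H 1 + q * H 0 := by nlinarith
  have hDγ : γ ^ k * ((1 - q) * H 1 + q * H 0) ≠ 0 :=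
    ne_of_gt (mul_pos (pow_pos hγpos k) hD)
  -- the limit of the explicit expression
  have hta : Tendsto (fun t : ℕ => ∏ j ∈ range (t - k), h (f^[j] a)) atTop (nhds (H a)) :=
    (hH a ha).comp (tendsto_sub_atTop_nat k)
  have htb : Tendsto (fun t : ℕ => ∏ j ∈ range (t - k), h (f^[j] b)) atTop (nhds (H b)) :=
    (hH b hb).comp (tendsto_sub_atTop_nat k)
  have hlim : Tendsto
      (fun t : ℕ =>
        ((a - q) * ∏ j ∈ range (t - k), h (f^[j] a) -
          (b - q) * ∏ j ∈ range (t - k), h (f^[j] b)) /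
          (γ ^ k * ((1 - q) * ∏ j ∈ range t, h (f^[j] (1 : ℝ)) +
            q * ∏ j ∈ range t, h (f^[j] (0 : ℝ)))))
      atTop
      (nhds (((a - q) * H a - (b - q) * H b) / (γ ^ k * ((1 - q) * H 1 + q * H 0)))) := by
    refine Tendsto.div ((hta.const_mul _).sub (htb.const_mul _)) ?_ hDγ
    exact (((hH 1 ⟨zero_le_one, le_refl 1⟩).const_mul _).add
      ((hH 0 ⟨le_refl 0, zero_le_one⟩).const_mul _)).const_mul (γ ^ k)
  have hval : ((a - q) * H a - (b - q) * H b) / ((1 - q) * H 1 + q * H 0) / γ ^ k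
      = ((a - q) * H a - (b - q) * H b) / (γ ^ k * ((1 - q) * H 1 + q * H 0)) := by
    rw [div_div]; ring
  rw [hval]
  refine hlim.congr' ?_
  filter_upwards [eventually_ge_atTop k] with t ht
  have e1 := hiter (t - k) a
  have e2 := hiter (t - k) b
  have e3 := hiter t 1
  have e4 := hiter t 0
  have hγt : γ ^ t = γ ^ (t - k) * γ ^ k := by
    rw [← pow_add, Nat.sub_add_cancel ht]
  have hnum : f^[t - k] a - f^[t - k] b =
      γ ^ (t - k) * ((a - q) * ∏ j ∈ range (t - k), h (f^[j] a) -
        (b - q) * ∏ j ∈ range (t - k), h (f^[j] b)) := by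
    linear_combination e1 - e2
  have hden : f^[t] (1 : ℝ) - f^[t] (0 : ℝ) =
      γ ^ (t - k) * (γ ^ k * ((1 - q) * ∏ j ∈ range t, h (f^[j] (1 : ℝ)) +
        q * ∏ j ∈ range t, h (f^[j] (0 : ℝ)))) := by
    rw [← mul_assoc, ← hγt]
    linear_combination e3 - e4
  rw [hnum, hden, mul_div_mul_left _ _ (pow_ne_zero _ hγ0)]
end

section
/- Let f be a defective probability generating function with smallest fixed point q in (0,1) and gamma = f'(q) > 0. Then for all integers i >= 1 and j >= 1, the ratio (f(k-1,1)^j - f(k-1,0)^j) / (f(k,1)^i - f(k,0)^i) converges, as k tends to infinity, to j * q^{j-i} / (gamma * i). Consequently, the transformed transition probabilities Q_{ij}^{(k)} = P_{ij} * (f(k-1,1)^j - f(k-1,0)^j)/(f(k,1)^i - f(k,0)^i), where P_{ij} is the coefficient of s^j in f(s)^i, converge to P_{ij} * j * q^{j-i}/(gamma * i) as k tends to infinity (the Q-process transition probabilities). -/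
/-!
Both orbits `f^[k] 0 ↑ q` and `f^[k] 1 ↓ q` converge to `q`: the first because `q` is the least
fixed point, the second because convexity of `f` together with `f 1 = 1 - ε < 1` leaves no fixed
point in `(q, 1]`. Being analytic, `f` is strictly differentiable at `q`, so its chord slopes over
`[f^[k] 0, f^[k] 1]` tend to `γ`, and those of `s ↦ s ^ n` tend to `n q ^ (n - 1)`. The ratio in
question is the chord slope of `s ^ j` at step `k - 1`, divided by the chord slope of `s ^ i` at
step `k` times the chord slope of `f` at step `k - 1`.
-/

open Filter Topology

theorem HasStrictDerivAt.tendsto_chord_slope {𝕜 ι : Type*} [NontriviallyNormedField 𝕜]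
    {f : 𝕜 → 𝕜} {f' x : 𝕜} {l : Filter ι} {a b : ι → 𝕜}
    (hf : HasStrictDerivAt f f' x)
    (ha : Tendsto a l (𝓝 x)) (hb : Tendsto b l (𝓝 x)) (hab : ∀ᶠ k in l, a k ≠ b k) :
    Tendsto (fun k => (f (a k) - f (b k)) / (a k - b k)) l (𝓝 f') := by
  have hsmall := ((hasDerivAtFilter_iff_isLittleO.1 hf).comp_tendsto
    (ha.prodMk_nhds hb)).tendsto_div_nhds_zero
  simpa using (hsmall.add_const f').congr' <| hab.mono fun k hk => by
    simp only [Function.comp_apply, smul_eq_mul]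
    field_simp [sub_ne_zero.2 hk]
    ring

theorem tendsto_sub_div_sub_iterate {𝕜 : Type*} [NontriviallyNormedField 𝕜]
    {f g h : 𝕜 → 𝕜} {f' g' h' q x y : 𝕜} (hf : HasStrictDerivAt f f' q)
    (hg : HasStrictDerivAt g g' q) (hh : HasStrictDerivAt h h' q) (hf' : f' ≠ 0) (hh' : h' ≠ 0)
    (hx : Tendsto (fun k => f^[k] x) atTop (𝓝 q))
    (hy : Tendsto (fun k => f^[k] y) atTop (𝓝 q))
    (hxy : ∀ k, f^[k] y ≠ f^[k] x) :
    Tendsto (fun k => (g (f^[k] y) - g (f^[k] x)) / (h (f^[k + 1] y) - h (f^[k + 1] x)))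
      atTop (𝓝 (g' / (h' * f'))) := by
  have hx' : Tendsto (fun k => f^[k + 1] x) atTop (𝓝 q) := (tendsto_add_atTop_iff_nat 1).2 hx
  have hy' : Tendsto (fun k => f^[k + 1] y) atTop (𝓝 q) := (tendsto_add_atTop_iff_nat 1).2 hy
  have hslope_f := hf.tendsto_chord_slope hy hx (.of_forall hxy)
  have hslope_g := hg.tendsto_chord_slope hy hx (.of_forall hxy)
  have hslope_h := hh.tendsto_chord_slope hy' hx' (.of_forall fun k => hxy (k + 1))
  refine (hslope_g.div (hslope_h.mul hslope_f) (mul_ne_zero hh' hf')).congr fun k => ?_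
  have hd : f^[k] y - f^[k] x ≠ 0 := sub_ne_zero.2 (hxy k)
  have hd' : f^[k + 1] y - f^[k + 1] x ≠ 0 := sub_ne_zero.2 (hxy (k + 1))
  simp only [Pi.div_apply, ← Function.iterate_succ_apply' f k]
  rw [div_mul_div_cancel₀ hd', div_div_div_cancel_right₀ hd]

section Iterate

variable {α : Type*} [ConditionallyCompleteLinearOrder α] [TopologicalSpace α] [OrderTopology α]
  {g : α → α} {a q : α}

theorem MonotoneOn.tendsto_iterate_of_le_apply (hmono : MonotoneOn g (Set.Icc a q)) (haq : a ≤ q)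
    (ha : a ≤ g a) (hq : g q = q) (hcont : ContinuousOn g (Set.Icc a q))
    (hfix : ∀ x ∈ Set.Icc a q, g x = x → x = q) :
    Tendsto (fun n => g^[n] a) atTop (𝓝 q) := by
  set u : ℕ → α := fun n => g^[n] a
  have hsucc (n : ℕ) : u (n + 1) = g (u n) := Function.iterate_succ_apply' g n a
  have hstep (n : ℕ) : u n ∈ Set.Icc a q ∧ u n ≤ u (n + 1) := by
    induction n with
    | zero => exact ⟨⟨le_rfl, haq⟩, ha⟩
    | succ n ih =>
      obtain ⟨hmem, hle⟩ := ih
      have hmem' : u (n + 1) ∈ Set.Icc a q :=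
        ⟨hmem.1.trans hle, hsucc n ▸ hq ▸ hmono hmem ⟨haq, le_rfl⟩ hmem.2⟩
      exact ⟨hmem', by rw [hsucc, hsucc (n + 1)]; exact hmono hmem hmem' hle⟩
  have hlim : Tendsto u atTop (𝓝 (⨆ n, u n)) :=
    tendsto_atTop_ciSup (monotone_nat_of_le_succ fun n => (hstep n).2)
      ⟨q, by rintro _ ⟨n, rfl⟩; exact (hstep n).1.2⟩
  have hL : (⨆ n, u n) ∈ Set.Icc a q :=
    isClosed_Icc.mem_of_tendsto hlim (.of_forall fun n => (hstep n).1)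
  have hfixL : g (⨆ n, u n) = ⨆ n, u n := by
    refine tendsto_nhds_unique ?_ ((tendsto_add_atTop_iff_nat 1).2 hlim)
    simp only [hsucc]
    exact (hcont _ hL).tendsto.comp
      (tendsto_nhdsWithin_iff.2 ⟨hlim, .of_forall fun n => (hstep n).1⟩)
  rwa [← hfix _ hL hfixL]

theorem MonotoneOn.tendsto_iterate_of_apply_le (hmono : MonotoneOn g (Set.Icc q a)) (hqa : q ≤ a)
    (ha : g a ≤ a) (hq : g q = q) (hcont : ContinuousOn g (Set.Icc q a))
    (hfix : ∀ x ∈ Set.Icc q a, g x = x → x = q) :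
    Tendsto (fun n => g^[n] a) atTop (𝓝 q) :=
  MonotoneOn.tendsto_iterate_of_le_apply (g := OrderDual.toDual ∘ g ∘ OrderDual.ofDual)
    (a := OrderDual.toDual a) (q := OrderDual.toDual q)
    (by rw [Set.Icc_toDual]; exact hmono.dual) hqa ha hq (by rw [Set.Icc_toDual]; exact hcont)
    (by rw [Set.Icc_toDual]; exact hfix)

end Iterate

theorem StrictMonoOn.iterate_s5 {β : Type*} [Preorder β] {g : β → β} {s : Set β}
    (hg : StrictMonoOn g s) (hs : Set.MapsTo g s s) (n : ℕ) : StrictMonoOn g^[n] s := by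
  induction n with
  | zero => exact strictMonoOn_id
  | succ n ih => rw [Function.iterate_succ]; exact ih.comp hg hs

theorem ConvexOn.apply_lt_self_of_mem_Ioc {g : ℝ → ℝ} {a b x : ℝ}
    (hg : ConvexOn ℝ (Set.Icc a b) g)
    (ha : g a = a) (hb : g b < b) (hx : x ∈ Set.Ioc a b) : g x < x := by
  obtain ⟨hax, hxb⟩ := hx
  set t := (x - a) / (b - a)
  have hba : 0 < b - a := by linarith
  have ht : 0 < t := div_pos (by linarith) hba
  have ht1 : t ≤ 1 := div_le_one_of_le₀ (by linarith) hba.le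
  have hxt : (1 - t) * a + t * b = x := by simp only [t]; field_simp; ring
  clear_value t
  have hab : a ≤ b := hax.le.trans hxb
  have hconv := hg.2 (Set.left_mem_Icc.2 hab) (Set.right_mem_Icc.2 hab) (sub_nonneg.2 ht1) ht.le
    (sub_add_cancel 1 t)
  rw [smul_eq_mul, smul_eq_mul, smul_eq_mul, smul_eq_mul, ha, hxt] at hconv
  linarith [mul_lt_mul_of_pos_left hb ht]

theorem tendsto_iterate_zero_of_forall_fixed_ge {g : ℝ → ℝ} {q : ℝ}
    (hmono : MonotoneOn g (Set.Icc 0 1)) (hcont : ContinuousOn g (Set.Icc 0 1)) (hg0 : 0 ≤ g 0)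
    (hq : q ∈ Set.Icc 0 1) (hfix : g q = q) (hmin : ∀ x ∈ Set.Icc 0 1, g x = x → q ≤ x) :
    Tendsto (fun n => g^[n] 0) atTop (𝓝 q) :=
  (hmono.mono (Set.Icc_subset_Icc_right hq.2)).tendsto_iterate_of_le_apply hq.1 hg0 hfix
    (hcont.mono (Set.Icc_subset_Icc_right hq.2))
    fun x hx hgx => le_antisymm hx.2 (hmin x ⟨hx.1, hx.2.trans hq.2⟩ hgx)

theorem ConvexOn.tendsto_iterate_one {g : ℝ → ℝ} {q : ℝ}
    (hconv : ConvexOn ℝ (Set.Icc 0 1) g)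
    (hmono : MonotoneOn g (Set.Icc 0 1)) (hcont : ContinuousOn g (Set.Icc 0 1))
    (hq : q ∈ Set.Icc 0 1) (hfix : g q = q) (hg1 : g 1 < 1) :
    Tendsto (fun n => g^[n] 1) atTop (𝓝 q) := by
  have hsub : Set.Icc q 1 ⊆ Set.Icc 0 1 := Set.Icc_subset_Icc_left hq.1
  refine (hmono.mono hsub).tendsto_iterate_of_apply_le hq.2 hg1.le hfix (hcont.mono hsub)
    fun x hx hgx => ?_
  by_contra hxq
  exact ((hconv.subset hsub (convex_Icc q 1)).apply_lt_self_of_mem_Ioc hfix hg1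
    ⟨lt_of_le_of_ne hx.1 (Ne.symm hxq), hx.2⟩).ne hgx

section PowerSeries

variable {p : ℕ → ℝ}

theorem summable_mul_pow_of_mem_Icc (hp : ∀ k, 0 ≤ p k) (hps : Summable p) {x : ℝ}
    (hx : x ∈ Set.Icc 0 1) : Summable fun k => p k * x ^ k :=
  hps.of_nonneg_of_le (fun k => mul_nonneg (hp k) (pow_nonneg hx.1 k))
    fun k => mul_le_of_le_one_right (hp k) (pow_le_one₀ hx.1 hx.2)

theorem analyticAt_tsum_mul_pow (hps : Summable p) {x : ℝ} (hx : |x| < 1) :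
    AnalyticAt ℝ (fun s => ∑' k, p k * s ^ k) x := by
  set P := FormalMultilinearSeries.ofScalars ℝ p
  have hP : (1 : ENNReal) ≤ P.radius := by
    simpa using P.le_radius_of_summable_norm (r := 1)
      (by simpa [P, FormalMultilinearSeries.ofScalars_norm] using hps.abs)
  have hsum : P.sum = fun s => ∑' k, p k * s ^ k := by
    rw [show P.sum = FormalMultilinearSeries.ofScalarsSum p from rfl,
      FormalMultilinearSeries.ofScalarsSum_eq_tsum]
    simp only [smul_eq_mul]
  rw [← hsum]
  exact (P.hasFPowerSeriesOnBall (zero_lt_one.trans_le hP)).analyticAt_of_mem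
    (Metric.mem_eball.2 (lt_of_lt_of_le (by simpa [edist_dist, Real.dist_eq] using hx) hP))

theorem continuousOn_tsum_mul_pow (hp : ∀ k, 0 ≤ p k) (hps : Summable p) :
    ContinuousOn (fun s => ∑' k, p k * s ^ k) (Set.Icc 0 1) :=
  continuousOn_tsum (fun k => (continuous_const.mul (continuous_pow k)).continuousOn) hps
    fun k x hx => by
      rw [norm_mul, norm_pow, Real.norm_of_nonneg (hp k), Real.norm_of_nonneg hx.1]
      exact mul_le_of_le_one_right (hp k) (pow_le_one₀ hx.1 hx.2)

theorem mapsTo_tsum_mul_pow (hp : ∀ k, 0 ≤ p k) (hps : Summable p) (h1 : ∑' k, p k ≤ 1) :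
    Set.MapsTo (fun s => ∑' k, p k * s ^ k) (Set.Icc 0 1) (Set.Icc 0 1) := fun _ hx =>
  ⟨tsum_nonneg fun k => mul_nonneg (hp k) (pow_nonneg hx.1 k),
    (Summable.tsum_le_tsum (fun k => mul_le_of_le_one_right (hp k) (pow_le_one₀ hx.1 hx.2))
      (summable_mul_pow_of_mem_Icc hp hps hx) hps).trans h1⟩

theorem strictMonoOn_tsum_mul_pow (hp : ∀ k, 0 ≤ p k) (hps : Summable p) {m : ℕ}
    (hm : m ≠ 0) (hpm : 0 < p m) : StrictMonoOn (fun s => ∑' k, p k * s ^ k) (Set.Icc 0 1) :=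
  fun _ hx _ hy hxy => Summable.tsum_lt_tsum (i := m)
    (fun k => mul_le_mul_of_nonneg_left (pow_le_pow_left₀ hx.1 hxy.le k) (hp k))
    (mul_lt_mul_of_pos_left (pow_lt_pow_left₀ hxy hx.1 hm) hpm)
    (summable_mul_pow_of_mem_Icc hp hps hx) (summable_mul_pow_of_mem_Icc hp hps hy)

theorem convexOn_tsum_mul_pow (hp : ∀ k, 0 ≤ p k) (hps : Summable p) :
    ConvexOn ℝ (Set.Icc 0 1) (fun s => ∑' k, p k * s ^ k) := by
  refine ⟨convex_Icc 0 1, fun x hx y hy a b ha hb hab => ?_⟩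
  have hsx := summable_mul_pow_of_mem_Icc hp hps hx
  have hsy := summable_mul_pow_of_mem_Icc hp hps hy
  simp only [smul_eq_mul]
  rw [← tsum_mul_left, ← tsum_mul_left, ← (hsx.mul_left a).tsum_add (hsy.mul_left b)]
  refine Summable.tsum_le_tsum (fun k => ?_)
    (summable_mul_pow_of_mem_Icc hp hps ((convex_Icc 0 1) hx hy ha hb hab))
    ((hsx.mul_left a).add (hsy.mul_left b))
  have hconv := (convexOn_pow k).2 (Set.mem_Ici.2 hx.1) (Set.mem_Ici.2 hy.1) ha hb hab
  simp only [smul_eq_mul] at hconv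
  linarith [mul_le_mul_of_nonneg_left hconv (hp k)]

theorem exists_pos_coeff_of_deriv_ne_zero (hp : ∀ k, 0 ≤ p k) {x : ℝ}
    (hx : deriv (fun s => ∑' k, p k * s ^ k) x ≠ 0) : ∃ m ≠ 0, 0 < p m := by
  by_contra! hzero
  have hconst : (fun s => ∑' k, p k * s ^ k) = fun _ => p 0 := by
    funext s
    rw [tsum_eq_single 0 fun k hk => by rw [le_antisymm (hzero k hk) (hp k), zero_mul]]
    simp
  simp [hconst] at hx

end PowerSeries

theorem stmt_5_general
    (p : ℕ → ℝ) (ε : ℝ) (f : ℝ → ℝ) (q γ : ℝ)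
    (hp : ∀ k, 0 ≤ p k) (hε : ε ∈ Set.Ioo (0 : ℝ) 1)
    (hsum : HasSum p (1 - ε))
    (hf : ∀ s : ℝ, f s = ∑' k, p k * s ^ k)
    (hq : q ∈ Set.Ioo (0 : ℝ) 1) (hfix : f q = q)
    (hqmin : ∀ x ∈ Set.Icc (0 : ℝ) 1, f x = x → q ≤ x)
    (hγ : γ = deriv f q) (hγpos : 0 < γ)
    (P : ℕ → ℕ → ℝ)
    (i j : ℕ) (hi : 1 ≤ i) (hj : 1 ≤ j) :
    Tendsto
      (fun k : ℕ =>
        (f^[k - 1] 1 ^ j - f^[k - 1] 0 ^ j) / (f^[k] 1 ^ i - f^[k] 0 ^ i))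
      atTop (nhds ((j : ℝ) * q ^ ((j : ℤ) - (i : ℤ)) / (γ * i))) ∧
    Tendsto
      (fun k : ℕ =>
        P i j *
          ((f^[k - 1] 1 ^ j - f^[k - 1] 0 ^ j) / (f^[k] 1 ^ i - f^[k] 0 ^ i)))
      atTop (nhds (P i j * ((j : ℝ) * q ^ ((j : ℤ) - (i : ℤ)) / (γ * i)))) := by
  obtain ⟨hq0, hq1⟩ := hq
  have hps := hsum.summable
  have hfun : f = fun s => ∑' k, p k * s ^ k := funext hf
  have hstrict : HasStrictDerivAt f γ q := hγ ▸ hfun ▸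
    (analyticAt_tsum_mul_pow hps (by rwa [abs_of_pos hq0])).hasStrictDerivAt
  obtain ⟨m, hm, hpm⟩ := exists_pos_coeff_of_deriv_ne_zero hp (hfun ▸ hγ ▸ hγpos.ne')
  have hmono : StrictMonoOn f (Set.Icc 0 1) := hfun ▸ strictMonoOn_tsum_mul_pow hp hps hm hpm
  have hcont : ContinuousOn f (Set.Icc 0 1) := hfun ▸ continuousOn_tsum_mul_pow hp hps
  have hmaps : Set.MapsTo f (Set.Icc 0 1) (Set.Icc 0 1) :=
    hfun ▸ mapsTo_tsum_mul_pow hp hps (by linarith [hsum.tsum_eq, hε.1])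
  have hlow := tendsto_iterate_zero_of_forall_fixed_ge hmono.monotoneOn hcont
    (hmaps ⟨le_rfl, zero_le_one⟩).1 ⟨hq0.le, hq1.le⟩ hfix hqmin
  have hconv : ConvexOn ℝ (Set.Icc 0 1) f := hfun ▸ convexOn_tsum_mul_pow hp hps
  have hf1 : f 1 < 1 := by simpa [hf, hsum.tsum_eq] using hε.1
  have hup := hconv.tendsto_iterate_one hmono.monotoneOn hcont ⟨hq0.le, hq1.le⟩ hfix hf1
  have hne (k : ℕ) : f^[k] 1 ≠ f^[k] 0 :=
    (hmono.iterate_s5 hmaps k ⟨le_rfl, zero_le_one⟩ ⟨zero_le_one, le_rfl⟩ zero_lt_one).ne'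
  have hratio := tendsto_sub_div_sub_iterate hstrict (hasStrictDerivAt_pow j q)
    (hasStrictDerivAt_pow i q) hγpos.ne' (by positivity) hlow hup hne
  have hval :
      (j : ℝ) * q ^ (j - 1) / (i * q ^ (i - 1) * γ) = j * q ^ ((j : ℤ) - i) / (γ * i) := by
    have hqj : q ^ j = q ^ (j - 1) * q := by rw [← pow_succ, Nat.sub_add_cancel hj]
    have hqi : q ^ i = q ^ (i - 1) * q := by rw [← pow_succ, Nat.sub_add_cancel hi]
    rw [zpow_sub₀ hq0.ne', zpow_natCast, zpow_natCast, hqj, hqi]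
    field_simp
  have hshifted :
      Tendsto (fun k => (f^[k - 1] 1 ^ j - f^[k - 1] 0 ^ j) / (f^[k] 1 ^ i - f^[k] 0 ^ i))
      atTop (𝓝 (j * q ^ ((j : ℤ) - i) / (γ * i))) := by
    rw [← tendsto_add_atTop_iff_nat 1]
    simpa only [Nat.add_sub_cancel, hval] using hratio
  exact ⟨hshifted, hshifted.const_mul _⟩

/-- For a defective pgf `f` with smallest fixed point `q ∈ (0,1)` and `γ = f'(q) > 0`,
for all `i, j ≥ 1`,
`(f^[k-1] 1 ^ j - f^[k-1] 0 ^ j) / (f^[k] 1 ^ i - f^[k] 0 ^ i) → j q^{j-i} / (γ i)`,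
and consequently the transformed transition probabilities
`Q_{ij}^{(k)} = P_{ij} (f^[k-1] 1 ^ j - f^[k-1] 0 ^ j)/(f^[k] 1 ^ i - f^[k] 0 ^ i)`
converge to the Q-process transition probabilities `P_{ij} j q^{j-i}/(γ i)`,
where `P i j` is the coefficient of `s^j` in `f(s)^i`. -/
theorem stmt_5
    (p : ℕ → ℝ) (ε : ℝ) (f : ℝ → ℝ) (q γ : ℝ)
    (hp : ∀ k, 0 ≤ p k) (hε : ε ∈ Set.Ioo (0 : ℝ) 1)
    (hsum : HasSum p (1 - ε))
    (hf : ∀ s : ℝ, f s = ∑' k, p k * s ^ k)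
    (hq : q ∈ Set.Ioo (0 : ℝ) 1) (hfix : f q = q)
    (hqmin : ∀ x ∈ Set.Icc (0 : ℝ) 1, f x = x → q ≤ x)
    (hγ : γ = deriv f q) (hγpos : 0 < γ)
    (P : ℕ → ℕ → ℝ) (hPnonneg : ∀ i j, 0 ≤ P i j)
    (hP : ∀ i : ℕ, ∀ s ∈ Set.Icc (0 : ℝ) 1, f s ^ i = ∑' j, P i j * s ^ j)
    (i j : ℕ) (hi : 1 ≤ i) (hj : 1 ≤ j) :
    Tendsto
      (fun k : ℕ =>
        (f^[k - 1] 1 ^ j - f^[k - 1] 0 ^ j) / (f^[k] 1 ^ i - f^[k] 0 ^ i))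
      atTop (nhds ((j : ℝ) * q ^ ((j : ℤ) - (i : ℤ)) / (γ * i))) ∧
    Tendsto
      (fun k : ℕ =>
        P i j *
          ((f^[k - 1] 1 ^ j - f^[k - 1] 0 ^ j) / (f^[k] 1 ^ i - f^[k] 0 ^ i)))
      atTop (nhds (P i j * ((j : ℝ) * q ^ ((j : ℤ) - (i : ℤ)) / (γ * i)))) :=
  stmt_5_general p ε f q γ hp hε hsum hf hq hfix hqmin hγ hγpos P i j hi hj
end

section
/- Let f be a defective probability generating function with gamma = 0, i.e. l = min{k : p_k > 0} >= 2, and let R be the limit function R(s) = prod_{j=1}^infty b(f(j-1,s))^{l^{-j}}. Set rho = p_l^{1/(l-1)} * R(1). Then rho lies in (0,1) and (f(t,1) - f(t,0)) / (p_l^{-1/(l-1)} * rho^{l^t}) tends to 1 as t tends to infinity. Probabilistically, the absorption time T of the defective Galton-Watson process with reproduction law f satisfies P(T > t) ~ p_l^{-1/(l-1)} * rho^{l^t}. -/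
open Filter Finset Topology

/-! Write `x t = f^[t] 1` and `β t = b (x t)`, so that `x (t+1) = p_l x_t^l β_t`. Taking logarithms
linearises this recursion: with `A = log p_l / (l-1)` and `Q t = ∑_{j<t} l^{-(j+1)} log β_j` one gets
`log x_t = l^t (A + Q t) - A`, while `R(1) = exp Q(∞)`. Hence the ratio in the theorem is
`exp (-l^t (Q(∞) - Q t))`. Since `0 ≤ log β_t ≤ (β_t - 1) = O(x_t)` and `x_t ≤ (1-ε)^t`, the series
`∑ log β_j` converges, and `l^t (Q(∞) - Q t) ≤ ∑_{j ≥ t} log β_j → 0`. Finally `ρ < 1` because the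
ratio tends to `1` while `x_t → 0`. -/

section PowerSeries

variable {p : ℕ → ℝ} {s : ℝ}

theorem summable_mul_pow_of_le_one (hp : ∀ k, 0 ≤ p k) (hps : Summable p) (hs0 : 0 ≤ s)
    (hs1 : s ≤ 1) : Summable fun k => p k * s ^ k :=
  hps.of_nonneg_of_le (fun k => mul_nonneg (hp k) (pow_nonneg hs0 k))
    fun k => mul_le_of_le_one_right (hp k) (pow_le_one₀ hs0 hs1)

theorem mul_pow_le_tsum_mul_pow (hp : ∀ k, 0 ≤ p k) (hps : Summable p) (hs0 : 0 ≤ s)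
    (hs1 : s ≤ 1) (n : ℕ) : p n * s ^ n ≤ ∑' k, p k * s ^ k :=
  (summable_mul_pow_of_le_one hp hps hs0 hs1).le_tsum n fun k _ =>
    mul_nonneg (hp k) (pow_nonneg hs0 k)

theorem tsum_mul_pow_le_mul_pow {σ : ℝ} {l : ℕ} (hp : ∀ k, 0 ≤ p k) (hsum : HasSum p σ)
    (hlmin : ∀ k < l, p k = 0) (hs0 : 0 ≤ s) (hs1 : s ≤ 1) :
    ∑' k, p k * s ^ k ≤ σ * s ^ l := by
  rw [← hsum.tsum_eq, ← tsum_mul_right]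
  refine (summable_mul_pow_of_le_one hp hsum.summable hs0 hs1).tsum_le_tsum (fun k => ?_)
    (hsum.summable.mul_right _)
  rcases lt_or_ge k l with hk | hk
  · simp [hlmin k hk]
  · exact mul_le_mul_of_nonneg_left (pow_le_pow_of_le_one hs0 hs1 hk) (hp k)

theorem tsum_mul_pow_le_add_mul_pow_succ {σ : ℝ} {l : ℕ} (hp : ∀ k, 0 ≤ p k)
    (hsum : HasSum p σ) (hlmin : ∀ k < l, p k = 0) (hs0 : 0 ≤ s) (hs1 : s ≤ 1) :
    ∑' k, p k * s ^ k ≤ p l * s ^ l + σ * s ^ (l + 1) := by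
  have hle : ∀ k, p k * s ^ k ≤ (if k = l then p l * s ^ l else 0) + p k * s ^ (l + 1) := by
    intro k
    have h0 : 0 ≤ p k * s ^ (l + 1) := mul_nonneg (hp k) (pow_nonneg hs0 _)
    rcases lt_trichotomy k l with hk | rfl | hk
    · simp [hlmin k hk, hk.ne]
    · simpa using h0
    · simpa [hk.ne'] using mul_le_mul_of_nonneg_left (pow_le_pow_of_le_one hs0 hs1 hk) (hp k)
  calc ∑' k, p k * s ^ k
      ≤ ∑' k, ((if k = l then p l * s ^ l else 0) + p k * s ^ (l + 1)) :=
        (summable_mul_pow_of_le_one hp hsum.summable hs0 hs1).tsum_le_tsum hle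
          ((hasSum_ite_eq l _).summable.add (hsum.summable.mul_right _))
    _ = p l * s ^ l + σ * s ^ (l + 1) :=
        ((hasSum_ite_eq l _).add (hsum.mul_right _)).tsum_eq

end PowerSeries

theorem iterate_pos_and_le_pow_mul {f : ℝ → ℝ} {r s : ℝ} (hr0 : 0 ≤ r) (hr1 : r ≤ 1)
    (hpos : ∀ y ∈ Set.Ioc (0 : ℝ) 1, 0 < f y) (hle : ∀ y ∈ Set.Ioc (0 : ℝ) 1, f y ≤ r * y)
    (hs : s ∈ Set.Ioc (0 : ℝ) 1) (t : ℕ) : 0 < f^[t] s ∧ f^[t] s ≤ r ^ t * s := by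
  induction t with
  | zero => simpa using hs.1
  | succ t ih =>
    have hmem : f^[t] s ∈ Set.Ioc (0 : ℝ) 1 :=
      ⟨ih.1, ih.2.trans (mul_le_one₀ (pow_le_one₀ hr0 hr1) hs.1.le hs.2)⟩
    rw [Function.iterate_succ_apply', pow_succ', mul_assoc]
    exact ⟨hpos _ hmem, (hle _ hmem).trans (mul_le_mul_of_nonneg_left ih.2 hr0)⟩

theorem log_div_mul_pow_le {F c K s : ℝ} {l : ℕ} (hc : 0 < c) (hs : 0 < s)
    (hlow : c * s ^ l ≤ F) (hupp : F ≤ c * s ^ l + K * s ^ (l + 1)) :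
    Real.log (F / (c * s ^ l)) ≤ K / c * s := by
  have hd : 0 < c * s ^ l := by positivity
  calc Real.log (F / (c * s ^ l)) ≤ F / (c * s ^ l) - 1 :=
        Real.log_le_sub_one_of_pos (div_pos (hd.trans_le hlow) hd)
    _ ≤ K / c * s := by
        rw [div_sub_one hd.ne', div_le_iff₀ hd]
        calc F - c * s ^ l ≤ K * s ^ (l + 1) := by linarith
          _ = K / c * s * (c * s ^ l) := by field_simp; ring

section PowerRecursion

variable {x β : ℕ → ℝ} {c : ℝ} {l : ℕ}

theorem log_eq_of_succ_eq_mul_pow_mul (hl : 2 ≤ l) (hc : 0 < c) (hx : ∀ t, 0 < x t)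
    (hβ : ∀ t, 0 < β t) (hx0 : x 0 = 1) (hrec : ∀ t, x (t + 1) = c * x t ^ l * β t) (t : ℕ) :
    Real.log (x t) = l ^ t * (Real.log c / (l - 1) +
      ∑ j ∈ range t, Real.log (β j) / (l : ℝ) ^ (j + 1)) - Real.log c / (l - 1) := by
  induction t with
  | zero => simp [hx0]
  | succ t ih =>
    have hl0 : (l : ℝ) ≠ 0 := by positivity
    have hl1 : (l : ℝ) - 1 ≠ 0 := sub_ne_zero.2 (by exact_mod_cast (by omega : l ≠ 1))
    rw [hrec, Real.log_mul (mul_pos hc (pow_pos (hx t) l)).ne' (hβ t).ne',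
      Real.log_mul hc.ne' (pow_pos (hx t) l).ne', Real.log_pow, ih, sum_range_succ]
    generalize ∑ j ∈ range t, Real.log (β j) / (l : ℝ) ^ (j + 1) = Q
    rw [pow_succ]
    field_simp
    ring

theorem prod_rpow_inv_pow_eq_exp (hβ : ∀ t, 0 < β t) (t : ℕ) :
    ∏ j ∈ range t, β j ^ (((l : ℝ) ^ (j + 1))⁻¹) =
      Real.exp (∑ j ∈ range t, Real.log (β j) / (l : ℝ) ^ (j + 1)) := by
  rw [Real.exp_sum]
  exact prod_congr rfl fun j _ => by rw [Real.rpow_def_of_pos (hβ j), div_eq_mul_inv]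

/-- The factor `l^t` is absorbed because `l^t / l^(j+1) ≤ 1` on the tail `j ≥ t`. -/
theorem tendsto_pow_mul_tsum_sub_sum {a : ℕ → ℝ} {L : ℝ} (hL : 1 ≤ L) (ha : ∀ j, 0 ≤ a j)
    (hs : Summable a) :
    Tendsto (fun t : ℕ => L ^ t * (∑' j, a j / L ^ (j + 1) - ∑ j ∈ range t, a j / L ^ (j + 1)))
      atTop (𝓝 0) := by
  have hL0 : 0 < L := one_pos.trans_le hL
  have hs' : Summable fun j => a j / L ^ (j + 1) :=
    hs.of_nonneg_of_le (fun j => div_nonneg (ha j) (by positivity))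
      fun j => div_le_self (ha j) (one_le_pow₀ hL)
  have htail : ∀ t, L ^ t * (∑' j, a j / L ^ (j + 1) - ∑ j ∈ range t, a j / L ^ (j + 1)) =
      ∑' j, a (j + t) / L ^ (j + 1) := by
    intro t
    rw [← hs'.sum_add_tsum_nat_add t, add_sub_cancel_left, ← tsum_mul_left]
    exact tsum_congr fun j => by rw [pow_add]; field_simp; ring
  simp_rw [htail]
  refine squeeze_zero (fun t => tsum_nonneg fun j => div_nonneg (ha _) (by positivity))
    (fun t => ?_) (tendsto_sum_nat_add a)
  have hle (j : ℕ) : a (j + t) / L ^ (j + 1) ≤ a (j + t) := div_le_self (ha _) (one_le_pow₀ hL)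
  have htail_sum : Summable fun j => a (j + t) := (summable_nat_add_iff t).2 hs
  exact (htail_sum.of_nonneg_of_le (fun j => div_nonneg (ha _) (by positivity)) hle).tsum_le_tsum
    hle htail_sum

theorem tendsto_div_mul_pow_of_succ_eq_mul_pow_mul {R : ℝ} (hl : 2 ≤ l) (hc : 0 < c)
    (hx : ∀ t, 0 < x t) (hβ : ∀ t, 1 ≤ β t) (hx0 : x 0 = 1)
    (hrec : ∀ t, x (t + 1) = c * x t ^ l * β t) (hsum : Summable fun t => Real.log (β t))
    (hR : Tendsto (fun t => ∏ j ∈ range t, β j ^ (((l : ℝ) ^ (j + 1))⁻¹)) atTop (𝓝 R)) :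
    Tendsto (fun t => x t / (c ^ (-(1 : ℝ) / (l - 1)) * (c ^ ((1 : ℝ) / (l - 1)) * R) ^ l ^ t))
      atTop (𝓝 1) := by
  have hl1 : (1 : ℝ) < l := by exact_mod_cast hl
  have hβ0 : ∀ t, 0 < β t := fun t => one_pos.trans_le (hβ t)
  have hlog := tendsto_pow_mul_tsum_sub_sum hl1.le (fun j => Real.log_nonneg (hβ j)) hsum
  set S := ∑' j, Real.log (β j) / (l : ℝ) ^ (j + 1)
  have hRS : R = Real.exp S := by
    refine tendsto_nhds_unique hR ?_
    simp_rw [prod_rpow_inv_pow_eq_exp hβ0]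
    exact (Real.continuous_exp.tendsto S).comp
      (hsum.of_nonneg_of_le (fun j => div_nonneg (Real.log_nonneg (hβ j)) (by positivity))
        fun j => div_le_self (Real.log_nonneg (hβ j)) (one_le_pow₀ hl1.le)).hasSum.tendsto_sum_nat
  have hratio : ∀ t, x t / (c ^ (-(1 : ℝ) / (l - 1)) * (c ^ ((1 : ℝ) / (l - 1)) * R) ^ l ^ t) =
      Real.exp (-((l : ℝ) ^ t * (S - ∑ j ∈ range t, Real.log (β j) / (l : ℝ) ^ (j + 1)))) := by
    intro t
    rw [← Real.exp_log (hx t), log_eq_of_succ_eq_mul_pow_mul hl hc hx hβ0 hx0 hrec t, hRS,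
      Real.rpow_def_of_pos hc, Real.rpow_def_of_pos hc, ← Real.exp_add, ← Real.exp_nat_mul,
      ← Real.exp_add, ← Real.exp_sub]
    generalize ∑ j ∈ range t, Real.log (β j) / (l : ℝ) ^ (j + 1) = Q
    congr 1
    push_cast
    ring
  simp_rw [hratio]
  simpa [Function.comp_def] using (Real.continuous_exp.tendsto 0).comp (by simpa using hlog.neg)

end PowerRecursion

theorem lt_one_of_tendsto_div_mul_pow {x : ℕ → ℝ} {n : ℕ → ℕ} {C ρ : ℝ} (hC : 0 < C)
    (hx0 : ∀ t, 0 ≤ x t) (hx : Tendsto x atTop (𝓝 0))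
    (h : Tendsto (fun t => x t / (C * ρ ^ n t)) atTop (𝓝 1)) : ρ < 1 := by
  by_contra! hρ
  have hzero : Tendsto (fun t => x t / (C * ρ ^ n t)) atTop (𝓝 0) :=
    squeeze_zero (fun t => div_nonneg (hx0 t) (mul_pos hC (pow_pos (one_pos.trans_le hρ) _)).le)
      (fun t => div_le_div_of_nonneg_left (hx0 t) hC
        (le_mul_of_one_le_right hC.le (one_le_pow₀ hρ)))
      (by simpa using hx.div_const C)
  exact one_ne_zero (tendsto_nhds_unique h hzero)

theorem stmt_6_general
    (p : ℕ → ℝ) (ε : ℝ) (f : ℝ → ℝ) (l : ℕ) (b R : ℝ → ℝ) (ρ : ℝ)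
    (hp : ∀ k, 0 ≤ p k) (hε : ε ∈ Set.Ioo (0 : ℝ) 1)
    (hsum : HasSum p (1 - ε))
    (hf : ∀ s : ℝ, f s = ∑' k, p k * s ^ k)
    (hl : 2 ≤ l) (hpl : 0 < p l) (hlmin : ∀ k, k < l → p k = 0)
    (hb : ∀ s : ℝ, s ≠ 0 → b s = f s / (p l * s ^ l))
    (hR : ∀ s ∈ Set.Icc (0 : ℝ) 1,
        Tendsto
          (fun t : ℕ => ∏ j ∈ range t, b (f^[j] s) ^ (((l : ℝ) ^ (j + 1))⁻¹))
          atTop (nhds (R s)))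
    (hρ : ρ = p l ^ ((1 : ℝ) / ((l : ℝ) - 1)) * R 1) :
    ρ ∈ Set.Ioo (0 : ℝ) 1 ∧
    Tendsto
      (fun t : ℕ =>
        (f^[t] 1 - f^[t] 0) /
          (p l ^ (-(1 : ℝ) / ((l : ℝ) - 1)) * ρ ^ l ^ t))
      atTop (nhds 1) := by
  obtain ⟨hε0, hε1⟩ := hε
  have hlow (s : ℝ) (hs : s ∈ Set.Icc (0 : ℝ) 1) : p l * s ^ l ≤ f s :=
    hf s ▸ mul_pow_le_tsum_mul_pow hp hsum.summable hs.1 hs.2 l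
  have hupp (s : ℝ) (hs : s ∈ Set.Icc (0 : ℝ) 1) : f s ≤ p l * s ^ l + (1 - ε) * s ^ (l + 1) :=
    hf s ▸ tsum_mul_pow_le_add_mul_pow_succ hp hsum hlmin hs.1 hs.2
  have hlin (s : ℝ) (hs : s ∈ Set.Icc (0 : ℝ) 1) : f s ≤ (1 - ε) * s :=
    (hf s ▸ tsum_mul_pow_le_mul_pow hp hsum hlmin hs.1 hs.2).trans
      (mul_le_mul_of_nonneg_left (pow_le_of_le_one hs.1 hs.2 (by omega)) (by linarith))
  have horbit (t : ℕ) : 0 < f^[t] 1 ∧ f^[t] 1 ≤ (1 - ε) ^ t := by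
    simpa using iterate_pos_and_le_pow_mul (by linarith) (by linarith)
      (fun y hy => (mul_pos hpl (pow_pos hy.1 l)).trans_le (hlow y (Set.Ioc_subset_Icc_self hy)))
      (fun y hy => hlin y (Set.Ioc_subset_Icc_self hy)) (Set.right_mem_Ioc.2 one_pos) t
  have hmem (t : ℕ) : f^[t] 1 ∈ Set.Icc (0 : ℝ) 1 :=
    ⟨(horbit t).1.le, (horbit t).2.trans (pow_le_one₀ (by linarith) (by linarith))⟩
  have hβ (t : ℕ) : b (f^[t] 1) = f (f^[t] 1) / (p l * (f^[t] 1) ^ l) := hb _ (horbit t).1.ne'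
  have hβ1 (t : ℕ) : 1 ≤ b (f^[t] 1) := by
    rw [hβ, one_le_div (mul_pos hpl (pow_pos (horbit t).1 l))]
    exact hlow _ (hmem t)
  have hrec (t : ℕ) : f^[t + 1] 1 = p l * (f^[t] 1) ^ l * b (f^[t] 1) := by
    rw [hβ, mul_div_cancel₀ _ (mul_pos hpl (pow_pos (horbit t).1 l)).ne',
      Function.iterate_succ_apply']
  have hlogβ (t : ℕ) : Real.log (b (f^[t] 1)) ≤ (1 - ε) / p l * (1 - ε) ^ t := by
    rw [hβ]
    exact (log_div_mul_pow_le hpl (horbit t).1 (hlow _ (hmem t)) (hupp _ (hmem t))).trans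
      (mul_le_mul_of_nonneg_left (horbit t).2 (div_nonneg (by linarith) hpl.le))
  have hsumlog : Summable fun t => Real.log (b (f^[t] 1)) :=
    ((summable_geometric_of_lt_one (r := 1 - ε) (by linarith) (by linarith)).mul_left _
      ).of_nonneg_of_le (fun t => Real.log_nonneg (hβ1 t)) hlogβ
  have hR1 := hR 1 (Set.right_mem_Icc.2 zero_le_one)
  have hmain := hρ ▸ tendsto_div_mul_pow_of_succ_eq_mul_pow_mul hl hpl (fun t => (horbit t).1) hβ1
    rfl hrec hsumlog hR1
  have hρ0 : 0 < ρ := hρ ▸ mul_pos (Real.rpow_pos_of_pos hpl _) (one_pos.trans_le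
    (ge_of_tendsto' hR1 fun t => one_le_prod fun j _ => Real.one_le_rpow (hβ1 j) (by positivity)))
  have hf0 : f 0 = 0 := le_antisymm (by simpa using hlin 0 (Set.left_mem_Icc.2 zero_le_one))
    (by simpa [zero_pow (by omega : l ≠ 0)] using hlow 0 (Set.left_mem_Icc.2 zero_le_one))
  refine ⟨⟨hρ0, lt_one_of_tendsto_div_mul_pow (Real.rpow_pos_of_pos hpl _)
    (fun t => (horbit t).1.le) (squeeze_zero (fun t => (horbit t).1.le) (fun t => (horbit t).2)
      (tendsto_pow_atTop_nhds_zero_of_lt_one (by linarith) (by linarith))) hmain⟩, ?_⟩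
  simpa [Function.iterate_fixed hf0] using hmain

/-- Relation (8): for a defective pgf `f` with `l = min{k : p_k > 0} ≥ 2` (i.e. `γ = 0`)
and limit function `R`, the number `ρ = p_l^{1/(l-1)} R(1)` lies in `(0,1)` and
`P(T > t) = f^[t] 1 - f^[t] 0 ∼ p_l^{-1/(l-1)} ρ^{l^t}` as `t → ∞`. -/
theorem stmt_6
    (p : ℕ → ℝ) (ε : ℝ) (f : ℝ → ℝ) (l : ℕ) (b R : ℝ → ℝ) (ρ : ℝ)
    (hp : ∀ k, 0 ≤ p k) (hε : ε ∈ Set.Ioo (0 : ℝ) 1)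
    (hsum : HasSum p (1 - ε))
    (hf : ∀ s : ℝ, f s = ∑' k, p k * s ^ k)
    (hl : 2 ≤ l) (hpl : 0 < p l) (hlmin : ∀ k, k < l → p k = 0)
    (hb : ∀ s : ℝ, s ≠ 0 → b s = f s / (p l * s ^ l)) (hb0 : b 0 = 1)
    (hR : ∀ s ∈ Set.Icc (0 : ℝ) 1,
        Tendsto
          (fun t : ℕ => ∏ j ∈ range t, b (f^[j] s) ^ (((l : ℝ) ^ (j + 1))⁻¹))
          atTop (nhds (R s)))
    (hρ : ρ = p l ^ ((1 : ℝ) / ((l : ℝ) - 1)) * R 1) :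
    ρ ∈ Set.Ioo (0 : ℝ) 1 ∧
    Tendsto
      (fun t : ℕ =>
        (f^[t] 1 - f^[t] 0) /
          (p l ^ (-(1 : ℝ) / ((l : ℝ) - 1)) * ρ ^ l ^ t))
      atTop (nhds 1) :=
  stmt_6_general p ε f l b R ρ hp hε hsum hf hl hpl hlmin hb hR hρ
end

section
/- Let fhat be a proper probability generating function with mean mhat = fhat'(1) in (1, infinity), smallest fixed point qhat in [0,1), and iterates fhat(t,s). Suppose C : N -> (0, infinity) satisfies C(t) -> infinity, and Psi : [0,infinity) -> (0,1] is continuous, nonincreasing, and satisfies fhat(t, exp(-lambda/C(t))) -> qhat + (1-qhat)*Psi(lambda) as t -> infinity for every lambda >= 0. For r > 1 define f_r(s) = r * fhat(s/r) (a defective generating function) with iterates f_r(t,s) = r * fhat(t, s/r). Let (r_n) with r_n > 1 and (t_n) with t_n -> infinity satisfy (r_n - 1)*C(t_n) -> x for some x in (0,infinity). Then: (i) f_{r_n}(t_n, 1) - f_{r_n}(t_n, 0) converges to (1 - qhat)*Psi(x); and (ii) for every lambda >= 0, (f_{r_n}(t_n, exp(-lambda/C(t_n))) - f_{r_n}(t_n,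 0)) / (f_{r_n}(t_n, 1) - f_{r_n}(t_n, 0)) converges to Psi(lambda + x)/Psi(x). Probabilistically, P(T_n > t_n) -> (1-qhat)Psi(x) and E(exp(-lambda Z_n(t_n)/C(t_n)) | T_n > t_n) -> Psi(lambda+x)/Psi(x) for the defective Galton-Watson processes Z_n with reproduction laws f_{r_n}. -/
open Filter Finset

section Aux

variable {phat : ℕ → ℝ} {fhat : ℝ → ℝ} {qhat mhat : ℝ}

lemma aux_summable (hphat : ∀ k, 0 ≤ phat k) (hsum : HasSum phat 1)
    {s : ℝ} (hs : s ∈ Set.Icc (0:ℝ) 1) : Summable (fun k => phat k * s ^ k) :=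
  Summable.of_nonneg_of_le (fun k => mul_nonneg (hphat k) (pow_nonneg hs.1 k))
    (fun k => mul_le_of_le_one_right (hphat k) (pow_le_one₀ hs.1 hs.2)) hsum.summable

lemma aux_fhat_one (hsum : HasSum phat 1)
    (hfhat : ∀ s : ℝ, fhat s = ∑' k, phat k * s ^ k) : fhat 1 = 1 := by
  rw [hfhat]
  simpa using hsum.tsum_eq

lemma aux_fhat_mono (hphat : ∀ k, 0 ≤ phat k) (hsum : HasSum phat 1)
    (hfhat : ∀ s : ℝ, fhat s = ∑' k, phat k * s ^ k)
    {a b : ℝ} (ha : 0 ≤ a) (hab : a ≤ b) (hb : b ≤ 1) : fhat a ≤ fhat b := by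
  rw [hfhat a, hfhat b]
  exact Summable.tsum_le_tsum
    (fun k => mul_le_mul_of_nonneg_left (pow_le_pow_left₀ ha hab k) (hphat k))
    (aux_summable hphat hsum ⟨ha, hab.trans hb⟩)
    (aux_summable hphat hsum ⟨ha.trans hab, hb⟩)

lemma aux_fhat_mem (hphat : ∀ k, 0 ≤ phat k) (hsum : HasSum phat 1)
    (hfhat : ∀ s : ℝ, fhat s = ∑' k, phat k * s ^ k)
    {s : ℝ} (hs : s ∈ Set.Icc (0:ℝ) 1) : fhat s ∈ Set.Icc (0:ℝ) 1 := by
  constructor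
  · rw [hfhat]
    exact tsum_nonneg fun k => mul_nonneg (hphat k) (pow_nonneg hs.1 k)
  · calc fhat s ≤ fhat 1 := aux_fhat_mono hphat hsum hfhat hs.1 hs.2 le_rfl
    _ = 1 := aux_fhat_one hsum hfhat

lemma aux_iter_mem (hphat : ∀ k, 0 ≤ phat k) (hsum : HasSum phat 1)
    (hfhat : ∀ s : ℝ, fhat s = ∑' k, phat k * s ^ k)
    (T : ℕ) {s : ℝ} (hs : s ∈ Set.Icc (0:ℝ) 1) : fhat^[T] s ∈ Set.Icc (0:ℝ) 1 := by
  induction T with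
  | zero => simpa using hs
  | succ T ih =>
    rw [Function.iterate_succ_apply']
    exact aux_fhat_mem hphat hsum hfhat ih

lemma aux_iter_mono (hphat : ∀ k, 0 ≤ phat k) (hsum : HasSum phat 1)
    (hfhat : ∀ s : ℝ, fhat s = ∑' k, phat k * s ^ k)
    (T : ℕ) {a b : ℝ} (ha : 0 ≤ a) (hab : a ≤ b) (hb : b ≤ 1) :
    fhat^[T] a ≤ fhat^[T] b := by
  induction T with
  | zero => simpa using hab
  | succ T ih =>
    rw [Function.iterate_succ_apply', Function.iterate_succ_apply']
    have hA := aux_iter_mem hphat hsum hfhat T (⟨ha, hab.trans hb⟩ : a ∈ Set.Icc (0:ℝ) 1)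
    have hB := aux_iter_mem hphat hsum hfhat T (⟨ha.trans hab, hb⟩ : b ∈ Set.Icc (0:ℝ) 1)
    exact aux_fhat_mono hphat hsum hfhat hA.1 ih hB.2

lemma aux_pow_abs_sub {a b : ℝ} (ha : a ∈ Set.Icc (0:ℝ) 1) (hb : b ∈ Set.Icc (0:ℝ) 1)
    (k : ℕ) : |a ^ k - b ^ k| ≤ k * |a - b| := by
  induction k with
  | zero => simp
  | succ k ih =>
    have h1 : a ^ (k+1) - b ^ (k+1) = a * (a ^ k - b ^ k) + (a - b) * b ^ k := by ring
    have hbk : |b ^ k| ≤ 1 := by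
      rw [abs_pow, abs_of_nonneg hb.1]
      exact pow_le_one₀ hb.1 hb.2
    calc |a ^ (k+1) - b ^ (k+1)| = |a * (a ^ k - b ^ k) + (a - b) * b ^ k| := by rw [h1]
      _ ≤ |a * (a ^ k - b ^ k)| + |(a - b) * b ^ k| := abs_add_le _ _
      _ = |a| * |a ^ k - b ^ k| + |a - b| * |b ^ k| := by rw [abs_mul, abs_mul]
      _ ≤ 1 * (k * |a - b|) + |a - b| * 1 := by
          refine add_le_add (mul_le_mul ?_ ih (abs_nonneg _) zero_le_one)
            (mul_le_mul_of_nonneg_left hbk (abs_nonneg _))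
          rw [abs_of_nonneg ha.1]; exact ha.2
      _ = ((k+1 : ℕ) : ℝ) * |a - b| := by push_cast; ring

lemma aux_fhat_lip (hphat : ∀ k, 0 ≤ phat k) (hsum : HasSum phat 1)
    (hfhat : ∀ s : ℝ, fhat s = ∑' k, phat k * s ^ k)
    (hmhat : HasSum (fun k : ℕ => (k : ℝ) * phat k) mhat)
    {a b : ℝ} (ha : a ∈ Set.Icc (0:ℝ) 1) (hb : b ∈ Set.Icc (0:ℝ) 1) :
    |fhat a - fhat b| ≤ mhat * |a - b| := by
  have hsa := aux_summable hphat hsum ha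
  have hsb := aux_summable hphat hsum hb
  have key : ∀ k : ℕ, |phat k * a ^ k - phat k * b ^ k| ≤ (k : ℝ) * phat k * |a - b| := by
    intro k
    rw [← mul_sub, abs_mul, abs_of_nonneg (hphat k)]
    calc phat k * |a ^ k - b ^ k| ≤ phat k * ((k : ℝ) * |a - b|) :=
          mul_le_mul_of_nonneg_left (aux_pow_abs_sub ha hb k) (hphat k)
      _ = (k : ℝ) * phat k * |a - b| := by ring
  have hsk : Summable (fun k : ℕ => (k : ℝ) * phat k * |a - b|) :=
    hmhat.summable.mul_right _
  have hsd : Summable (fun k : ℕ => |phat k * a ^ k - phat k * b ^ k|) :=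
    Summable.of_nonneg_of_le (fun k => abs_nonneg _) key hsk
  rw [hfhat a, hfhat b, ← Summable.tsum_sub hsa hsb]
  calc |∑' k, (phat k * a ^ k - phat k * b ^ k)|
      ≤ ∑' k, |phat k * a ^ k - phat k * b ^ k| := by
        simpa [Real.norm_eq_abs] using norm_tsum_le_tsum_norm
          (f := fun k => phat k * a ^ k - phat k * b ^ k) (by simpa [Real.norm_eq_abs] using hsd)
    _ ≤ ∑' k : ℕ, ((k : ℝ) * phat k * |a - b|) := Summable.tsum_le_tsum key hsd hsk
    _ = mhat * |a - b| := by rw [tsum_mul_right, hmhat.tsum_eq]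

lemma aux_extinction (hphat : ∀ k, 0 ≤ phat k) (hsum : HasSum phat 1)
    (hfhat : ∀ s : ℝ, fhat s = ∑' k, phat k * s ^ k)
    (hmhat : HasSum (fun k : ℕ => (k : ℝ) * phat k) mhat)
    (hqhat : qhat ∈ Set.Ico (0 : ℝ) 1) (hfix : fhat qhat = qhat)
    (hqmin : ∀ x ∈ Set.Icc (0 : ℝ) 1, fhat x = x → qhat ≤ x) :
    Tendsto (fun T : ℕ => fhat^[T] 0) atTop (nhds qhat) := by
  set q : ℕ → ℝ := fun T => fhat^[T] 0 with hq
  have h01 : (0:ℝ) ∈ Set.Icc (0:ℝ) 1 := ⟨le_rfl, zero_le_one⟩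
  have hqmem : ∀ T, q T ∈ Set.Icc (0:ℝ) 1 := fun T => aux_iter_mem hphat hsum hfhat T h01
  have hmono : Monotone q := by
    apply monotone_nat_of_le_succ
    intro T
    have : q (T+1) = fhat^[T] (fhat 0) := Function.iterate_succ_apply fhat T 0
    rw [this]
    exact aux_iter_mono hphat hsum hfhat T le_rfl
      (aux_fhat_mem hphat hsum hfhat h01).1 (aux_fhat_mem hphat hsum hfhat h01).2
  have hle : ∀ T, q T ≤ qhat := by
    intro T
    induction T with
    | zero => simpa [hq] using hqhat.1
    | succ T ih =>
      have : q (T+1) = fhat (q T) := Function.iterate_succ_apply' fhat T 0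
      rw [this, ← hfix]
      exact aux_fhat_mono hphat hsum hfhat (hqmem T).1 ih hqhat.2.le
  have hbdd : BddAbove (Set.range q) := ⟨qhat, by rintro y ⟨T, rfl⟩; exact hle T⟩
  have htend : Tendsto q atTop (nhds (⨆ T, q T)) := tendsto_atTop_ciSup hmono hbdd
  set L : ℝ := ⨆ T, q T with hL
  have hLq : L ≤ qhat := ciSup_le hle
  have hL0 : 0 ≤ L := (hqmem 0).1.trans (le_ciSup hbdd 0)
  have hLmem : L ∈ Set.Icc (0:ℝ) 1 := ⟨hL0, hLq.trans hqhat.2.le⟩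
  have h1 : Tendsto (fun T => q (T + 1)) atTop (nhds L) := htend.comp (tendsto_add_atTop_nat 1)
  have h2 : Tendsto (fun T => fhat (q T)) atTop (nhds (fhat L)) := by
    rw [← tendsto_sub_nhds_zero_iff]
    apply squeeze_zero_norm (a := fun T => mhat * |q T - L|)
    · intro T
      rw [Real.norm_eq_abs]
      exact aux_fhat_lip hphat hsum hfhat hmhat (hqmem T) hLmem
    · have habs : Tendsto (fun T => |q T - L|) atTop (nhds 0) := by
        have := (htend.sub (tendsto_const_nhds (x := L))).abs
        simpa using this
      simpa using habs.const_mul mhat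
  have heq : (fun T => fhat (q T)) = fun T => q (T + 1) :=
    funext fun T => (Function.iterate_succ_apply' fhat T 0).symm
  rw [heq] at h2
  have hfixL : fhat L = L := tendsto_nhds_unique h2 h1
  have : qhat ≤ L := hqmin L hLmem hfixL
  have : L = qhat := le_antisymm hLq this
  rwa [this] at htend

/-- Main sandwich lemma. -/
lemma aux_sandwich {C : ℕ → ℝ} {Psi : ℝ → ℝ}
    (hphat : ∀ k, 0 ≤ phat k) (hsum : HasSum phat 1)
    (hfhat : ∀ s : ℝ, fhat s = ∑' k, phat k * s ^ k)
    (hCpos : ∀ T, 0 < C T)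
    (hPsicont : ContinuousOn Psi (Set.Ici 0))
    (hPsi : ∀ lam : ℝ, 0 ≤ lam →
        Tendsto (fun T : ℕ => fhat^[T] (Real.exp (-lam / C T))) atTop
          (nhds (qhat + (1 - qhat) * Psi lam)))
    (t : ℕ → ℕ) (ht : Tendsto t atTop atTop)
    (u : ℕ → ℝ) (mu : ℝ) (hmu : 0 < mu) (hu : Tendsto u atTop (nhds mu)) :
    Tendsto (fun n => fhat^[t n] (Real.exp (-u n / C (t n)))) atTop
      (nhds (qhat + (1 - qhat) * Psi mu)) := by
  have hg : ContinuousWithinAt (fun l => qhat + (1 - qhat) * Psi l) (Set.Ici 0) mu :=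
    (continuousWithinAt_const.add
      (continuousWithinAt_const.mul (hPsicont mu hmu.le)))
  have hnn : nhdsWithin mu (Set.Ici (0:ℝ)) = nhds mu :=
    nhdsWithin_eq_nhds.mpr (Ici_mem_nhds hmu)
  have hg' : Tendsto (fun l => qhat + (1 - qhat) * Psi l) (nhds mu)
      (nhds (qhat + (1 - qhat) * Psi mu)) := by
    have := hg.tendsto
    rwa [hnn] at this
  rw [tendsto_order]
  constructor
  · intro a' ha'
    -- pick lam2 > mu with qhat + (1-qhat) Psi lam2 > a'
    have hev : ∀ᶠ l in nhds mu, a' < qhat + (1 - qhat) * Psi l :=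
      hg'.eventually (eventually_gt_nhds ha')
    have : ∀ᶠ l in nhdsWithin mu (Set.Ioi mu),
        (a' < qhat + (1 - qhat) * Psi l) ∧ l ∈ Set.Ioi mu :=
      (hev.filter_mono nhdsWithin_le_nhds).and eventually_mem_nhdsWithin
    obtain ⟨lam2, hlam2a, hlam2gt⟩ := this.exists
    have hlam2pos : 0 < lam2 := hmu.trans hlam2gt
    have hb : Tendsto (fun n => fhat^[t n] (Real.exp (-lam2 / C (t n)))) atTop
        (nhds (qhat + (1 - qhat) * Psi lam2)) := (hPsi lam2 hlam2pos.le).comp ht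
    have h1 : ∀ᶠ n in atTop, a' < fhat^[t n] (Real.exp (-lam2 / C (t n))) :=
      hb.eventually (eventually_gt_nhds hlam2a)
    have h2 : ∀ᶠ n in atTop, u n < lam2 := hu.eventually (eventually_lt_nhds hlam2gt)
    have h3 : ∀ᶠ n in atTop, 0 < u n := hu.eventually (eventually_gt_nhds hmu)
    filter_upwards [h1, h2, h3] with n h1 h2 h3
    refine lt_of_lt_of_le h1 ?_
    have harg : -lam2 / C (t n) ≤ -u n / C (t n) :=
      (div_le_div_iff_of_pos_right (hCpos (t n))).mpr (neg_le_neg h2.le)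
    have hexp1 : (0:ℝ) ≤ Real.exp (-lam2 / C (t n)) := (Real.exp_pos _).le
    have hexp2 : Real.exp (-u n / C (t n)) ≤ 1 :=
      Real.exp_le_one_iff.mpr (div_nonpos_of_nonpos_of_nonneg (neg_nonpos.mpr h3.le) (hCpos _).le)
    exact aux_iter_mono hphat hsum hfhat (t n) hexp1 (Real.exp_le_exp.mpr harg) hexp2
  · intro a' ha'
    have hev : ∀ᶠ l in nhds mu, qhat + (1 - qhat) * Psi l < a' :=
      hg'.eventually (eventually_lt_nhds ha')
    have : ∀ᶠ l in nhdsWithin mu (Set.Iio mu),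
        ((qhat + (1 - qhat) * Psi l < a') ∧ 0 < l) ∧ l ∈ Set.Iio mu :=
      ((hev.and (eventually_gt_nhds hmu)).filter_mono nhdsWithin_le_nhds).and
        eventually_mem_nhdsWithin
    obtain ⟨lam1, ⟨hlam1a, hlam1pos⟩, hlam1lt⟩ := this.exists
    have hb : Tendsto (fun n => fhat^[t n] (Real.exp (-lam1 / C (t n)))) atTop
        (nhds (qhat + (1 - qhat) * Psi lam1)) := (hPsi lam1 hlam1pos.le).comp ht
    have h1 : ∀ᶠ n in atTop, fhat^[t n] (Real.exp (-lam1 / C (t n))) < a' :=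
      hb.eventually (eventually_lt_nhds hlam1a)
    have h2 : ∀ᶠ n in atTop, lam1 < u n := hu.eventually (eventually_gt_nhds hlam1lt)
    filter_upwards [h1, h2] with n h1 h2
    refine lt_of_le_of_lt ?_ h1
    have harg : -u n / C (t n) ≤ -lam1 / C (t n) :=
      (div_le_div_iff_of_pos_right (hCpos (t n))).mpr (neg_le_neg h2.le)
    have hexp1 : (0:ℝ) ≤ Real.exp (-u n / C (t n)) := (Real.exp_pos _).le
    have hexp2 : Real.exp (-lam1 / C (t n)) ≤ 1 :=
      Real.exp_le_one_iff.mpr (div_nonpos_of_nonpos_of_nonneg (neg_nonpos.mpr hlam1pos.le) (hCpos _).le)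
    exact aux_iter_mono hphat hsum hfhat (t n) hexp1 (Real.exp_le_exp.mpr harg) hexp2

end Aux

/-- Theorem 3(a): let `fhat` be a proper pgf with finite mean `mhat ∈ (1,∞)`, smallest
fixed point `qhat ∈ [0,1)`, `C t → ∞`, and Seneta–Heyde limit `Psi` so that
`fhat^[t](exp(-λ/C t)) → qhat + (1-qhat) Psi λ`. For `r > 1` the defective law
`f_r(s) = r fhat(s/r)` has iterates `f_r^[t](s) = r fhat^[t](s/r)`. If `r_n > 1`,
`t_n → ∞` and `(r_n - 1) C(t_n) → x ∈ (0,∞)`, then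
`P(T_n > t_n) = f_{r_n}^[t_n](1) - f_{r_n}^[t_n](0) → (1-qhat) Psi x`, and for `λ ≥ 0`
the conditional Laplace transform converges to `Psi(λ+x)/Psi(x)`. -/
theorem stmt_12
    (phat : ℕ → ℝ) (fhat : ℝ → ℝ) (qhat mhat : ℝ) (C : ℕ → ℝ) (Psi : ℝ → ℝ)
    (hphat : ∀ k, 0 ≤ phat k) (hsum : HasSum phat 1)
    (hfhat : ∀ s : ℝ, fhat s = ∑' k, phat k * s ^ k)
    (hmhat : HasSum (fun k : ℕ => (k : ℝ) * phat k) mhat) (hm1 : 1 < mhat)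
    (hqhat : qhat ∈ Set.Ico (0 : ℝ) 1) (hfix : fhat qhat = qhat)
    (hqmin : ∀ x ∈ Set.Icc (0 : ℝ) 1, fhat x = x → qhat ≤ x)
    (hCpos : ∀ t, 0 < C t) (hC : Tendsto C atTop atTop)
    (hPsicont : ContinuousOn Psi (Set.Ici 0))
    (hPsimono : AntitoneOn Psi (Set.Ici 0))
    (hPsirange : ∀ lam : ℝ, 0 ≤ lam → Psi lam ∈ Set.Ioc (0 : ℝ) 1)
    (hPsi : ∀ lam : ℝ, 0 ≤ lam →
        Tendsto (fun t : ℕ => fhat^[t] (Real.exp (-lam / C t))) atTop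
          (nhds (qhat + (1 - qhat) * Psi lam)))
    (r : ℕ → ℝ) (t : ℕ → ℕ) (x : ℝ)
    (hr : ∀ n, 1 < r n) (ht : Tendsto t atTop atTop) (hx : 0 < x)
    (hrx : Tendsto (fun n => (r n - 1) * C (t n)) atTop (nhds x)) :
    Tendsto (fun n => r n * fhat^[t n] (1 / r n) - r n * fhat^[t n] 0) atTop
      (nhds ((1 - qhat) * Psi x)) ∧
    ∀ lam : ℝ, 0 ≤ lam →
      Tendsto
        (fun n =>
          (r n * fhat^[t n] (Real.exp (-lam / C (t n)) / r n) -
              r n * fhat^[t n] 0) /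
            (r n * fhat^[t n] (1 / r n) - r n * fhat^[t n] 0))
        atTop (nhds (Psi (lam + x) / Psi x)) := by
  have hCn : Tendsto (fun n => C (t n)) atTop atTop := hC.comp ht
  have hCinv : Tendsto (fun n => (C (t n))⁻¹) atTop (nhds 0) := hCn.inv_tendsto_atTop
  have hCne : ∀ n, C (t n) ≠ 0 := fun n => (hCpos _).ne'
  have hrne : ∀ n, r n - 1 ≠ 0 := fun n => sub_ne_zero.mpr (hr n).ne'
  have hrpos : ∀ n, 0 < r n := fun n => lt_trans one_pos (hr n)
  -- r n → 1
  have hr1 : Tendsto r atTop (nhds 1) := by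
    rw [← tendsto_sub_nhds_zero_iff]
    have h := hrx.mul hCinv
    rw [mul_zero] at h
    apply h.congr
    intro n
    rw [mul_assoc, mul_inv_cancel₀ (hCne n), mul_one]
  -- log r n / (r n - 1) → 1
  have hlog : Tendsto (fun n => Real.log (r n) / (r n - 1)) atTop (nhds 1) := by
    have hd := Real.hasDerivAt_log one_ne_zero
    rw [hasDerivAt_iff_tendsto_slope] at hd
    have hr1' : Tendsto r atTop (nhdsWithin 1 {(1:ℝ)}ᶜ) :=
      tendsto_nhdsWithin_of_tendsto_nhds_of_eventually_within r hr1
        (Eventually.of_forall fun n => (hr n).ne')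
    have := hd.comp hr1'
    rw [inv_one] at this
    apply this.congr
    intro n
    simp [slope_def_field, Real.log_one]
  -- u n := C (t n) * log (r n) → x
  have hu : Tendsto (fun n => C (t n) * Real.log (r n)) atTop (nhds x) := by
    have h := hrx.mul hlog
    rw [mul_one] at h
    apply h.congr
    intro n
    calc (r n - 1) * C (t n) * (Real.log (r n) / (r n - 1))
        = C (t n) * (Real.log (r n) / (r n - 1) * (r n - 1)) := by ring
      _ = C (t n) * Real.log (r n) := by rw [div_mul_cancel₀ _ (hrne n)]
  -- 1 / r n = exp(-(C(t n) * log (r n)) / C (t n))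
  have hkey1 : ∀ n, Real.exp (-(C (t n) * Real.log (r n)) / C (t n)) = 1 / r n := by
    intro n
    rw [neg_div, mul_div_cancel_left₀ _ (hCne n), Real.exp_neg, Real.exp_log (hrpos n), one_div]
  have hA : Tendsto (fun n => fhat^[t n] (1 / r n)) atTop
      (nhds (qhat + (1 - qhat) * Psi x)) := by
    have := aux_sandwich hphat hsum hfhat hCpos hPsicont hPsi t ht
      (fun n => C (t n) * Real.log (r n)) x hx hu
    apply this.congr
    intro n
    rw [hkey1 n]
  have hB : Tendsto (fun n => fhat^[t n] (0:ℝ)) atTop (nhds qhat) :=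
    (aux_extinction hphat hsum hfhat hmhat hqhat hfix hqmin).comp ht
  have h1q : (1:ℝ) - qhat ≠ 0 := sub_ne_zero.mpr (ne_of_gt (by linarith [hqhat.2]))
  have hPsixpos : 0 < Psi x := (hPsirange x hx.le).1
  -- part (i)
  have hpart1 : Tendsto (fun n => r n * fhat^[t n] (1 / r n) - r n * fhat^[t n] 0) atTop
      (nhds ((1 - qhat) * Psi x)) := by
    have h := (hr1.mul hA).sub (hr1.mul hB)
    have : (1:ℝ) * (qhat + (1 - qhat) * Psi x) - 1 * qhat = (1 - qhat) * Psi x := by ring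
    rwa [this] at h
  refine ⟨hpart1, ?_⟩
  intro lam hlam
  have hlx : 0 < lam + x := by linarith
  have hulam : Tendsto (fun n => lam + C (t n) * Real.log (r n)) atTop (nhds (lam + x)) :=
    tendsto_const_nhds.add hu
  have hkey2 : ∀ n, Real.exp (-(lam + C (t n) * Real.log (r n)) / C (t n)) =
      Real.exp (-lam / C (t n)) / r n := by
    intro n
    rw [neg_add, add_div, Real.exp_add, hkey1 n, mul_one_div]
  have hN : Tendsto (fun n => fhat^[t n] (Real.exp (-lam / C (t n)) / r n)) atTop
      (nhds (qhat + (1 - qhat) * Psi (lam + x))) := by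
    have := aux_sandwich hphat hsum hfhat hCpos hPsicont hPsi t ht
      (fun n => lam + C (t n) * Real.log (r n)) (lam + x) hlx hulam
    apply this.congr
    intro n
    rw [hkey2 n]
  have hnum : Tendsto (fun n => r n * fhat^[t n] (Real.exp (-lam / C (t n)) / r n) -
      r n * fhat^[t n] 0) atTop (nhds ((1 - qhat) * Psi (lam + x))) := by
    have h := (hr1.mul hN).sub (hr1.mul hB)
    have : (1:ℝ) * (qhat + (1 - qhat) * Psi (lam + x)) - 1 * qhat =
        (1 - qhat) * Psi (lam + x) := by ring
    rwa [this] at h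
  have h := hnum.div hpart1 (mul_ne_zero h1q hPsixpos.ne')
  rwa [mul_div_mul_left _ _ h1q] at h
end

section
/- For parameters (theta, qq, gam, r) in (0,1] x [0,1) x (0,1) x (1,infinity) and t a nonnegative integer, define F(theta,qq,gam,r; t, s) = r - [gam^t * (r - s)^{-theta} + (1 - gam^t) * (r - qq)^{-theta}]^{-1/theta} for s in [0, r] (this is the t-th iterate of the corresponding defective theta-branching reproduction law). Fix (theta, q, gamma) in (0,1] x [0,1) x (0,1) and let sequences (theta_n, gamma_n, q_n, r_n) -> (theta, gamma, q, 1) with theta_n in (0,1], gamma_n in (0,1), q_n in [0,1), r_n > 1. Set m_n = gamma_n^{-1/theta_n} and suppose t_n -> infinity with (r_n - 1)*m_n^{t_n} -> x for some x in (0, infinity). Then F(theta_n,q_n,gamma_n,r_n; t_n, 1) - F(theta_n,q_n,gamma_n,r_n; t_n, 0) converges to (1 - q)*Psi(x), where Psi(lambda) = 1 - [1 + (1-q)^theta * lambda^{-theta}]^{-1/theta}. Probabilistically, P(T_n > t_n) -> (1-q)*Psi(x) for the associated defective theta-branching processes. -/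
open Filter

/-- The `t`-th iterate of the defective theta-branching reproduction law with
parameters `(θ, qq, gam, r) ∈ (0,1] × [0,1) × (0,1) × (1,∞)`:
`F θ qq gam r t s = r - [gam^t (r-s)^{-θ} + (1-gam^t)(r-qq)^{-θ}]^{-1/θ}`. -/
noncomputable def thetaIter (θ qq gam r : ℝ) (t : ℕ) (s : ℝ) : ℝ :=
  r - (gam ^ t * (r - s) ^ (-θ) + (1 - gam ^ t) * (r - qq) ^ (-θ)) ^ (-θ⁻¹)

lemma key_rpow (γ θ r : ℝ) (hγ : 0 < γ) (hθ : θ ≠ 0) (hr : 0 < r - 1) (k : ℕ) :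
    γ ^ k * (r - 1) ^ (-θ) = ((r - 1) * (γ ^ (-θ⁻¹)) ^ k) ^ (-θ) := by
  rw [← Real.rpow_natCast (γ ^ (-θ⁻¹)) k, ← Real.rpow_mul hγ.le,
    Real.mul_rpow hr.le (Real.rpow_nonneg hγ.le _), ← Real.rpow_mul hγ.le,
    show -θ⁻¹ * k * -θ = (k : ℝ) by field_simp, Real.rpow_natCast]
  ring

lemma alg_id (θ q x : ℝ) (hθ : θ ≠ 0) (h1q : 0 < 1 - q) (hx : 0 < x) :
    (1 - q) * (1 - (1 + (1 - q) ^ θ * x ^ (-θ)) ^ (-θ⁻¹)) =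
      ((1 - q) ^ (-θ)) ^ (-θ⁻¹) - (x ^ (-θ) + (1 - q) ^ (-θ)) ^ (-θ⁻¹) := by
  have h1 : ((1 - q : ℝ) ^ (-θ)) ^ (-θ⁻¹) = 1 - q := by
    rw [← Real.rpow_mul h1q.le, neg_mul_neg, mul_inv_cancel₀ hθ, Real.rpow_one]
  have hpos : (0 : ℝ) < 1 + (1 - q) ^ θ * x ^ (-θ) := by positivity
  have h2 : (1 - q) * (1 + (1 - q) ^ θ * x ^ (-θ)) ^ (-θ⁻¹) =
      (x ^ (-θ) + (1 - q) ^ (-θ)) ^ (-θ⁻¹) := by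
    nth_rewrite 1 [← h1]
    rw [← Real.mul_rpow (Real.rpow_nonneg h1q.le _) hpos.le]
    congr 1
    rw [mul_add, mul_one, ← mul_assoc, ← Real.rpow_add h1q, neg_add_cancel,
      Real.rpow_zero, one_mul]
    ring
  rw [h1, mul_sub, mul_one, h2]

/-- Proposition 2(a): if `(θ_n, γ_n, q_n, r_n) → (θ, γ, q, 1)` with
`m_n = γ_n^{-1/θ_n}`, `t_n → ∞` and `(r_n - 1) m_n^{t_n} → x ∈ (0,∞)`, then
`P(T_n > t_n) = F_n(t_n,1) - F_n(t_n,0) → (1-q) Ψ(x)` with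
`Ψ(λ) = 1 - [1 + (1-q)^θ λ^{-θ}]^{-1/θ}`. -/
theorem stmt_14
    (θ q γ : ℝ) (hθ : θ ∈ Set.Ioc (0 : ℝ) 1) (hq : q ∈ Set.Ico (0 : ℝ) 1)
    (hγ : γ ∈ Set.Ioo (0 : ℝ) 1)
    (θn γn qn rn : ℕ → ℝ)
    (hθn : ∀ n, θn n ∈ Set.Ioc (0 : ℝ) 1)
    (hγn : ∀ n, γn n ∈ Set.Ioo (0 : ℝ) 1)
    (hqn : ∀ n, qn n ∈ Set.Ico (0 : ℝ) 1)
    (hrn : ∀ n, 1 < rn n)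
    (hθlim : Tendsto θn atTop (nhds θ)) (hγlim : Tendsto γn atTop (nhds γ))
    (hqlim : Tendsto qn atTop (nhds q)) (hrlim : Tendsto rn atTop (nhds 1))
    (m : ℕ → ℝ) (hm : ∀ n, m n = γn n ^ (-(θn n)⁻¹))
    (t : ℕ → ℕ) (ht : Tendsto t atTop atTop)
    (x : ℝ) (hx : 0 < x)
    (hxlim : Tendsto (fun n => (rn n - 1) * m n ^ t n) atTop (nhds x)) :
    Tendsto
      (fun n =>
        thetaIter (θn n) (qn n) (γn n) (rn n) (t n) 1 -
          thetaIter (θn n) (qn n) (γn n) (rn n) (t n) 0)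
      atTop
      (nhds ((1 - q) * (1 - (1 + (1 - q) ^ θ * x ^ (-θ)) ^ (-θ⁻¹)))) := by
  obtain ⟨hθ0, hθ1⟩ := hθ
  obtain ⟨hq0, hq1⟩ := hq
  obtain ⟨hγ0, hγ1⟩ := hγ
  have h1q : (0 : ℝ) < 1 - q := by linarith
  have hθne : θ ≠ 0 := hθ0.ne'
  -- γ_n ^ t_n → 0
  have hgt0 : Tendsto (fun n => γn n ^ t n) atTop (nhds 0) := by
    have hbig : Tendsto (fun n => ((1 + γ) / 2) ^ t n) atTop (nhds 0) :=
      (tendsto_pow_atTop_nhds_zero_of_lt_one (by linarith) (by linarith)).comp ht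
    refine squeeze_zero' (Eventually.of_forall fun n => pow_nonneg (hγn n).1.le _) ?_ hbig
    filter_upwards [hγlim.eventually_lt_const (show γ < (1 + γ) / 2 by linarith)] with n hn
    exact pow_le_pow_left₀ (hγn n).1.le hn.le _
  -- (r_n - q_n) ^ (-θ_n) → (1-q) ^ (-θ)
  have hA : Tendsto (fun n => (rn n - qn n) ^ (-(θn n))) atTop (nhds ((1 - q) ^ (-θ))) :=
    Filter.Tendsto.rpow (hrlim.sub hqlim) hθlim.neg (Or.inl h1q.ne')
  have hB : Tendsto (fun n => (1 - γn n ^ t n) * (rn n - qn n) ^ (-(θn n))) atTop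
      (nhds ((1 - q) ^ (-θ))) := by
    simpa using ((tendsto_const_nhds (x := (1:ℝ))).sub hgt0).mul hA
  -- γ^t * r^{-θ} → 0
  have hC : Tendsto (fun n => γn n ^ t n * rn n ^ (-(θn n))) atTop (nhds 0) := by
    refine squeeze_zero' (Eventually.of_forall fun n => mul_nonneg (pow_nonneg (hγn n).1.le _)
      (Real.rpow_nonneg (by linarith [hrn n]) _)) (Eventually.of_forall fun n => ?_) hgt0
    have h1 : rn n ^ (-(θn n)) ≤ 1 :=
      Real.rpow_le_one_of_one_le_of_nonpos (hrn n).le (neg_nonpos.mpr (hθn n).1.le)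
    calc γn n ^ t n * rn n ^ (-(θn n)) ≤ γn n ^ t n * 1 :=
          mul_le_mul_of_nonneg_left h1 (pow_nonneg (hγn n).1.le _)
      _ = γn n ^ t n := mul_one _
  -- γ^t (r-1)^{-θ} → x^{-θ}
  have hD : Tendsto (fun n => γn n ^ t n * (rn n - 1) ^ (-(θn n))) atTop (nhds (x ^ (-θ))) := by
    have heq : ∀ n, γn n ^ t n * (rn n - 1) ^ (-(θn n)) =
        ((rn n - 1) * m n ^ t n) ^ (-(θn n)) := fun n => by
      rw [hm n]
      exact key_rpow (γn n) (θn n) (rn n) (hγn n).1 (hθn n).1.ne' (by linarith [hrn n]) (t n)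
    simp only [heq]
    exact hxlim.rpow hθlim.neg (Or.inl hx.ne')
  have hbase0 : Tendsto (fun n => γn n ^ t n * rn n ^ (-(θn n)) +
      (1 - γn n ^ t n) * (rn n - qn n) ^ (-(θn n))) atTop (nhds ((1 - q) ^ (-θ))) := by
    simpa using hC.add hB
  have hbase1 : Tendsto (fun n => γn n ^ t n * (rn n - 1) ^ (-(θn n)) +
      (1 - γn n ^ t n) * (rn n - qn n) ^ (-(θn n))) atTop
      (nhds (x ^ (-θ) + (1 - q) ^ (-θ))) := hD.add hB
  have hexp : Tendsto (fun n => -(θn n)⁻¹) atTop (nhds (-θ⁻¹)) := (hθlim.inv₀ hθne).neg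
  have hF0 := hbase0.rpow hexp (Or.inl (Real.rpow_pos_of_pos h1q _).ne')
  have hF1 := hbase1.rpow hexp
    (Or.inl (by positivity : (0:ℝ) < x ^ (-θ) + (1 - q) ^ (-θ)).ne')
  rw [alg_id θ q x hθne h1q hx]
  refine (hF0.sub hF1).congr fun n => ?_
  simp only [thetaIter, sub_zero]
  ring
end

section
/- With the notation and hypotheses of the theta-branching setup — F(theta,qq,gam,r; t, s) = r - [gam^t (r-s)^{-theta} + (1-gam^t)(r-qq)^{-theta}]^{-1/theta}; sequences (theta_n, gamma_n, q_n, r_n) -> (theta, gamma, q, 1) in (0,1] x (0,1) x [0,1) x {r > 1}; m_n = gamma_n^{-1/theta_n}; t_n -> infinity with (r_n - 1)*m_n^{t_n} -> x in (0,infinity) — let k >= 0 be a fixed integer and lambda >= 0. Write F_n(t,s) = F(theta_n,q_n,gamma_n,r_n; t, s). Then the ratio (F_n(t_n - k, exp(-lambda*m_n^{k - t_n}) * F_n(k,1)) - F_n(t_n - k, exp(-lambda*m_n^{k - t_n}) * F_n(k,0))) / (F_n(t_n,1) - F_n(t_n,0)) converges, as n -> infinity, to Psi(x + lambda)/Psi(x),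 where Psi(lambda) = 1 - [1 + (1-q)^theta * lambda^{-theta}]^{-1/theta}. Probabilistically, E(exp(-lambda*m_n^{k - t_n}*Z_n(t_n - k)) | T_n > t_n) -> Psi(x+lambda)/Psi(x). -/
/-!
The substitution `s ↦ (r - s)^{-θ}` conjugates the iterates to affine maps:
`(r - F(t,s))^{-θ} = γ^t (r - s)^{-θ} + (1 - γ^t)(r - q)^{-θ}`. Hence each difference of
iterates is a difference of two `(-1/θ)`-th powers of such affine expressions, and only the
terms `γₙ^t (rₙ - sₙ)^{-θₙ}` need a limit. Since `mₙ^{-θₙ} = γₙ`, these equal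
`((rₙ - sₙ) mₙ^t)^{-θₙ}`: for `s = 1` the scaling hypothesis gives `x^{-θ}`, for `s = 0` they
vanish. At the damped arguments `e Fₙ(k,s)`, `e = exp(-λ mₙ^{k-tₙ})`, the identity
`r - e F = r (1 - e) + e (r - F)` adds `λ` to the rescaled limit `x`, because
`(1 - e) mₙ^{tₙ-k} → λ`. So numerator and denominator tend to `(1-q) Ψ(x+λ)` and `(1-q) Ψ(x)`.
-/

open Filter

/-- The limit Laplace transform `Ψ(λ) = 1 - [1 + (1-q)^θ λ^{-θ}]^{-1/θ}`. -/
noncomputable def thetaPsi (θ q lam : ℝ) : ℝ :=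
  1 - (1 + (1 - q) ^ θ * lam ^ (-θ)) ^ (-θ⁻¹)

open Topology Real

noncomputable def thetaLin (θ qq gam r : ℝ) (t : ℕ) (s : ℝ) : ℝ :=
  gam ^ t * (r - s) ^ (-θ) + (1 - gam ^ t) * (r - qq) ^ (-θ)

section Algebra

variable {θ qq gam r : ℝ}

theorem sub_thetaIter (θ qq gam r : ℝ) (t : ℕ) (s : ℝ) :
    r - thetaIter θ qq gam r t s = thetaLin θ qq gam r t s ^ (-θ⁻¹) :=
  sub_sub_cancel _ _

theorem thetaIter_sub_thetaIter (t : ℕ) (s₁ s₂ : ℝ) :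
    thetaIter θ qq gam r t s₁ - thetaIter θ qq gam r t s₂ =
      thetaLin θ qq gam r t s₂ ^ (-θ⁻¹) - thetaLin θ qq gam r t s₁ ^ (-θ⁻¹) := by
  simp only [thetaIter, thetaLin]; ring

theorem sub_thetaIter_rpow_neg (hθ : θ ≠ 0) {t : ℕ} {s : ℝ}
    (hlin : 0 ≤ thetaLin θ qq gam r t s) :
    (r - thetaIter θ qq gam r t s) ^ (-θ) = thetaLin θ qq gam r t s := by
  rw [sub_thetaIter, ← inv_neg, rpow_inv_rpow hlin (neg_ne_zero.2 hθ)]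

theorem thetaLin_pos (hgam0 : 0 < gam) (hgam1 : gam ≤ 1) (hqq : qq < r) (t : ℕ) {s : ℝ}
    (hs : s < r) : 0 < thetaLin θ qq gam r t s :=
  add_pos_of_pos_of_nonneg (mul_pos (pow_pos hgam0 t) (rpow_pos_of_pos (sub_pos.2 hs) _))
    (mul_nonneg (sub_nonneg.2 (pow_le_one₀ hgam0.le hgam1))
      (rpow_pos_of_pos (sub_pos.2 hqq) _).le)

theorem pow_sub_mul_thetaLin {k t : ℕ} (hkt : k ≤ t) (s : ℝ) :
    gam ^ (t - k) * thetaLin θ qq gam r k s =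
      gam ^ t * (r - s) ^ (-θ) + gam ^ (t - k) * ((1 - gam ^ k) * (r - qq) ^ (-θ)) := by
  rw [thetaLin, mul_add, ← mul_assoc, ← pow_add, Nat.sub_add_cancel hkt]

theorem thetaIter_zero_nonneg (hθ : 0 < θ) (hgam0 : 0 < gam) (hgam1 : gam ≤ 1) (hqq0 : 0 ≤ qq)
    (hqq : qq < r) (t : ℕ) : 0 ≤ thetaIter θ qq gam r t 0 := by
  have hr : 0 < r := hqq0.trans_lt hqq
  have hpow : gam ^ t ≤ 1 := pow_le_one₀ hgam0.le hgam1
  have hlin : r ^ (-θ) ≤ thetaLin θ qq gam r t 0 := by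
    have : r ^ (-θ) ≤ (r - qq) ^ (-θ) :=
      rpow_le_rpow_of_nonpos (sub_pos.2 hqq) (by linarith) (by linarith)
    rw [thetaLin, sub_zero]
    nlinarith
  have := rpow_le_rpow_of_nonpos (rpow_pos_of_pos hr _) hlin (neg_nonpos.2 (inv_pos.2 hθ).le)
  rw [← inv_neg, rpow_rpow_inv hr.le (neg_ne_zero.2 hθ.ne'), inv_neg] at this
  linarith [sub_thetaIter θ qq gam r t 0]

theorem sub_thetaIter_pos (hgam0 : 0 < gam) (hgam1 : gam ≤ 1) (hqq : qq < r) (t : ℕ) {s : ℝ}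
    (hs : s < r) : 0 < r - thetaIter θ qq gam r t s := by
  rw [sub_thetaIter]
  exact rpow_pos_of_pos (thetaLin_pos hgam0 hgam1 hqq t hs) _

theorem sub_thetaIter_zero_le_sub_mul (hθ : 0 < θ) (hgam0 : 0 < gam) (hgam1 : gam ≤ 1)
    (hqq0 : 0 ≤ qq) (hqq : qq < r) (t : ℕ) {c : ℝ} (hc : c ≤ 1) :
    r - thetaIter θ qq gam r t 0 ≤ r - c * thetaIter θ qq gam r t 0 :=
  sub_le_sub_left (mul_le_of_le_one_left (thetaIter_zero_nonneg hθ hgam0 hgam1 hqq0 hqq t) hc) r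

end Algebra

section Psi

variable {θ q y : ℝ}

theorem one_sub_mul_thetaPsi (hθ : θ ≠ 0) (hq : q < 1) (hy : 0 ≤ y) :
    (1 - q) * thetaPsi θ q y =
      ((1 - q) ^ (-θ)) ^ (-θ⁻¹) - (y ^ (-θ) + (1 - q) ^ (-θ)) ^ (-θ⁻¹) := by
  have h1q : 0 < 1 - q := sub_pos.2 hq
  have hfactor : y ^ (-θ) + (1 - q) ^ (-θ) = (1 - q) ^ (-θ) * (1 + (1 - q) ^ θ * y ^ (-θ)) := by
    rw [mul_add, mul_one, ← mul_assoc, ← rpow_add h1q, neg_add_cancel, rpow_zero, one_mul,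
      add_comm]
  have hcancel : ((1 - q) ^ (-θ)) ^ (-θ⁻¹) = 1 - q := by
    rw [← inv_neg, rpow_rpow_inv h1q.le (neg_ne_zero.2 hθ)]
  rw [thetaPsi, hfactor, mul_rpow (by positivity) (by positivity), hcancel]
  ring

theorem thetaPsi_pos (hθ : 0 < θ) (hq : q < 1) (hy : 0 < y) : 0 < thetaPsi θ q y := by
  have hbase : 1 < 1 + (1 - q) ^ θ * y ^ (-θ) :=
    lt_add_of_pos_right 1 (mul_pos (rpow_pos_of_pos (sub_pos.2 hq) θ) (rpow_pos_of_pos hy _))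
  exact sub_pos.2 (rpow_lt_one_of_one_lt_of_neg hbase (neg_neg_of_pos (inv_pos.2 hθ)))

end Psi

theorem mul_rpow_neg_inv_pow_rpow_neg {θ γ y : ℝ} (hθ : θ ≠ 0) (hγ : 0 ≤ γ) (hy : 0 ≤ y)
    (s : ℕ) : (y * (γ ^ (-θ⁻¹)) ^ s) ^ (-θ) = γ ^ s * y ^ (-θ) := by
  rw [mul_rpow hy (pow_nonneg (rpow_nonneg hγ _) s), rpow_pow_comm hγ, ← inv_neg,
    rpow_inv_rpow (pow_nonneg hγ s) (neg_ne_zero.2 hθ), mul_comm]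

theorem tendsto_mul_rpow_neg_inv_pow_iff {θn γn y : ℕ → ℝ} {s : ℕ → ℕ} {θ z : ℝ}
    (hθn : ∀ n, θn n ≠ 0) (hγn : ∀ n, 0 < γn n) (hy : ∀ n, 0 ≤ y n)
    (hθ : Tendsto θn atTop (𝓝 θ)) (hθ0 : θ ≠ 0) (hz : 0 < z) :
    Tendsto (fun n => y n * (γn n ^ (-(θn n)⁻¹)) ^ s n) atTop (𝓝 z) ↔
      Tendsto (fun n => γn n ^ s n * y n ^ (-θn n)) atTop (𝓝 (z ^ (-θ))) := by
  have hrescale n := mul_rpow_neg_inv_pow_rpow_neg (hθn n) (hγn n).le (hy n) (s n)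
  constructor
  · intro h
    exact (h.rpow hθ.neg (Or.inl hz.ne')).congr hrescale
  · intro h
    have hlim := h.rpow (hθ.inv₀ hθ0).neg (Or.inl (rpow_pos_of_pos hz _).ne')
    rw [← inv_neg, rpow_rpow_inv hz.le (neg_ne_zero.2 hθ0)] at hlim
    refine hlim.congr fun n => ?_
    rw [← hrescale, ← inv_neg,
      rpow_rpow_inv (mul_nonneg (hy n) (pow_nonneg (rpow_nonneg (hγn n).le _) _))
        (neg_ne_zero.2 (hθn n))]

theorem tendsto_inv_rpow_neg_inv_pow {θn γn : ℕ → ℝ} {s : ℕ → ℕ} {θ : ℝ} (hγn : ∀ n, 0 < γn n)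
    (hθ : Tendsto θn atTop (𝓝 θ)) (hθ0 : 0 < θ)
    (hγs : Tendsto (fun n => γn n ^ s n) atTop (𝓝 0)) :
    Tendsto (fun n => ((γn n ^ (-(θn n)⁻¹)) ^ s n)⁻¹) atTop (𝓝[>] 0) := by
  have hlim := hγs.rpow (hθ.inv₀ hθ0.ne') (Or.inr (inv_pos.2 hθ0))
  rw [zero_rpow (inv_pos.2 hθ0).ne'] at hlim
  refine tendsto_nhdsWithin_of_tendsto_nhds_of_eventually_within _ (hlim.congr fun n => ?_)
    (Eventually.of_forall fun n => inv_pos.2 (pow_pos (rpow_pos_of_pos (hγn n) _) _))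
  rw [rpow_pow_comm (hγn n).le, rpow_neg (pow_nonneg (hγn n).le _), inv_inv]

theorem tendsto_pow_of_tendsto_of_abs_lt_one {γn : ℕ → ℝ} {s : ℕ → ℕ} {γ : ℝ}
    (hγ : Tendsto γn atTop (𝓝 γ)) (hγ1 : |γ| < 1) (hs : Tendsto s atTop atTop) :
    Tendsto (fun n => γn n ^ s n) atTop (𝓝 0) := by
  obtain ⟨c, hγc, hc1⟩ := exists_between hγ1
  have hc0 : 0 ≤ c := (abs_nonneg γ).trans hγc.le
  refine squeeze_zero_norm' ?_ ((tendsto_pow_atTop_nhds_zero_of_lt_one hc0 hc1).comp hs)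
  filter_upwards [hγ.abs.eventually (gt_mem_nhds hγc)] with n hn
  rw [norm_pow, Real.norm_eq_abs]
  exact pow_le_pow_left₀ (abs_nonneg _) hn.le _

theorem tendsto_one_sub_exp_neg_mul_div (c : ℝ) :
    Tendsto (fun y => (1 - exp (-(c * y))) / y) (𝓝[≠] 0) (𝓝 c) := by
  have hderiv : HasDerivAt (fun y => -exp (-(c * y))) c 0 := by
    simpa [Pi.neg_def] using (((hasDerivAt_id (0 : ℝ)).const_mul c).neg.exp).neg
  refine hderiv.tendsto_slope_zero.congr fun y => ?_
  simp only [zero_add, mul_zero, neg_zero, exp_zero, smul_eq_mul]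
  ring

theorem tendsto_exp_neg_mul_rpow_natCast_sub {m : ℕ → ℝ} {t : ℕ → ℕ} {k : ℕ} (lam : ℝ)
    (hm : ∀ n, 0 ≤ m n) (hkt : ∀ᶠ n in atTop, k ≤ t n)
    (hM : Tendsto (fun n => (m n ^ (t n - k))⁻¹) atTop (𝓝[>] 0)) :
    Tendsto (fun n => exp (-(lam * m n ^ ((k : ℝ) - t n)))) atTop (𝓝 1) ∧
      Tendsto (fun n => (1 - exp (-(lam * m n ^ ((k : ℝ) - t n)))) * m n ^ (t n - k)) atTop
        (𝓝 lam) := by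
  have hinv : ∀ᶠ n in atTop, m n ^ ((k : ℝ) - t n) = (m n ^ (t n - k))⁻¹ := by
    filter_upwards [hkt] with n hn
    rw [← neg_sub, rpow_neg (hm n), ← Nat.cast_sub hn, rpow_natCast]
  have hv : Tendsto (fun n => m n ^ ((k : ℝ) - t n)) atTop (𝓝[>] 0) :=
    hM.congr' (hinv.mono fun n hn => hn.symm)
  constructor
  · simpa [Function.comp_def] using (continuous_exp.tendsto _).comp
      ((tendsto_nhds_of_tendsto_nhdsWithin hv).const_mul lam).neg
  · refine ((tendsto_one_sub_exp_neg_mul_div lam).comp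
      (hv.mono_right (nhdsGT_le_nhdsNE 0))).congr' ?_
    filter_upwards [hinv] with n hn
    rw [Function.comp_apply, hn, div_inv_eq_mul]

section Sequences

variable {θn qn γn rn : ℕ → ℝ} {θ q γ : ℝ}

theorem tendsto_thetaLin {u : ℕ → ℝ} {s : ℕ → ℕ} {r L : ℝ}
    (hθ : Tendsto θn atTop (𝓝 θ)) (hq : Tendsto qn atTop (𝓝 q)) (hr : Tendsto rn atTop (𝓝 r))
    (hqr : q ≠ r) (hγs : Tendsto (fun n => γn n ^ s n) atTop (𝓝 0))
    (hL : Tendsto (fun n => γn n ^ s n * (rn n - u n) ^ (-θn n)) atTop (𝓝 L)) :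
    Tendsto (fun n => thetaLin (θn n) (qn n) (γn n) (rn n) (s n) (u n)) atTop
      (𝓝 (L + (r - q) ^ (-θ))) := by
  have hrq := (hr.sub hq).rpow hθ.neg (Or.inl (sub_ne_zero.2 hqr.symm))
  simpa only [thetaLin, sub_zero, one_mul] using
    hL.add (((tendsto_const_nhds (x := (1 : ℝ))).sub hγs).mul hrq)

theorem tendsto_pow_sub_mul_thetaLin {u : ℕ → ℝ} {t : ℕ → ℕ} {k : ℕ} {r L : ℝ}
    (hθ : Tendsto θn atTop (𝓝 θ)) (hγ : Tendsto γn atTop (𝓝 γ)) (hq : Tendsto qn atTop (𝓝 q))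
    (hr : Tendsto rn atTop (𝓝 r)) (hqr : q ≠ r) (hkt : ∀ᶠ n in atTop, k ≤ t n)
    (hγtk : Tendsto (fun n => γn n ^ (t n - k)) atTop (𝓝 0))
    (hL : Tendsto (fun n => γn n ^ t n * (rn n - u n) ^ (-θn n)) atTop (𝓝 L)) :
    Tendsto (fun n => γn n ^ (t n - k) * thetaLin (θn n) (qn n) (γn n) (rn n) k (u n)) atTop
      (𝓝 L) := by
  have hrest := hγtk.mul (((tendsto_const_nhds (x := (1 : ℝ))).sub (hγ.pow k)).mul
    ((hr.sub hq).rpow hθ.neg (Or.inl (sub_ne_zero.2 hqr.symm))))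
  rw [zero_mul] at hrest
  refine (add_zero L ▸ hL.add hrest).congr' ?_
  filter_upwards [hkt] with n hn
  exact (pow_sub_mul_thetaLin hn _).symm

theorem tendsto_thetaIter_sub_thetaIter {u₁ u₂ : ℕ → ℝ} {s : ℕ → ℕ} {y : ℝ}
    (hθ : Tendsto θn atTop (𝓝 θ)) (hθ0 : θ ≠ 0) (hq : Tendsto qn atTop (𝓝 q)) (hq1 : q < 1)
    (hr : Tendsto rn atTop (𝓝 1)) (hy : 0 ≤ y) (hγs : Tendsto (fun n => γn n ^ s n) atTop (𝓝 0))
    (h₁ : Tendsto (fun n => γn n ^ s n * (rn n - u₁ n) ^ (-θn n)) atTop (𝓝 (y ^ (-θ))))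
    (h₂ : Tendsto (fun n => γn n ^ s n * (rn n - u₂ n) ^ (-θn n)) atTop (𝓝 0)) :
    Tendsto (fun n => thetaIter (θn n) (qn n) (γn n) (rn n) (s n) (u₁ n) -
        thetaIter (θn n) (qn n) (γn n) (rn n) (s n) (u₂ n)) atTop
      (𝓝 ((1 - q) * thetaPsi θ q y)) := by
  have h1q : 0 < (1 - q) ^ (-θ) := rpow_pos_of_pos (sub_pos.2 hq1) _
  have hexp := (hθ.inv₀ hθ0).neg
  have hlin₁ := (tendsto_thetaLin hθ hq hr hq1.ne hγs h₁).rpow hexp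
    (Or.inl (add_pos_of_nonneg_of_pos (rpow_nonneg hy _) h1q).ne')
  have hlin₂ := (tendsto_thetaLin hθ hq hr hq1.ne hγs h₂).rpow hexp
    (Or.inl (by rw [zero_add]; exact h1q.ne'))
  rw [zero_add] at hlin₂
  rw [one_sub_mul_thetaPsi hθ0 hq1 hy]
  exact (hlin₂.sub hlin₁).congr fun n => (thetaIter_sub_thetaIter _ _ _).symm

theorem tendsto_pow_sub_mul_rpow_sub_mul_thetaIter_zero {c : ℕ → ℝ} {t : ℕ → ℕ} {k : ℕ} {r : ℝ}
    (hθn : ∀ n, 0 < θn n) (hγn0 : ∀ n, 0 < γn n) (hγn1 : ∀ n, γn n ≤ 1)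
    (hqn0 : ∀ n, 0 ≤ qn n) (hqrn : ∀ n, qn n < rn n) (hc : ∀ n, c n ≤ 1)
    (hθ : Tendsto θn atTop (𝓝 θ)) (hγ : Tendsto γn atTop (𝓝 γ)) (hq : Tendsto qn atTop (𝓝 q))
    (hr : Tendsto rn atTop (𝓝 r)) (hqr : q ≠ r) (hkt : ∀ᶠ n in atTop, k ≤ t n)
    (hγtk : Tendsto (fun n => γn n ^ (t n - k)) atTop (𝓝 0))
    (hL : Tendsto (fun n => γn n ^ t n * (rn n - 0) ^ (-θn n)) atTop (𝓝 0)) :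
    Tendsto (fun n => γn n ^ (t n - k) *
        (rn n - c n * thetaIter (θn n) (qn n) (γn n) (rn n) k 0) ^ (-θn n)) atTop (𝓝 0) := by
  have hr0 n : 0 < rn n := (hqn0 n).trans_lt (hqrn n)
  have hlin n := thetaLin_pos (θ := θn n) (hγn0 n) (hγn1 n) (hqrn n) k (hr0 n)
  have hpos n := sub_thetaIter_pos (θ := θn n) (hγn0 n) (hγn1 n) (hqrn n) k (hr0 n)
  -- `Fₙ(k,0) ≥ 0`, so damping it by `c ≤ 1` moves the argument away from `rₙ`.
  have hle n := sub_thetaIter_zero_le_sub_mul (hθn n) (hγn0 n) (hγn1 n) (hqn0 n) (hqrn n) k (hc n)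
  refine squeeze_zero (fun n => ?_) (fun n => ?_)
    (tendsto_pow_sub_mul_thetaLin hθ hγ hq hr hqr hkt hγtk hL)
  · exact mul_nonneg (pow_nonneg (hγn0 n).le _) (rpow_nonneg ((hpos n).le.trans (hle n)) _)
  · refine mul_le_mul_of_nonneg_left ?_ (pow_nonneg (hγn0 n).le _)
    rw [← sub_thetaIter_rpow_neg (hθn n).ne' (hlin n).le]
    exact rpow_le_rpow_of_nonpos (hpos n) (hle n) (neg_nonpos.2 (hθn n).le)

theorem tendsto_pow_sub_mul_rpow_sub_mul_thetaIter_one {c : ℕ → ℝ} {t : ℕ → ℕ} {k : ℕ}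
    {x lam : ℝ} (hθn : ∀ n, 0 < θn n) (hγn0 : ∀ n, 0 < γn n) (hγn1 : ∀ n, γn n ≤ 1)
    (hqrn : ∀ n, qn n < rn n) (hrn : ∀ n, 1 < rn n) (hc0 : ∀ n, 0 ≤ c n) (hc1 : ∀ n, c n ≤ 1)
    (hθ : Tendsto θn atTop (𝓝 θ)) (hθ0 : θ ≠ 0) (hγ : Tendsto γn atTop (𝓝 γ))
    (hq : Tendsto qn atTop (𝓝 q)) (hq1 : q ≠ 1) (hr : Tendsto rn atTop (𝓝 1))
    (hkt : ∀ᶠ n in atTop, k ≤ t n) (hγtk : Tendsto (fun n => γn n ^ (t n - k)) atTop (𝓝 0))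
    (hx : 0 < x) (hlam : 0 ≤ lam) (hc : Tendsto c atTop (𝓝 1))
    (hcM : Tendsto (fun n => (1 - c n) * (γn n ^ (-(θn n)⁻¹)) ^ (t n - k)) atTop (𝓝 lam))
    (hL : Tendsto (fun n => γn n ^ t n * (rn n - 1) ^ (-θn n)) atTop (𝓝 (x ^ (-θ)))) :
    Tendsto (fun n => γn n ^ (t n - k) *
        (rn n - c n * thetaIter (θn n) (qn n) (γn n) (rn n) k 1) ^ (-θn n)) atTop
      (𝓝 ((lam + x) ^ (-θ))) := by
  have hθn0 n := (hθn n).ne'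
  have hpos n := sub_thetaIter_pos (θ := θn n) (hγn0 n) (hγn1 n) (hqrn n) k (hrn n)
  have hrescaled : Tendsto (fun n => (rn n - thetaIter (θn n) (qn n) (γn n) (rn n) k 1) *
      (γn n ^ (-(θn n)⁻¹)) ^ (t n - k)) atTop (𝓝 x) := by
    refine (tendsto_mul_rpow_neg_inv_pow_iff hθn0 hγn0 (fun n => (hpos n).le) hθ hθ0 hx).2 ?_
    refine (tendsto_pow_sub_mul_thetaLin hθ hγ hq hr hq1 hkt hγtk hL).congr fun n => ?_
    rw [sub_thetaIter_rpow_neg (hθn0 n) (thetaLin_pos (hγn0 n) (hγn1 n) (hqrn n) k (hrn n)).le]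
  have hdamped : Tendsto (fun n => (rn n - c n * thetaIter (θn n) (qn n) (γn n) (rn n) k 1) *
      (γn n ^ (-(θn n)⁻¹)) ^ (t n - k)) atTop (𝓝 (lam + x)) := by
    have hsum := (hr.mul hcM).add (hc.mul hrescaled)
    rw [one_mul, one_mul] at hsum
    exact hsum.congr fun n => by ring
  refine (tendsto_mul_rpow_neg_inv_pow_iff hθn0 hγn0 (fun n => ?_) hθ hθ0
    (by linarith)).1 hdamped
  nlinarith [hpos n, hc0 n, hc1 n, hrn n]

end Sequences

/-- Proposition 2(b): under the hypotheses of Proposition 2(a), for a fixed `k ≥ 0`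
and `λ ≥ 0`, the conditional Laplace transform
`E(exp(-λ m_n^{k-t_n} Z_n(t_n - k)) | T_n > t_n)`, expressed through the explicit
iterates, converges to `Ψ(x+λ)/Ψ(x)`. -/
theorem stmt_15
    (θ q γ : ℝ) (hθ : θ ∈ Set.Ioc (0 : ℝ) 1) (hq : q ∈ Set.Ico (0 : ℝ) 1)
    (hγ : γ ∈ Set.Ioo (0 : ℝ) 1)
    (θn γn qn rn : ℕ → ℝ)
    (hθn : ∀ n, θn n ∈ Set.Ioc (0 : ℝ) 1)
    (hγn : ∀ n, γn n ∈ Set.Ioo (0 : ℝ) 1)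
    (hqn : ∀ n, qn n ∈ Set.Ico (0 : ℝ) 1)
    (hrn : ∀ n, 1 < rn n)
    (hθlim : Tendsto θn atTop (nhds θ)) (hγlim : Tendsto γn atTop (nhds γ))
    (hqlim : Tendsto qn atTop (nhds q)) (hrlim : Tendsto rn atTop (nhds 1))
    (m : ℕ → ℝ) (hm : ∀ n, m n = γn n ^ (-(θn n)⁻¹))
    (t : ℕ → ℕ) (ht : Tendsto t atTop atTop)
    (x : ℝ) (hx : 0 < x)
    (hxlim : Tendsto (fun n => (rn n - 1) * m n ^ t n) atTop (nhds x))
    (k : ℕ) (lam : ℝ) (hlam : 0 ≤ lam) :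
    Tendsto
      (fun n =>
        (thetaIter (θn n) (qn n) (γn n) (rn n) (t n - k)
            (Real.exp (-(lam * m n ^ ((k : ℝ) - (t n : ℝ)))) *
              thetaIter (θn n) (qn n) (γn n) (rn n) k 1) -
          thetaIter (θn n) (qn n) (γn n) (rn n) (t n - k)
            (Real.exp (-(lam * m n ^ ((k : ℝ) - (t n : ℝ)))) *
              thetaIter (θn n) (qn n) (γn n) (rn n) k 0)) /
        (thetaIter (θn n) (qn n) (γn n) (rn n) (t n) 1 -
          thetaIter (θn n) (qn n) (γn n) (rn n) (t n) 0))
      atTop (nhds (thetaPsi θ q (x + lam) / thetaPsi θ q x)) := by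
  obtain rfl : m = fun n => γn n ^ (-(θn n)⁻¹) := funext hm
  obtain ⟨hθ0, -⟩ := hθ
  obtain ⟨-, hq1⟩ := hq
  have hθn0 n : 0 < θn n := (hθn n).1
  have hγn0 n : 0 < γn n := (hγn n).1
  have hγn1 n : γn n ≤ 1 := (hγn n).2.le
  have hqrn n : qn n < rn n := (hqn n).2.trans (hrn n)
  have hγabs : |γ| < 1 := abs_lt.2 ⟨by linarith [hγ.1], hγ.2⟩
  have hkt : ∀ᶠ n in atTop, k ≤ t n := ht.eventually_ge_atTop k
  have hγt := tendsto_pow_of_tendsto_of_abs_lt_one hγlim hγabs ht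
  have hγtk : Tendsto (fun n => γn n ^ (t n - k)) atTop (𝓝 0) :=
    tendsto_pow_of_tendsto_of_abs_lt_one hγlim hγabs ((tendsto_sub_atTop_nat k).comp ht)
  have hL₁ : Tendsto (fun n => γn n ^ t n * (rn n - 1) ^ (-θn n)) atTop (𝓝 (x ^ (-θ))) :=
    (tendsto_mul_rpow_neg_inv_pow_iff (fun n => (hθn0 n).ne') hγn0
      (fun n => (sub_pos.2 (hrn n)).le) hθlim hθ0.ne' hx).1 hxlim
  have hL₀ : Tendsto (fun n => γn n ^ t n * (rn n - 0) ^ (-θn n)) atTop (𝓝 0) := by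
    simpa using hγt.mul (hrlim.rpow hθlim.neg (Or.inl one_ne_zero))
  obtain ⟨hc, hcM⟩ := tendsto_exp_neg_mul_rpow_natCast_sub lam
    (fun n => rpow_nonneg (hγn0 n).le _) hkt (tendsto_inv_rpow_neg_inv_pow hγn0 hθlim hθ0 hγtk)
  have hc1 n : exp (-(lam * (γn n ^ (-(θn n)⁻¹)) ^ ((k : ℝ) - t n))) ≤ 1 :=
    exp_le_one_iff.2 (neg_nonpos.2 (mul_nonneg hlam (rpow_nonneg (rpow_nonneg (hγn0 n).le _) _)))
  have hnum := tendsto_thetaIter_sub_thetaIter hθlim hθ0.ne' hqlim hq1 hrlim (by linarith) hγtk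
    (add_comm lam x ▸ tendsto_pow_sub_mul_rpow_sub_mul_thetaIter_one hθn0 hγn0 hγn1 hqrn hrn
      (fun n => (exp_pos _).le) hc1 hθlim hθ0.ne' hγlim hqlim hq1.ne hrlim hkt hγtk hx hlam hc
      hcM hL₁)
    (tendsto_pow_sub_mul_rpow_sub_mul_thetaIter_zero hθn0 hγn0 hγn1 (fun n => (hqn n).1) hqrn
      hc1 hθlim hγlim hqlim hrlim hq1.ne hkt hγtk hL₀)
  have hden := tendsto_thetaIter_sub_thetaIter hθlim hθ0.ne' hqlim hq1 hrlim hx.le hγt hL₁ hL₀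
  have hratio := hnum.div hden (mul_pos (sub_pos.2 hq1) (thetaPsi_pos hθ0 hq1 hx)).ne'
  rwa [mul_div_mul_left _ _ (sub_pos.2 hq1).ne'] at hratio
end

section
/- For parameters (qq, gam, r) in [0,1) x (0,1) x (1,infinity) and t a nonnegative integer, define G(qq,gam,r; t, s) = r - (r - qq)^{1 - gam^t} * (r - s)^{gam^t} for s in [0, r) (the t-th iterate of the corresponding defective reproduction law). Let (q_n, gamma_n, r_n) -> (q, gamma, 1) with q in [0,1), gamma in (0,1), q_n in [0,1), gamma_n in (0,1), r_n > 1, and suppose t_n -> infinity with gamma_n^{t_n} * ln(1/(r_n - 1)) -> y for some y in (0, infinity). Then G(q_n,gamma_n,r_n; t_n, 1) - G(q_n,gamma_n,r_n; t_n, 0) converges to (1 - q)*(1 - e^{-y}). Probabilistically, P(T_n > t_n) -> (1-q)(1 - e^{-y}) for the associated defective branching processes. -/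
open Filter

/-- The `t`-th iterate of the defective theta-branching reproduction law with
`θ = 0` and parameters `(qq, gam, r) ∈ [0,1) × (0,1) × (1,∞)`:
`G qq gam r t s = r - (r-qq)^{1-gam^t} (r-s)^{gam^t}`. -/
noncomputable def thetaZeroIter (qq gam r : ℝ) (t : ℕ) (s : ℝ) : ℝ :=
  r - (r - qq) ^ (1 - gam ^ t) * (r - s) ^ (gam ^ t)

open Topology

/-
Since `1 - 0 = 1`, the difference `G(t,1) - G(t,0)` factors as
`(r - q)^{1 - a} (r^a - (r - 1)^a)` with `a = γ^t`. Because `a log(1/(r - 1)) → y` while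
`log(1/(r - 1)) → ∞`, the exponent `a` tends to `0`; hence `(r - q)^{1-a} → 1 - q` and `r^a → 1`,
while `(r - 1)^a = exp(-a log(1/(r - 1))) → e^{-y}`.
-/

theorem thetaZeroIter_one_sub_thetaZeroIter_zero (qq gam r : ℝ) (t : ℕ) :
    thetaZeroIter qq gam r t 1 - thetaZeroIter qq gam r t 0 =
      (r - qq) ^ (1 - gam ^ t) * (r ^ gam ^ t - (r - 1) ^ gam ^ t) := by
  simp only [thetaZeroIter, sub_zero]
  ring

section

variable {ι : Type*} {l : Filter ι}

theorem tendsto_log_one_div_atTop {x : ι → ℝ} (hx : Tendsto x l (𝓝[>] 0)) :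
    Tendsto (fun i => Real.log (1 / x i)) l atTop := by
  simp only [one_div, Real.log_inv]
  exact tendsto_neg_atBot_atTop.comp (Real.tendsto_log_nhdsGT_zero.comp hx)

theorem tendsto_zero_of_tendsto_mul_of_tendsto_atTop {a L : ι → ℝ} {y : ℝ}
    (hy : Tendsto (fun i => a i * L i) l (𝓝 y)) (hL : Tendsto L l atTop) :
    Tendsto a l (𝓝 0) :=
  (hy.div_atTop hL).congr' <| (hL.eventually_gt_atTop 0).mono fun _ hi =>
    mul_div_cancel_right₀ _ hi.ne'

theorem tendsto_rpow_of_tendsto_mul_log_one_div {x a : ι → ℝ} {y : ℝ} (hx : ∀ i, 0 < x i)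
    (hy : Tendsto (fun i => a i * Real.log (1 / x i)) l (𝓝 y)) :
    Tendsto (fun i => x i ^ a i) l (𝓝 (Real.exp (-y))) := by
  have hlog : Tendsto (fun i => Real.log (x i) * a i) l (𝓝 (-y)) :=
    hy.neg.congr fun i => by rw [one_div, Real.log_inv]; ring
  exact ((Real.continuous_exp.tendsto _).comp hlog).congr fun i =>
    (Real.rpow_def_of_pos (hx i) _).symm

end

theorem stmt_16_general
    (q : ℝ)
    (qn γn rn : ℕ → ℝ)
    (hrn : ∀ n, 1 < rn n)
    (hqlim : Tendsto qn atTop (nhds q))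
    (hrlim : Tendsto rn atTop (nhds 1))
    (t : ℕ → ℕ)
    (y : ℝ)
    (hylim :
      Tendsto (fun n => γn n ^ t n * Real.log (1 / (rn n - 1))) atTop (nhds y)) :
    Tendsto
      (fun n =>
        thetaZeroIter (qn n) (γn n) (rn n) (t n) 1 -
          thetaZeroIter (qn n) (γn n) (rn n) (t n) 0)
      atTop (nhds ((1 - q) * (1 - Real.exp (-y)))) := by
  have hgap : ∀ n, 0 < rn n - 1 := fun n => sub_pos.2 (hrn n)
  have hgap_lim : Tendsto (fun n => rn n - 1) atTop (𝓝[>] 0) :=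
    tendsto_nhdsWithin_of_tendsto_nhds_of_eventually_within _
      (by simpa using hrlim.sub_const 1) (Eventually.of_forall hgap)
  have hexp : Tendsto (fun n => γn n ^ t n) atTop (𝓝 0) :=
    tendsto_zero_of_tendsto_mul_of_tendsto_atTop hylim (tendsto_log_one_div_atTop hgap_lim)
  have hfirst : Tendsto (fun n => (rn n - qn n) ^ (1 - γn n ^ t n)) atTop (𝓝 (1 - q)) := by
    simpa using (hrlim.sub hqlim).rpow (hexp.const_sub 1) (Or.inr (by norm_num))
  have hsecond : Tendsto (fun n => rn n ^ γn n ^ t n) atTop (𝓝 1) := by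
    simpa using hrlim.rpow hexp (Or.inl one_ne_zero)
  simp_rw [thetaZeroIter_one_sub_thetaZeroIter_zero]
  exact hfirst.mul (hsecond.sub (tendsto_rpow_of_tendsto_mul_log_one_div hgap hylim))

/-- Proposition 3(a): if `(q_n, γ_n, r_n) → (q, γ, 1)` and `t_n → ∞` with
`γ_n^{t_n} ln(1/(r_n - 1)) → y ∈ (0,∞)`, then
`P(T_n > t_n) = G_n(t_n,1) - G_n(t_n,0) → (1-q)(1-e^{-y})`. -/
theorem stmt_16
    (q γ : ℝ) (hq : q ∈ Set.Ico (0 : ℝ) 1) (hγ : γ ∈ Set.Ioo (0 : ℝ) 1)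
    (qn γn rn : ℕ → ℝ)
    (hqn : ∀ n, qn n ∈ Set.Ico (0 : ℝ) 1)
    (hγn : ∀ n, γn n ∈ Set.Ioo (0 : ℝ) 1)
    (hrn : ∀ n, 1 < rn n)
    (hqlim : Tendsto qn atTop (nhds q)) (hγlim : Tendsto γn atTop (nhds γ))
    (hrlim : Tendsto rn atTop (nhds 1))
    (t : ℕ → ℕ) (ht : Tendsto t atTop atTop)
    (y : ℝ) (hy : 0 < y)
    (hylim :
      Tendsto (fun n => γn n ^ t n * Real.log (1 / (rn n - 1))) atTop (nhds y)) :
    Tendsto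
      (fun n =>
        thetaZeroIter (qn n) (γn n) (rn n) (t n) 1 -
          thetaZeroIter (qn n) (γn n) (rn n) (t n) 0)
      atTop (nhds ((1 - q) * (1 - Real.exp (-y)))) :=
  stmt_16_general q qn γn rn hrn hqlim hrlim t y hylim
end
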